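/- arXiv:math/0402263 — 9 statements merged into one kernel-verified Lean document; each statement's English description precedes it below -/
import Mathlib

section
/- For every proper distance matrix r of order n ≥ 1, the set A(r) of admissible vectors is a closed subset of ℝ^n contained in the nonnegative orthant, its set of extreme points is nonempty and finite, and A(r) equals the Minkowski sum of the convex hull of its set of extreme points and the ray {λ • (1,…,1) : λ ≥ 0} of constant nonnegative vectors. -/
open Pointwise

/-- A distance matrix of order `n`. -/
def IsDistMatrix {n : ℕ} (r : Fin n → Fin n → ℝ) : Prop :=
  (∀ i, r i i = 0) ∧ (∀ i j, 0 ≤ r i j) ∧ (∀ i j, r i j = r j i) ∧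
    ∀ i j k, r i k ≤ r i j + r j k

/-- A proper distance matrix: no zeros off the diagonal. -/
def IsProperDistMatrix {n : ℕ} (r : Fin n → Fin n → ℝ) : Prop :=
  IsDistMatrix r ∧ ∀ i j, i ≠ j → 0 < r i j

/-- The set of admissible vectors for a distance matrix `r`. -/
def AdmissibleSet {n : ℕ} (r : Fin n → Fin n → ℝ) : Set (Fin n → ℝ) :=
  {a | ∀ i j, |a i - a j| ≤ r i j ∧ r i j ≤ a i + a j}

set_option linter.unusedSectionVars false

section Poly

variable {E : Type*} [AddCommGroup E] [Module ℝ E]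
variable {ι : Type*} [Fintype ι]

/-- The polyhedron cut out by the affine constraints `v k ≤ c k`. -/
def polySet (v : ι → E →ₗ[ℝ] ℝ) (c : ι → ℝ) : Set E := {a | ∀ k, v k a ≤ c k}

/-- The recession cone of `polySet v c`. -/
def recCone (v : ι → E →ₗ[ℝ] ℝ) : Set E := {d | ∀ k, v k d ≤ 0}

variable {v : ι → E →ₗ[ℝ] ℝ} {c : ι → ℝ}

lemma polySet_convex : Convex ℝ (polySet v c) := by
  intro x hx y hy s t hs ht hst k
  have : v k (s • x + t • y) = s * v k x + t * v k y := by simp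
  rw [this]
  calc s * v k x + t * v k y ≤ s * c k + t * c k := by
        apply add_le_add <;> apply mul_le_mul_of_nonneg_left ?_ ‹_›
        exacts [hx k, hy k]
    _ = c k := by rw [← add_mul, hst, one_mul]

lemma polySet_add_rec {a d : E} (ha : a ∈ polySet v c) (hd : d ∈ recCone v) :
    a + d ∈ polySet v c := fun k => by
  have := add_le_add (ha k) (hd k)
  simpa using this

lemma recCone_add {d e : E} (hd : d ∈ recCone v) (he : e ∈ recCone v) :
    d + e ∈ recCone v := fun k => by
  have := add_le_add (hd k) (he k)
  simpa using this

lemma recCone_smul {d : E} {t : ℝ} (ht : 0 ≤ t) (hd : d ∈ recCone v) :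
    t • d ∈ recCone v := fun k => by
  have : v k (t • d) = t * v k d := by simp
  rw [this]
  exact mul_nonpos_of_nonneg_of_nonpos ht (hd k)

lemma recCone_zero : (0 : E) ∈ recCone v := fun k => by simp

/-- Moving from `a` along a direction `d` orthogonal to all tight constraints, which
violates some constraint eventually, until a new constraint becomes tight. -/
lemma poly_move {a : E} (ha : a ∈ polySet v c) (d : E)
    (hd : ∀ k, v k a = c k → v k d = 0) (hviol : ∃ k, 0 < v k d) :
    ∃ t : ℝ, 0 < t ∧ a + t • d ∈ polySet v c ∧
      ∃ k, v k a ≠ c k ∧ v k (a + t • d) = c k := by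
  classical
  set S : Finset ι := Finset.univ.filter (fun k => 0 < v k d) with hS
  have hSne : S.Nonempty := by
    obtain ⟨k, hk⟩ := hviol
    exact ⟨k, by simp [hS, hk]⟩
  have hmemS : ∀ k ∈ S, 0 < v k d := fun k hk => (Finset.mem_filter.mp hk).2
  have huntight : ∀ k ∈ S, v k a < c k := by
    intro k hk
    rcases lt_or_eq_of_le (ha k) with h | h
    · exact h
    · exact absurd (hd k h) (ne_of_gt (hmemS k hk))
  set f : ι → ℝ := fun k => (c k - v k a) / v k d with hf
  set t : ℝ := S.inf' hSne f with htdef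
  have ht : 0 < t := by
    rw [htdef, Finset.lt_inf'_iff]
    intro k hk
    exact div_pos (sub_pos.mpr (huntight k hk)) (hmemS k hk)
  refine ⟨t, ht, ?_, ?_⟩
  · intro k
    have hexp : v k (a + t • d) = v k a + t * v k d := by simp
    rw [hexp]
    rcases le_or_gt (v k d) 0 with h | h
    · have : t * v k d ≤ 0 := mul_nonpos_of_nonneg_of_nonpos ht.le h
      linarith [ha k]
    · have hkS : k ∈ S := by simp [hS, h]
      have hle : t ≤ (c k - v k a) / v k d := Finset.inf'_le f hkS
      have h2 : t * v k d ≤ c k - v k a := (le_div_iff₀ h).mp hle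
      linarith
  · obtain ⟨k, hkS, hkeq⟩ := Finset.exists_mem_eq_inf' hSne f
    refine ⟨k, ne_of_lt (huntight k hkS), ?_⟩
    have hexp : v k (a + t • d) = v k a + t * v k d := by simp
    have hkd : 0 < v k d := hmemS k hkS
    have : t = (c k - v k a) / v k d := by rw [htdef, hkeq]
    rw [hexp, this, div_mul_cancel₀ _ (ne_of_gt hkd)]
    ring

end Poly

section Poly2

variable {E : Type*} [AddCommGroup E] [Module ℝ E]
variable {ι : Type*} [Fintype ι]
variable {v : ι → E →ₗ[ℝ] ℝ} {c : ι → ℝ}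

/-- If the constraints tight at `a` pin down `a` (their linear parts have trivial common
kernel), then `a` is an extreme point. -/
lemma poly_extreme {a : E} (ha : a ∈ polySet v c)
    (hpin : ∀ d, (∀ k, v k a = c k → v k d = 0) → d = 0) :
    a ∈ Set.extremePoints ℝ (polySet v c) := by
  refine ⟨ha, ?_⟩
  intro x hx y hy hseg
  obtain ⟨s, t, hs, ht, hst, hsum⟩ := hseg
  have key : ∀ z ∈ polySet v c, ∀ w ∈ polySet v c, ∀ s' t' : ℝ, 0 < s' → 0 < t' →
      s' + t' = 1 → s' • z + t' • w = a → z = a := by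
    intro z hz w hw s' t' hs' ht' hst' hsum'
    have hzd : ∀ k, v k a = c k → v k (z - a) = 0 := by
      intro k hk
      have hva : v k a = s' * v k z + t' * v k w := by
        rw [← hsum']; simp
      have hzk : v k z = c k := by
        by_contra hne
        have h1 : v k z < c k := lt_of_le_of_ne (hz k) hne
        have h2 : v k w ≤ c k := hw k
        have : v k a < c k := by
          rw [hva]
          calc s' * v k z + t' * v k w < s' * c k + t' * c k := by
                apply add_lt_add_of_lt_of_le
                · exact (mul_lt_mul_iff_right₀ hs').mpr h1
                · exact mul_le_mul_of_nonneg_left h2 ht'.le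
            _ = c k := by rw [← add_mul, hst', one_mul]
        exact absurd hk (ne_of_lt this)
      simp [hzk, hk]
    have := hpin (z - a) hzd
    exact sub_eq_zero.mp this
  exact key x hx y hy s t hs ht hst hsum

/-- Main decomposition: every point of a pointed polyhedron lies in
`conv (extreme points) + recession cone`. -/
lemma poly_decomp (hpt : ∀ d : E, (∀ k, v k d = 0) → d = 0) :
    ∀ a ∈ polySet v c,
      a ∈ convexHull ℝ (Set.extremePoints ℝ (polySet v c)) + recCone v := by
  classical
  set P := polySet v c
  set Q := convexHull ℝ (Set.extremePoints ℝ P) + recCone v with hQ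
  have hQconv : Convex ℝ Q :=
    Convex.add (convex_convexHull ℝ _)
      (fun x hx y hy s t hs ht hst k => by
        have : v k (s • x + t • y) = s * v k x + t * v k y := by simp
        rw [this]
        have := add_nonpos (mul_nonpos_of_nonneg_of_nonpos hs (hx k))
          (mul_nonpos_of_nonneg_of_nonpos ht (hy k))
        exact this)
  have hQrec : ∀ x ∈ Q, ∀ e ∈ recCone v, x + e ∈ Q := by
    rintro x ⟨u, hu, w, hw, rfl⟩ e he
    exact ⟨u, hu, w + e, recCone_add hw he, (add_assoc u w e).symm⟩
  suffices H : ∀ m : ℕ, ∀ a ∈ P,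
      (Finset.univ.filter (fun k => v k a ≠ c k)).card ≤ m → a ∈ Q by
    intro a ha; exact H _ a ha le_rfl
  intro m
  induction m with
  | zero =>
    intro a ha hcard
    -- all constraints tight at a
    have htight : ∀ k, v k a = c k := by
      intro k
      by_contra hne
      have : k ∈ Finset.univ.filter (fun k => v k a ≠ c k) := by simp [hne]
      have := Finset.card_pos.mpr ⟨k, this⟩
      omega
    have : a ∈ Set.extremePoints ℝ P := by
      apply poly_extreme ha
      intro d hd
      exact hpt d (fun k => hd k (htight k))
    have := Set.add_mem_add (subset_convexHull ℝ _ this) (recCone_zero (v := v))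
    simpa using this
  | succ m IH =>
    intro a ha hcard
    by_cases hpin : ∀ d, (∀ k, v k a = c k → v k d = 0) → d = 0
    · have := Set.add_mem_add
        (subset_convexHull ℝ _ (poly_extreme ha hpin)) (recCone_zero (v := v))
      simpa using this
    push_neg at hpin
    obtain ⟨d, hd, hdne⟩ := hpin
    -- the untight set strictly shrinks after a move
    have hshrink : ∀ t : ℝ, ∀ k₀, v k₀ a ≠ c k₀ → v k₀ (a + t • d) = c k₀ →
        (∀ k, v k a = c k → v k (a + t • d) = c k) →
        (Finset.univ.filter (fun k => v k (a + t • d) ≠ c k)).card ≤ m := by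
      intro t k₀ hk₀u hk₀t htightpres
      have hsub : Finset.univ.filter (fun k => v k (a + t • d) ≠ c k) ⊆
          (Finset.univ.filter (fun k => v k a ≠ c k)).erase k₀ := by
        intro k hk
        simp only [Finset.mem_filter, Finset.mem_univ, true_and] at hk
        rw [Finset.mem_erase]
        constructor
        · rintro rfl; exact hk hk₀t
        · simp only [Finset.mem_filter, Finset.mem_univ, true_and]
          intro heq; exact hk (htightpres k heq)
      have hk₀mem : k₀ ∈ Finset.univ.filter (fun k => v k a ≠ c k) := by simp [hk₀u]
      have hlt : (Finset.univ.filter (fun k => v k (a + t • d) ≠ c k)).card < m + 1 :=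
        calc (Finset.univ.filter (fun k => v k (a + t • d) ≠ c k)).card
            ≤ ((Finset.univ.filter (fun k => v k a ≠ c k)).erase k₀).card :=
              Finset.card_le_card hsub
          _ < (Finset.univ.filter (fun k => v k a ≠ c k)).card :=
              Finset.card_erase_lt_of_mem hk₀mem
          _ ≤ m + 1 := hcard
      omega
    have htightpres : ∀ t : ℝ, ∀ k, v k a = c k → v k (a + t • d) = c k := by
      intro t k hk
      have : v k (a + t • d) = v k a + t * v k d := by simp
      rw [this, hd k hk, mul_zero, add_zero, hk]
    by_cases hdC : ∃ k, 0 < v k d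
    · by_cases hdC' : ∃ k, 0 < v k (-d)
      · -- move both ways
        obtain ⟨t₁, ht₁, ha₁, k₁, hk₁u, hk₁t⟩ := poly_move ha d hd hdC
        obtain ⟨t₂, ht₂, ha₂, k₂, hk₂u, hk₂t⟩ :=
          poly_move ha (-d) (fun k hk => by rw [map_neg, hd k hk, neg_zero]) hdC'
        have hm₁ : a + t₁ • d ∈ Q :=
          IH _ ha₁ (hshrink t₁ k₁ hk₁u hk₁t (htightpres t₁))
        have hm₂ : a + t₂ • (-d) ∈ Q := by
          apply IH _ ha₂
          have heq : a + t₂ • (-d) = a + (-t₂) • d := by rw [smul_neg, neg_smul]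
          rw [heq] at hk₂t ha₂ ⊢
          exact hshrink (-t₂) k₂ hk₂u hk₂t (htightpres (-t₂))
        -- a is a convex combination
        have hsum : 0 < t₁ + t₂ := by linarith
        have hcomb : (t₂ / (t₁ + t₂)) • (a + t₁ • d) +
            (t₁ / (t₁ + t₂)) • (a + t₂ • (-d)) = a := by
          match_scalars <;> field_simp <;> ring
        have := hQconv hm₁ hm₂ (le_of_lt (div_pos ht₂ hsum))
          (le_of_lt (div_pos ht₁ hsum))
          (by rw [← add_div]; rw [add_comm t₂ t₁, div_self hsum.ne'])
        rw [hcomb] at this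
        exact this
      ·
        -- here -d has no violated direction: ∀ k, v k (-d) ≤ 0, i.e. -d ∈ recCone.
        push_neg at hdC'
        have hrec : -d ∈ recCone v := fun k => hdC' k
        obtain ⟨t₁, ht₁, ha₁, k₁, hk₁u, hk₁t⟩ := poly_move ha d hd hdC
        have hm₁ : a + t₁ • d ∈ Q :=
          IH _ ha₁ (hshrink t₁ k₁ hk₁u hk₁t (htightpres t₁))
        have : a = (a + t₁ • d) + t₁ • (-d) := by
          rw [smul_neg, add_assoc, add_neg_cancel, add_zero]
        rw [this]
        exact hQrec _ hm₁ _ (recCone_smul ht₁.le hrec)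
    · push_neg at hdC
      have hrec : d ∈ recCone v := fun k => hdC k
      have hdC' : ∃ k, 0 < v k (-d) := by
        by_contra hno
        push_neg at hno
        apply hdne
        apply hpt
        intro k
        have h1 := hdC k
        have h2 := hno k
        rw [map_neg] at h2
        linarith
      obtain ⟨t₂, ht₂, ha₂, k₂, hk₂u, hk₂t⟩ :=
        poly_move ha (-d) (fun k hk => by rw [map_neg, hd k hk, neg_zero]) hdC'
      have hm₂ : a + t₂ • (-d) ∈ Q := by
        apply IH _ ha₂
        have heq : a + t₂ • (-d) = a + (-t₂) • d := by rw [smul_neg, neg_smul]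
        rw [heq] at hk₂t ha₂ ⊢
        exact hshrink (-t₂) k₂ hk₂u hk₂t (htightpres (-t₂))
      have : a = (a + t₂ • (-d)) + t₂ • d := by
        rw [smul_neg, add_assoc, neg_add_cancel, add_zero]
      rw [this]
      exact hQrec _ hm₂ _ (recCone_smul ht₂.le hrec)

/-- Extreme points of a polyhedron are determined by their tight sets. -/
lemma poly_ext_inj :
    Set.InjOn (fun a => {k | v k a = c k}) (Set.extremePoints ℝ (polySet v c)) := by
  classical
  intro a haext b hbext htight
  by_contra hne
  set d := b - a with hdd
  have hdne : d ≠ 0 := sub_ne_zero.mpr (Ne.symm hne)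
  have ha : a ∈ polySet v c := haext.1
  have hb : b ∈ polySet v c := hbext.1
  have hd : ∀ k, v k a = c k → v k d = 0 := by
    intro k hk
    have hkb : v k b = c k := by
      have h2 : {k | v k a = c k} = {k | v k b = c k} := htight
      have : k ∈ {k | v k a = c k} := hk
      rw [h2] at this
      exact this
    simp [hdd, hkb, hk]
  -- find ε > 0 with a - ε • d ∈ polySet
  have hstep : ∃ ε : ℝ, 0 < ε ∧ a + ε • (-d) ∈ polySet v c := by
    by_cases hviol : ∃ k, 0 < v k (-d)
    · obtain ⟨t, ht, hmem, _⟩ :=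
        poly_move ha (-d) (fun k hk => by rw [map_neg, hd k hk, neg_zero]) hviol
      exact ⟨t, ht, hmem⟩
    · push_neg at hviol
      exact ⟨1, one_pos, polySet_add_rec ha (fun k => by
        simpa using hviol k)⟩
  obtain ⟨ε, hε, hmem⟩ := hstep
  -- a ∈ openSegment (a - ε d) b
  have hseg : a ∈ openSegment ℝ (a + ε • (-d)) b := by
    have h1ε : (0:ℝ) < 1 + ε := by positivity
    refine ⟨1 / (1 + ε), ε / (1 + ε), by positivity, by positivity,
      by rw [← add_div, div_self h1ε.ne'], ?_⟩
    have hb' : b = a + d := by simp [hdd]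
    rw [hb']
    match_scalars <;> field_simp <;> ring
  have := haext.2 hb hmem (by rw [openSegment_symm]; exact hseg)
  exact hne this.symm

end Poly2

section Poly3

variable {E : Type*} [AddCommGroup E] [Module ℝ E]
variable {ι : Type*} [Fintype ι]
variable {v : ι → E →ₗ[ℝ] ℝ} {c : ι → ℝ}

lemma poly_ext_finite : (Set.extremePoints ℝ (polySet v c)).Finite := by
  classical
  exact Set.Finite.of_finite_image (Set.toFinite _) poly_ext_inj

lemma poly_eq_convexHull_add (hpt : ∀ d : E, (∀ k, v k d = 0) → d = 0) :
    polySet v c =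
      convexHull ℝ (Set.extremePoints ℝ (polySet v c)) + recCone v := by
  apply Set.Subset.antisymm
  · intro a ha; exact poly_decomp hpt a ha
  · rintro x ⟨u, hu, w, hw, rfl⟩
    have hu' : u ∈ polySet v c :=
      convexHull_min (fun z hz => hz.1) polySet_convex hu
    exact polySet_add_rec hu' hw

lemma poly_ext_nonempty (hpt : ∀ d : E, (∀ k, v k d = 0) → d = 0)
    (hne : (polySet v c).Nonempty) :
    (Set.extremePoints ℝ (polySet v c)).Nonempty := by
  obtain ⟨a, ha⟩ := hne
  obtain ⟨u, hu, w, hw, _⟩ := poly_decomp hpt a ha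
  by_contra h
  rw [Set.not_nonempty_iff_eq_empty] at h
  rw [h, convexHull_empty] at hu
  exact hu

end Poly3

/-- The linear functionals cutting out the admissible set. -/
noncomputable def admV (n : ℕ) : (Fin n × Fin n ⊕ Fin n × Fin n) → ((Fin n → ℝ) →ₗ[ℝ] ℝ) :=
  Sum.elim
    (fun p => (LinearMap.proj p.1 : (Fin n → ℝ) →ₗ[ℝ] ℝ) - LinearMap.proj p.2)
    (fun p => -((LinearMap.proj p.1 : (Fin n → ℝ) →ₗ[ℝ] ℝ) + LinearMap.proj p.2))

/-- The right-hand sides cutting out the admissible set. -/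
def admC {n : ℕ} (r : Fin n → Fin n → ℝ) : (Fin n × Fin n ⊕ Fin n × Fin n) → ℝ :=
  Sum.elim (fun p => r p.1 p.2) (fun p => -(r p.1 p.2))

@[simp] lemma admV_inl {n : ℕ} (p : Fin n × Fin n) (a : Fin n → ℝ) :
    admV n (Sum.inl p) a = a p.1 - a p.2 := by simp [admV]

@[simp] lemma admV_inr {n : ℕ} (p : Fin n × Fin n) (a : Fin n → ℝ) :
    admV n (Sum.inr p) a = -(a p.1 + a p.2) := by simp [admV]

@[simp] lemma admC_inl {n : ℕ} (r : Fin n → Fin n → ℝ) (p : Fin n × Fin n) :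
    admC r (Sum.inl p) = r p.1 p.2 := rfl

@[simp] lemma admC_inr {n : ℕ} (r : Fin n → Fin n → ℝ) (p : Fin n × Fin n) :
    admC r (Sum.inr p) = -(r p.1 p.2) := rfl

lemma admissibleSet_eq_polySet {n : ℕ} (r : Fin n → Fin n → ℝ)
    (hsymm : ∀ i j, r i j = r j i) :
    AdmissibleSet r = polySet (admV n) (admC r) := by
  ext a
  constructor
  · intro ha k
    rcases k with p | p
    · simp only [admV_inl, admC_inl]
      exact (abs_le.mp (ha p.1 p.2).1).2
    · simp only [admV_inr, admC_inr]
      linarith [(ha p.1 p.2).2]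
  · intro ha i j
    have h1 := ha (Sum.inl (i, j))
    have h2 := ha (Sum.inl (j, i))
    have h3 := ha (Sum.inr (i, j))
    simp only [admV_inl, admV_inr, admC_inl, admC_inr] at h1 h2 h3
    refine ⟨abs_le.mpr ⟨?_, h1⟩, by linarith⟩
    have := hsymm i j
    linarith

lemma admRecCone {n : ℕ} (hn : 1 ≤ n) :
    recCone (admV n) = {c : Fin n → ℝ | ∃ l : ℝ, 0 ≤ l ∧ c = fun _ => l} := by
  ext d
  constructor
  · intro hd
    set i0 : Fin n := ⟨0, hn⟩
    refine ⟨d i0, ?_, ?_⟩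
    · have := hd (Sum.inr (i0, i0))
      simp only [admV_inr] at this
      linarith
    · funext i
      have h1 := hd (Sum.inl (i, i0))
      have h2 := hd (Sum.inl (i0, i))
      simp only [admV_inl] at h1 h2
      linarith
  · rintro ⟨l, hl, rfl⟩ k
    rcases k with p | p
    · simp
    · simp; linarith

lemma admPointed {n : ℕ} :
    ∀ d : Fin n → ℝ, (∀ k, admV n k d = 0) → d = 0 := by
  intro d hd
  funext i
  have := hd (Sum.inr (i, i))
  simp only [admV_inr] at this
  have : d i + d i = 0 := by linarith
  simpa using by linarith

lemma admissibleSet_nonempty {n : ℕ} (r : Fin n → Fin n → ℝ)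
    (hnn : ∀ i j, 0 ≤ r i j) : (AdmissibleSet r).Nonempty := by
  obtain ⟨M, hM⟩ : ∃ M : ℝ, ∀ p : Fin n × Fin n, r p.1 p.2 ≤ M :=
    Finite.exists_le _
  refine ⟨fun _ => max M 0, fun i j => ⟨by simp [hnn i j], ?_⟩⟩
  have h1 : r i j ≤ max M 0 := le_trans (hM (i, j)) (le_max_left _ _)
  have h2 : (0:ℝ) ≤ max M 0 := le_max_right _ _
  linarith

/-- For every proper distance matrix `r` of order `n ≥ 1`, the set `A(r)` of admissible
vectors is closed, lies in the nonnegative orthant, its set of extreme points is nonempty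
and finite, and `A(r)` is the Minkowski sum of the convex hull of its extreme points and
the ray of constant nonnegative vectors. -/
theorem admissibleSet_structure {n : ℕ} (hn : 1 ≤ n) (r : Fin n → Fin n → ℝ)
    (hr : IsProperDistMatrix r) :
    IsClosed (AdmissibleSet r) ∧
    AdmissibleSet r ⊆ {a : Fin n → ℝ | ∀ i, 0 ≤ a i} ∧
    (Set.extremePoints ℝ (AdmissibleSet r)).Nonempty ∧
    (Set.extremePoints ℝ (AdmissibleSet r)).Finite ∧
    AdmissibleSet r =
      (convexHull ℝ (Set.extremePoints ℝ (AdmissibleSet r))) +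
        {c : Fin n → ℝ | ∃ l : ℝ, 0 ≤ l ∧ c = fun _ => l} := by
  obtain ⟨⟨hdiag, hnn, hsymm, _⟩, _⟩ := hr
  have hP := admissibleSet_eq_polySet r hsymm
  have hpos : 0 < n := hn
  refine ⟨?_, ?_, ?_, ?_, ?_⟩
  · -- closed
    have : AdmissibleSet r =
        ⋂ (i : Fin n), ⋂ (j : Fin n),
          ({a : Fin n → ℝ | |a i - a j| ≤ r i j} ∩ {a | r i j ≤ a i + a j}) := by
      ext a; simp [AdmissibleSet, Set.mem_iInter]
    rw [this]
    refine isClosed_iInter fun i => isClosed_iInter fun j => IsClosed.inter ?_ ?_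
    · exact isClosed_le (((continuous_apply i).sub (continuous_apply j)).abs)
        continuous_const
    · exact isClosed_le continuous_const ((continuous_apply i).add (continuous_apply j))
  · -- nonneg
    intro a ha i
    have := (ha i i).2
    rw [hdiag i] at this
    linarith
  · -- extreme points nonempty
    rw [hP]
    exact poly_ext_nonempty admPointed
      (hP ▸ admissibleSet_nonempty r hnn)
  · -- finite
    rw [hP]
    exact poly_ext_finite
  · -- decomposition
    rw [hP, ← admRecCone hn]
    exact poly_eq_convexHull_add admPointed
end

section
/- (Amalgamation lemma.) Let r be a distance matrix of order n and let a, b : Fin n → ℝ be two admissible vectors for r. Then there exists a real number h ≥ 0 such that |a i - b i| ≤ h and h ≤ a i + b i for all i; equivalently, the vector (b₁,…,bₙ,h) is admissible for the distance matrix r^a of order n+1 obtained from r by adjoining a as the last row and column. -/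
/-- `a` is an admissible vector for the distance matrix `r`. -/
def IsAdmissible {n : ℕ} (r : Fin n → Fin n → ℝ) (a : Fin n → ℝ) : Prop :=
  ∀ i j, |a i - a j| ≤ r i j ∧ r i j ≤ a i + a j

/-- The distance matrix of order `n+1` obtained from `r` by adjoining the admissible
vector `a` as the last row and column. -/
def extendMatrix {n : ℕ} (r : Fin n → Fin n → ℝ) (a : Fin n → ℝ) :
    Fin (n + 1) → Fin (n + 1) → ℝ :=
  fun i j =>
    if hi : (i : ℕ) < n then
      if hj : (j : ℕ) < n then r ⟨i, hi⟩ ⟨j, hj⟩ else a ⟨i, hi⟩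
    else
      if hj : (j : ℕ) < n then a ⟨j, hj⟩ else 0

/-- (Amalgamation lemma.) For any two admissible vectors `a`, `b` of a distance matrix `r`
of order `n`, there is `h ≥ 0` with `|a i - b i| ≤ h ≤ a i + b i` for all `i`; equivalently,
the vector `(b, h)` is admissible for the extended matrix `r^a`. -/
theorem amalgamation_lemma {n : ℕ} (r : Fin n → Fin n → ℝ) (hr : IsDistMatrix r)
    (a b : Fin n → ℝ) (ha : IsAdmissible r a) (hb : IsAdmissible r b) :
    ∃ h : ℝ, 0 ≤ h ∧ (∀ i, |a i - b i| ≤ h ∧ h ≤ a i + b i) ∧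
      IsAdmissible (extendMatrix r a) (Fin.snoc b h) := by
  -- key inequality: |a i - b i| ≤ a j + b j for all i j
  have key : ∀ i j, |a i - b i| ≤ a j + b j := by
    intro i j
    have h1 : |a i - a j| ≤ r i j := (ha i j).1
    have h2 : |b i - b j| ≤ r i j := (hb i j).1
    have h3 : r i j ≤ a i + a j := (ha i j).2
    have h4 : r i j ≤ b i + b j := (hb i j).2
    rw [abs_sub_le_iff] at h1 h2 ⊢
    constructor <;> linarith [abs_le.mp (le_refl |a i - a j|)]
  rcases Nat.eq_zero_or_pos n with hn | hn
  · subst hn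
    refine ⟨0, le_refl 0, fun i => i.elim0, fun i j => ?_⟩
    have hi : ¬ ((i : ℕ) < 0) := Nat.not_lt_zero _
    have hj : ¬ ((j : ℕ) < 0) := Nat.not_lt_zero _
    have hi1 : i = Fin.last 0 := Fin.eq_last_of_not_lt (by omega)
    have hj1 : j = Fin.last 0 := Fin.eq_last_of_not_lt (by omega)
    subst hi1; subst hj1
    simp [extendMatrix, Fin.snoc]
  · have hne : (Finset.univ : Finset (Fin n)).Nonempty := by
      exact ⟨⟨0, hn⟩, Finset.mem_univ _⟩
    set h : ℝ := Finset.univ.sup' hne (fun i => |a i - b i|) with hh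
    have hle : ∀ i, |a i - b i| ≤ h := by
      intro i; rw [hh]; exact Finset.le_sup' (fun i => |a i - b i|) (Finset.mem_univ i)
    have hub : ∀ j, h ≤ a j + b j := by
      intro j
      rw [hh]; exact Finset.sup'_le _ _ fun i _ => key i j
    have h0 : 0 ≤ h := le_trans (abs_nonneg _) (hle ⟨0, hn⟩)
    refine ⟨h, h0, fun i => ⟨hle i, hub i⟩, fun i j => ?_⟩
    by_cases hi : (i : ℕ) < n <;> by_cases hj : (j : ℕ) < n
    · have e1 : Fin.snoc (α := fun _ => ℝ) b h i = b ⟨i, hi⟩ := by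
        simp only [Fin.snoc, dif_pos hi, cast_eq]; rfl
      have e2 : Fin.snoc (α := fun _ => ℝ) b h j = b ⟨j, hj⟩ := by
        simp only [Fin.snoc, dif_pos hj, cast_eq]; rfl
      simp only [extendMatrix, dif_pos hi, dif_pos hj, e1, e2]
      exact hb _ _
    · have e1 : Fin.snoc (α := fun _ => ℝ) b h i = b ⟨i, hi⟩ := by
        simp only [Fin.snoc, dif_pos hi, cast_eq]; rfl
      have e2 : Fin.snoc (α := fun _ => ℝ) b h j = h := by simp [Fin.snoc, hj]
      simp only [extendMatrix, dif_pos hi, dif_neg hj, e1, e2]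
      have k1 := hle ⟨i, hi⟩
      have k2 := hub ⟨i, hi⟩
      rw [abs_sub_le_iff] at k1 ⊢
      refine ⟨⟨?_, ?_⟩, ?_⟩ <;> linarith [k1.1, k1.2]
    · have e1 : Fin.snoc (α := fun _ => ℝ) b h i = h := by simp [Fin.snoc, hi]
      have e2 : Fin.snoc (α := fun _ => ℝ) b h j = b ⟨j, hj⟩ := by
        simp only [Fin.snoc, dif_pos hj, cast_eq]; rfl
      simp only [extendMatrix, dif_neg hi, dif_pos hj, e1, e2]
      have k1 := hle ⟨j, hj⟩
      have k2 := hub ⟨j, hj⟩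
      rw [abs_sub_le_iff] at k1 ⊢
      refine ⟨⟨?_, ?_⟩, ?_⟩ <;> linarith [k1.1, k1.2]
    · have e1 : Fin.snoc (α := fun _ => ℝ) b h i = h := by simp [Fin.snoc, hi]
      have e2 : Fin.snoc (α := fun _ => ℝ) b h j = h := by simp [Fin.snoc, hj]
      simp only [extendMatrix, dif_neg hi, dif_neg hj, e1, e2]
      refine ⟨by simp, by linarith⟩
end

section
/- Let N and n be positive integers with n < N, let r be a distance matrix of order N, and let a : Fin n → ℝ be admissible for the corner submatrix (r i j)_{i,j<n}. Then there exists a vector b : Fin N → ℝ admissible for r such that b i = a i for all i < n; that is, the coordinate projection from A(r) to A((r i j)_{i,j<n}) is surjective. -/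
/-- For `0 < n < N` and a distance matrix `r` of order `N`, every vector admissible for
the north-west corner `(r i j)_{i,j<n}` extends to a vector admissible for `r`; i.e. the
coordinate projection `A(r) → A(pₙ(r))` is surjective. -/
theorem admissible_projection_surjective {N n : ℕ} (hn : 0 < n) (hnN : n < N)
    (r : Fin N → Fin N → ℝ) (hr : IsDistMatrix r) (a : Fin n → ℝ)
    (ha : IsAdmissible (fun i j : Fin n => r (Fin.castLE hnN.le i) (Fin.castLE hnN.le j)) a) :
    ∃ b : Fin N → ℝ, IsAdmissible r b ∧ ∀ i : Fin n, b (Fin.castLE hnN.le i) = a i := by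
  obtain ⟨hdiag, hnonneg, hsymm, htri⟩ := hr
  have key : ∀ m : ℕ, n ≤ m → m ≤ N →
      ∃ b : Fin N → ℝ, (∀ i j : Fin N, (i : ℕ) < m → (j : ℕ) < m →
        |b i - b j| ≤ r i j ∧ r i j ≤ b i + b j) ∧
        ∀ i : Fin n, b (Fin.castLE hnN.le i) = a i := by
    intro m hm
    induction m, hm using Nat.le_induction with
    | base =>
      intro _
      refine ⟨fun i => if h : (i : ℕ) < n then a ⟨(i : ℕ), h⟩ else 0, ?_, ?_⟩
      · intro i j hi hj
        have e1 : Fin.castLE hnN.le ⟨(i : ℕ), hi⟩ = i := Fin.ext rfl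
        have e2 : Fin.castLE hnN.le ⟨(j : ℕ), hj⟩ = j := Fin.ext rfl
        have h := ha ⟨(i : ℕ), hi⟩ ⟨(j : ℕ), hj⟩
        dsimp only at h
        rw [e1, e2] at h
        simpa [dif_pos hi, dif_pos hj] using h
      · intro i
        simp [i.isLt]
    | succ m hm ih =>
      intro hm1
      have hmN : m < N := hm1
      obtain ⟨b, hb, hba⟩ := ih (le_of_lt hmN)
      set k : Fin N := ⟨m, hmN⟩ with hk
      have hbnn : ∀ i : Fin N, (i : ℕ) < m → 0 ≤ b i := by
        intro i hi
        have h := (hb i i hi hi).2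
        rw [hdiag] at h; linarith
      have hne : (Finset.univ.filter (fun i : Fin N => (i : ℕ) < m)).Nonempty := by
        refine ⟨⟨0, by omega⟩, ?_⟩
        simp; omega
      set S := Finset.univ.filter (fun i : Fin N => (i : ℕ) < m) with hS
      set c : ℝ := max 0 (S.sup' hne (fun i => max (b i - r i k) (r i k - b i))) with hc
      have hc0 : (0 : ℝ) ≤ c := le_max_left _ _
      have hmemS : ∀ i : Fin N, (i : ℕ) < m → i ∈ S := by
        intro i hi; simp [hS, hi]
      have hc1 : ∀ i : Fin N, (i : ℕ) < m → b i - r i k ≤ c := by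
        intro i hi
        exact le_max_of_le_right (Finset.le_sup'_of_le _ (hmemS i hi) (le_max_left _ _))
      have hc2 : ∀ i : Fin N, (i : ℕ) < m → r i k - b i ≤ c := by
        intro i hi
        exact le_max_of_le_right (Finset.le_sup'_of_le _ (hmemS i hi) (le_max_right _ _))
      have hc3 : ∀ j : Fin N, (j : ℕ) < m → c ≤ b j + r j k := by
        intro j hj
        refine max_le (by have := hbnn j hj; have := hnonneg j k; linarith) (Finset.sup'_le _ _ ?_)
        intro i hiS
        have hi : (i : ℕ) < m := by simpa [hS] using hiS
        have h1 := (hb i j hi hj).1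
        have h2 := (hb i j hi hj).2
        have habs := abs_le.mp h1
        have t1 : r i j ≤ r i k + r k j := htri i k j
        have t2 : r i k ≤ r i j + r j k := htri i j k
        have s1 : r k j = r j k := hsymm k j
        refine max_le ?_ ?_ <;> linarith [habs.1, habs.2]
      refine ⟨Function.update b k c, ?_, ?_⟩
      · intro i j hi hj
        have hik : (i : ℕ) = m ∨ (i : ℕ) < m := by omega
        have hjk : (j : ℕ) = m ∨ (j : ℕ) < m := by omega
        rcases hik with hik | hik <;> rcases hjk with hjk | hjk
        · have hi' : i = k := Fin.ext hik
          have hj' : j = k := Fin.ext hjk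
          subst hi'; subst hj'
          simp [Function.update_self, hdiag k]
          linarith
        · have hi' : i = k := Fin.ext hik
          subst hi'
          have hjne : j ≠ k := by intro h; rw [h] at hjk; simp [hk] at hjk
          rw [Function.update_self, Function.update_of_ne hjne]
          have h1 := hc1 j hjk
          have h2 := hc2 j hjk
          have h3 := hc3 j hjk
          have s1 : r k j = r j k := hsymm k j
          constructor
          · rw [abs_le]; constructor <;> linarith
          · linarith
        · have hj' : j = k := Fin.ext hjk
          subst hj'
          have hine : i ≠ k := by intro h; rw [h] at hik; simp [hk] at hik
          rw [Function.update_self, Function.update_of_ne hine]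
          have h1 := hc1 i hik
          have h2 := hc2 i hik
          have h3 := hc3 i hik
          constructor
          · rw [abs_le]; constructor <;> linarith
          · linarith
        · have hine : i ≠ k := by intro h; rw [h] at hik; simp [hk] at hik
          have hjne : j ≠ k := by intro h; rw [h] at hjk; simp [hk] at hjk
          rw [Function.update_of_ne hine, Function.update_of_ne hjne]
          exact hb i j hik hjk
      · intro i
        have hne' : Fin.castLE hnN.le i ≠ k := by
          intro h
          have : (i : ℕ) = m := congrArg Fin.val h
          omega
        rw [Function.update_of_ne hne']
        exact hba i
  obtain ⟨b, hb, hba⟩ := key N hnN.le le_rfl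
  exact ⟨b, fun i j => hb i j i.isLt j.isLt, hba⟩
end

section
/- Let K be a closed convex subset of ℝ^{k-1} × ℝ, let π : ℝ^{k-1} × ℝ → ℝ^{k-1} be the projection onto the first factor, and let K₀ = π(K). For every sequence (y_n) of points of K₀ whose range is dense in K₀, there exists a sequence of real numbers (z_n) such that (y_n, z_n) ∈ K for every n and the set {(y_n, z_n) : n ∈ ℕ} is dense in K. -/
open Set

lemma lemB {P : Type*} [NormedAddCommGroup P] [NormedSpace ℝ P] {K₀ : Set P}
    (hc : Convex ℝ K₀) {y : ℕ → P} (hy : ∀ n, y n ∈ K₀)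
    (hdense : K₀ ⊆ closure (Set.range y)) {x₀ : P} (hx₀ : x₀ ∈ K₀) {r : ℝ} (hr : 0 < r)
    (N : ℕ) : ∃ n, N ≤ n ∧ dist (y n) x₀ < r := by
  by_contra hcon
  push_neg at hcon
  by_cases hsing : ∀ x ∈ K₀, x = x₀
  · have h1 := hsing (y N) (hy N)
    have h2 := hcon N le_rfl
    rw [h1, dist_self] at h2
    linarith
  · push_neg at hsing
    obtain ⟨x', hx', hne⟩ := hsing
    have hv : x' - x₀ ≠ 0 := sub_ne_zero.mpr hne
    have hnv : 0 < ‖x' - x₀‖ := norm_pos_iff.mpr hv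
    set s₁ : ℝ := min 1 (r / (2 * ‖x' - x₀‖)) with hs₁def
    have hs₁ : 0 < s₁ := lt_min one_pos (by positivity)
    set c : ℝ → P := fun s => x₀ + s • (x' - x₀) with hcdef
    have hcinj : Function.Injective c := by
      intro a b hab
      simp only [hcdef, add_right_injective] at hab
      have := add_left_cancel hab
      exact smul_left_injective ℝ hv this
    have hSinf : (c '' Set.Ioo 0 s₁).Infinite :=
      (Set.Ioo_infinite hs₁).image (hcinj.injOn)
    have hΦfin : (y '' Set.Iio N).Finite := (Set.finite_Iio N).image y
    obtain ⟨xs, hxsS, hxsΦ⟩ := (hSinf.diff hΦfin).nonempty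
    obtain ⟨s, hs, hxs⟩ := hxsS
    have hsmem : xs ∈ K₀ := by
      have : xs = (1 - s) • x₀ + s • x' := by
        rw [← hxs]; simp only [hcdef]
        rw [smul_sub, sub_smul, one_smul]; abel
      rw [this]
      have hs2 : s ≤ 1 := le_of_lt (lt_of_lt_of_le hs.2 (min_le_left _ _))
      exact hc hx₀ hx' (by linarith) (le_of_lt hs.1) (by ring)
    have hdxs : dist xs x₀ < r / 2 := by
      rw [← hxs, hcdef]
      simp only [dist_eq_norm, add_sub_cancel_left, norm_smul, Real.norm_eq_abs,
        abs_of_pos hs.1]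
      have hs2 : s < r / (2 * ‖x' - x₀‖) := hs.2.trans_le (min_le_right _ _)
      calc s * ‖x' - x₀‖ < (r / (2 * ‖x' - x₀‖)) * ‖x' - x₀‖ := by
            exact mul_lt_mul_of_pos_right hs2 hnv
        _ = r / 2 := by field_simp
    have hopen : IsOpen ((y '' Set.Iio N)ᶜ) := hΦfin.isClosed.isOpen_compl
    obtain ⟨δ, hδ, hball⟩ := Metric.isOpen_iff.mp hopen xs hxsΦ
    set r' : ℝ := min δ (r - dist xs x₀) with hr'def
    have hr' : 0 < r' := lt_min hδ (by linarith)
    obtain ⟨b, ⟨n, rfl⟩, hbd⟩ := Metric.mem_closure_iff.mp (hdense hsmem) r' hr'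
    have hynΦ : y n ∉ y '' Set.Iio N := by
      apply hball
      rw [Metric.mem_ball, dist_comm]
      exact hbd.trans_le (min_le_left _ _)
    have hnN : N ≤ n := by
      by_contra h
      exact hynΦ ⟨n, Set.mem_Iio.mpr (by omega), rfl⟩
    have : dist (y n) x₀ < r := by
      calc dist (y n) x₀ ≤ dist (y n) xs + dist xs x₀ := dist_triangle _ _ _
        _ < (r - dist xs x₀) + dist xs x₀ := by
            have : dist (y n) xs < r' := by rwa [dist_comm]
            linarith [this.trans_le (min_le_right δ (r - dist xs x₀))]
        _ = r := by ring
    linarith [hcon n hnN]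

lemma exists_lift_near {P : Type*} [NormedAddCommGroup P] [NormedSpace ℝ P]
    [FiniteDimensional ℝ P] {K : Set (P × ℝ)} (hconv : Convex ℝ K)
    {d : P × ℝ} (hd : d ∈ K) {ε : ℝ} (hε : 0 < ε) :
    ∃ x₀ r, 0 < r ∧ x₀ ∈ Prod.fst '' K ∧
      ∀ x ∈ Prod.fst '' K, dist x x₀ < r →
        ∃ z, (x, z) ∈ K ∧ dist ((x, z) : P × ℝ) d < ε := by
  classical
  set D : Set P := (fun p : P × ℝ => p.1 - d.1) '' K with hDdef
  obtain ⟨b, hbD, hspan, hind⟩ := exists_linearIndependent ℝ D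
  have hbfin : b.Finite := hind.setFinite
  obtain ⟨m, v, hvb, hrv⟩ : ∃ (m : ℕ) (v : Fin m → P), (∀ i, v i ∈ b) ∧ Set.range v = b := by
    refine ⟨hbfin.toFinset.card, fun i => ((hbfin.toFinset.equivFin.symm i : hbfin.toFinset) : P),
      fun i => hbfin.mem_toFinset.mp (hbfin.toFinset.equivFin.symm i).2, ?_⟩
    ext w
    constructor
    · rintro ⟨i, rfl⟩; exact hbfin.mem_toFinset.mp (hbfin.toFinset.equivFin.symm i).2
    · intro hw
      exact ⟨hbfin.toFinset.equivFin ⟨w, hbfin.mem_toFinset.mpr hw⟩, by simp⟩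
  have hvD : ∀ i, v i ∈ D := fun i => hbD (hvb i)
  choose eP hePK hePv using fun i => hvD i
  -- constants
  set B : ℝ := ∑ i, ‖eP i - d‖ with hBdef
  have hB : 0 ≤ B := Finset.sum_nonneg fun i _ => norm_nonneg _
  obtain ⟨c, hc0, hcm, hcB⟩ : ∃ c : ℝ, 0 < c ∧ ((m : ℝ) + 1) * (2 * c) ≤ 1 ∧ 2 * c * B < ε := by
    have hBpos : (0:ℝ) < 2 * (B + 1) := by linarith
    have hmpos : (0:ℝ) < 2 * ((m : ℝ) + 1) := by positivity
    refine ⟨min (1 / (2 * ((m : ℝ) + 1))) (ε / (2 * (B + 1))), ?_, ?_, ?_⟩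
    · exact lt_min (by positivity) (div_pos hε hBpos)
    · have h1 : min (1 / (2 * ((m : ℝ) + 1))) (ε / (2 * (B + 1))) ≤ 1 / (2 * ((m : ℝ) + 1)) :=
        min_le_left _ _
      have h1' := (le_div_iff₀ hmpos).mp h1
      nlinarith
    · have h2 : min (1 / (2 * ((m : ℝ) + 1))) (ε / (2 * (B + 1))) ≤ ε / (2 * (B + 1)) :=
        min_le_right _ _
      have h2' := (le_div_iff₀ hBpos).mp h2
      have h0 : 0 < min (1 / (2 * ((m : ℝ) + 1))) (ε / (2 * (B + 1))) :=
        lt_min (by positivity) (div_pos hε hBpos)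
      nlinarith
  -- sum bound
  have hsum1 : ∀ μ : Fin m → ℝ, (∀ i, μ i ≤ 2 * c) → (∑ i, μ i) ≤ 1 := by
    intro μ hμ
    have h1 : (∑ i, μ i) ≤ ∑ _i : Fin m, 2 * c :=
      Finset.sum_le_sum fun i _ => hμ i
    have h2 : (∑ _i : Fin m, 2 * c) = m * (2 * c) := by
      rw [Finset.sum_const, Finset.card_univ, Fintype.card_fin, nsmul_eq_mul]
    have hm : (m : ℝ) * (2 * c) ≤ ((m : ℝ) + 1) * (2 * c) := by nlinarith
    linarith
  -- the key construction
  have key : ∀ μ : Fin m → ℝ, (∀ i, 0 ≤ μ i) → (∑ i, μ i) ≤ 1 →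
      (d + ∑ i, μ i • (eP i - d)) ∈ K ∧
      (d + ∑ i, μ i • (eP i - d)).1 = d.1 + ∑ i, μ i • v i ∧
      dist (d + ∑ i, μ i • (eP i - d)) d ≤ ∑ i, μ i * ‖eP i - d‖ := by
    intro μ hμ0 hμ1
    refine ⟨?_, ?_, ?_⟩
    · have heq : d + ∑ i, μ i • (eP i - d) = (1 - ∑ i, μ i) • d + ∑ i, μ i • eP i := by
        rw [sub_smul, one_smul, Finset.sum_smul]
        rw [show (∑ i, μ i • (eP i - d)) = (∑ i, μ i • eP i) - ∑ i, μ i • d by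
          simp only [smul_sub]; rw [Finset.sum_sub_distrib]]
        abel
      rw [heq]
      have := hconv.sum_mem (t := (Finset.univ : Finset (Option (Fin m))))
        (w := fun o => Option.elim o (1 - ∑ i, μ i) μ)
        (z := fun o => Option.elim o d eP)
        (fun o _ => by cases o with
          | none => simpa using sub_nonneg.mpr hμ1
          | some i => exact hμ0 i)
        (by rw [Fintype.sum_option]; simp)
        (fun o _ => by cases o with
          | none => exact hd
          | some i => exact hePK i)
      rwa [Fintype.sum_option] at this
    · have hePv' : ∀ i, (eP i).1 - d.1 = v i := hePv
      rw [Prod.fst_add, Prod.fst_sum]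
      congr 1
      exact Finset.sum_congr rfl fun i _ => by rw [Prod.smul_fst, Prod.fst_sub, hePv' i]
    · rw [dist_eq_norm, add_sub_cancel_left]
      refine (norm_sum_le _ _).trans (Finset.sum_le_sum fun i _ => ?_)
      rw [norm_smul, Real.norm_eq_abs, abs_of_nonneg (hμ0 i)]
  -- x₀
  set x₀ : P := d.1 + ∑ i, c • v i with hx₀def
  have hkey₀ := key (fun _ => c) (fun _ => le_of_lt hc0) (hsum1 _ (fun i => by linarith))
  have hx₀K : x₀ ∈ Prod.fst '' K := ⟨_, hkey₀.1, hkey₀.2.1⟩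
  -- the linear combination map and its section
  set T : (Fin m → ℝ) →ₗ[ℝ] P := Fintype.linearCombination ℝ v with hTdef
  have hTapp : ∀ μ : Fin m → ℝ, T μ = ∑ i, μ i • v i := fun μ =>
    Fintype.linearCombination_apply ℝ v μ
  have hrangeT : ∀ p ∈ K, p.1 - d.1 ∈ LinearMap.range T := by
    intro p hp
    rw [hTdef, Fintype.range_linearCombination]
    rw [hrv, hspan]
    exact Submodule.subset_span ⟨p, hp, rfl⟩
  obtain ⟨g, hg⟩ := T.rangeRestrict.exists_rightInverse_of_surjective
    (LinearMap.range_eq_top.mpr T.surjective_rangeRestrict)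
  have hTg : ∀ w : LinearMap.range T, T (g w) = (w : P) := by
    intro w
    have := LinearMap.congr_fun hg w
    simpa [LinearMap.rangeRestrict, Subtype.ext_iff] using this
  have hgc : Continuous g := g.continuous_of_finiteDimensional
  obtain ⟨δ, hδ, hgδ⟩ := Metric.continuousAt_iff.mp hgc.continuousAt (ε := c) hc0
  refine ⟨x₀, δ, hδ, hx₀K, ?_⟩
  intro x hx hxδ
  obtain ⟨p, hpK, hp1⟩ := hx
  have hxS : x - x₀ ∈ LinearMap.range T := by
    have h1 : x - d.1 ∈ LinearMap.range T := hp1 ▸ hrangeT p hpK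
    have h2 : x₀ - d.1 ∈ LinearMap.range T := by
      refine ⟨fun _ => c, ?_⟩
      rw [hTapp, hx₀def]; abel
    have := Submodule.sub_mem _ h1 h2
    rwa [sub_sub_sub_cancel_right] at this
  set w : LinearMap.range T := ⟨x - x₀, hxS⟩ with hwdef
  have hwδ : dist w 0 < δ := by
    rw [Subtype.dist_eq]
    simpa [hwdef, dist_eq_norm] using (by rwa [dist_eq_norm] at hxδ : ‖x - x₀‖ < δ)
  have hgw : ‖g w‖ < c := by
    have := hgδ hwδ
    rwa [map_zero, dist_zero_right] at this
  have hgwi : ∀ i, |(g w) i| < c := fun i =>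
    lt_of_le_of_lt (by simpa using norm_le_pi_norm (g w) i) hgw
  set μ : Fin m → ℝ := fun i => c + (g w) i with hμdef
  have hμ0 : ∀ i, 0 ≤ μ i := fun i => by
    have := (abs_lt.mp (hgwi i)).1; simp only [hμdef]; linarith
  have hμ2 : ∀ i, μ i ≤ 2 * c := fun i => by
    have := (abs_lt.mp (hgwi i)).2; simp only [hμdef]; linarith
  obtain ⟨hQK, hQ1, hQd⟩ := key μ hμ0 (hsum1 μ hμ2)
  have hTμ : (∑ i, μ i • v i) = x - d.1 := by
    have hμeq : μ = (fun _ => c) + g w := by funext i; simp [hμdef]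
    rw [← hTapp, hμeq, map_add, hTapp, hTg]
    have h1 : (∑ i, c • v i) = x₀ - d.1 := by rw [hx₀def]; abel
    rw [h1]
    simp only [hwdef]
    abel
  have hQ1' : (d + ∑ i, μ i • (eP i - d)).1 = x := by
    rw [hQ1, hTμ]; abel
  refine ⟨(d + ∑ i, μ i • (eP i - d)).2, ?_, ?_⟩
  · have : (x, (d + ∑ i, μ i • (eP i - d)).2) = d + ∑ i, μ i • (eP i - d) := by
      rw [← hQ1']
    rw [this]; exact hQK
  · have heq : (x, (d + ∑ i, μ i • (eP i - d)).2) = d + ∑ i, μ i • (eP i - d) := by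
      rw [← hQ1']
    rw [heq]
    have h1 : (∑ i, μ i * ‖eP i - d‖) ≤ ∑ i, (2 * c) * ‖eP i - d‖ :=
      Finset.sum_le_sum fun i _ => mul_le_mul_of_nonneg_right (hμ2 i) (norm_nonneg _)
    have h2 : (∑ i, (2 * c) * ‖eP i - d‖) = 2 * c * B := by
      rw [hBdef, Finset.mul_sum]
    calc dist (d + ∑ i, μ i • (eP i - d)) d ≤ ∑ i, μ i * ‖eP i - d‖ := hQd
      _ ≤ 2 * c * B := by rw [← h2]; exact h1
      _ < ε := hcB
/-- Lifting a dense sequence from the base of a closed convex set fibered over its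
projection: if `K ⊆ ℝ^{k-1} × ℝ` is closed and convex, `K₀` is its projection to the
first factor, and `(y n)` is a sequence whose range is dense in `K₀`, then one can choose
reals `z n` with `(y n, z n) ∈ K` such that `{(y n, z n)}` is dense in `K`. -/
theorem dense_lift_of_closed_convex {k : ℕ}
    (K : Set ((Fin (k - 1) → ℝ) × ℝ)) (hclosed : IsClosed K) (hconv : Convex ℝ K)
    (y : ℕ → Fin (k - 1) → ℝ) (hy : ∀ n, y n ∈ Prod.fst '' K)
    (hdense : Prod.fst '' K ⊆ closure (Set.range y)) :
    ∃ z : ℕ → ℝ, (∀ n, (y n, z n) ∈ K) ∧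
      K ⊆ closure (Set.range fun n => (y n, z n)) := by
  classical
  have hKne : K.Nonempty := by
    obtain ⟨p, hpK, -⟩ := hy 0
    exact ⟨p, hpK⟩
  haveI : Nonempty K := hKne.to_subtype
  obtain ⟨u, hu⟩ := TopologicalSpace.exists_dense_seq K
  have hconvK₀ : Convex ℝ (Prod.fst '' K) := by
    have := hconv.linear_image (LinearMap.fst ℝ (Fin (k - 1) → ℝ) ℝ)
    simpa using this
  have lemA' : ∀ q ∈ K, ∀ ε : ℝ, 0 < ε → ∀ N : ℕ,
      ∃ n, N ≤ n ∧ ∃ zz, (y n, zz) ∈ K ∧ dist ((y n, zz) : _ × ℝ) q < ε := by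
    intro q hq ε hε N
    obtain ⟨x₀, r, hr, hx₀, hball⟩ := exists_lift_near hconv hq hε
    obtain ⟨n, hnN, hyn⟩ := lemB hconvK₀ hy hdense hx₀ hr N
    obtain ⟨zz, hzzK, hzzd⟩ := hball (y n) (hy n) hyn
    exact ⟨n, hnN, zz, hzzK, hzzd⟩
  have hreq : ∀ i N : ℕ, ∃ n, N ≤ n ∧ ∃ zz, (y n, zz) ∈ K ∧
      dist ((y n, zz) : _ × ℝ) ((u (Nat.pairEquiv.symm i).1 : K) : _) <
        1 / ((Nat.pairEquiv.symm i).2 + 1) := by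
    intro i N
    exact lemA' _ (u (Nat.pairEquiv.symm i).1).2 _ (by positivity) N
  choose nf hnf zf hzfK hzfd using hreq
  set Nb : ℕ → ℕ := fun i => Nat.rec 0 (fun j Nj => nf j Nj + 1) i with hNbdef
  set nI : ℕ → ℕ := fun i => nf i (Nb i) with hnIdef
  have hmono : StrictMono nI := by
    apply strictMono_nat_of_lt_succ
    intro i
    have h1 : Nb (i + 1) = nI i + 1 := rfl
    have h2 : Nb (i + 1) ≤ nI (i + 1) := hnf (i + 1) (Nb (i + 1))
    omega
  have hyK' : ∀ n, ∃ p : (Fin (k - 1) → ℝ) × ℝ, p ∈ K ∧ p.1 = y n := by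
    intro n; obtain ⟨p, hp, hp1⟩ := hy n; exact ⟨p, hp, hp1⟩
  choose fb hfbK hfb1 using hyK'
  set z : ℕ → ℝ :=
    fun n => if h : ∃ i', nI i' = n then zf (Nat.find h) (Nb (Nat.find h)) else (fb n).2
    with hzdef
  have hzat : ∀ i', z (nI i') = zf i' (Nb i') := by
    intro i'
    have hex' : ∃ a, nI a = nI i' := ⟨i', rfl⟩
    simp only [hzdef]
    rw [dif_pos hex']
    rw [show Nat.find hex' = i' from hmono.injective (Nat.find_spec hex')]
  refine ⟨z, ?_, ?_⟩
  · intro n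
    by_cases h : ∃ i', nI i' = n
    · obtain ⟨i', rfl⟩ := h
      rw [hzat i']
      exact hzfK i' (Nb i')
    · simp only [hzdef]
      rw [dif_neg h]
      have heq : (y n, (fb n).2) = fb n := by rw [← hfb1 n]
      rw [heq]
      exact hfbK n
  · intro q hq
    rw [Metric.mem_closure_iff]
    intro ε hε
    obtain ⟨m, hm⟩ := hu.exists_dist_lt (⟨q, hq⟩ : K) (half_pos hε)
    obtain ⟨j, hj⟩ := exists_nat_one_div_lt (K := ℝ) (half_pos hε)
    set i := Nat.pairEquiv (m, j) with hidef
    have hdec : Nat.pairEquiv.symm i = (m, j) := Equiv.symm_apply_apply _ _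
    refine ⟨(y (nI i), z (nI i)), ⟨nI i, rfl⟩, ?_⟩
    rw [hzat i]
    have hd1 := hzfd i (Nb i)
    rw [hdec] at hd1
    have hqu : dist q ((u m : K) : (Fin (k - 1) → ℝ) × ℝ) < ε / 2 := by
      rw [Subtype.dist_eq] at hm; exact hm
    have hnIi : nI i = nf i (Nb i) := rfl
    calc dist q (y (nI i), zf i (Nb i))
        ≤ dist q ((u m : K) : (Fin (k - 1) → ℝ) × ℝ)
          + dist ((u m : K) : (Fin (k - 1) → ℝ) × ℝ) (y (nI i), zf i (Nb i)) :=
          dist_triangle _ _ _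
      _ < ε / 2 + ε / 2 := by
          apply add_lt_add hqu
          rw [dist_comm, hnIi]
          exact lt_trans (by exact_mod_cast hd1) hj
      _ = ε := by ring
end

section
/- The set M of universal infinite distance matrices is a nonempty, everywhere dense G_δ subset of the cone R of infinite distance matrices in the product (weak) topology. -/
/-- An infinite distance matrix. -/
def IsInfDistMatrix (r : ℕ → ℕ → ℝ) : Prop :=
  (∀ i, r i i = 0) ∧ (∀ i j, 0 ≤ r i j) ∧ (∀ i j, r i j = r j i) ∧
    ∀ i j k, r i k ≤ r i j + r j k

/-- A universal infinite distance matrix: the columns restricted to the first `n`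
coordinates approximate every vector admissible for the order-`n` corner of `r`. -/
def IsUniversal (r : ℕ → ℕ → ℝ) : Prop :=
  ∀ (n : ℕ) (a : Fin n → ℝ),
    (∀ i j : Fin n, |a i - a j| ≤ r i j ∧ r i j ≤ a i + a j) →
    ∀ ε > 0, ∃ m : ℕ, n ≤ m ∧ ∀ i : Fin n, |r i m - a i| < ε

/-- The cone of infinite distance matrices, with the product (weak) topology. -/
abbrev ConeR : Type := {r : ℕ → ℕ → ℝ // IsInfDistMatrix r}

noncomputable section UnivAux

open Classical Filter Set

abbrev UTask : Type := Σ k : ℕ, (Fin k → ℚ) × ℚ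
def GoodOn (N : ℕ) (M : ℕ → ℕ → ℝ) : Prop :=
  (∀ i, i < N → M i i = 0) ∧ (∀ i j, i < N → j < N → 0 ≤ M i j) ∧
  (∀ i j, i < N → j < N → M i j = M j i) ∧
  (∀ i j k, i < N → j < N → k < N → M i k ≤ M i j + M j k)
def AdmOn (N : ℕ) (M : ℕ → ℕ → ℝ) (b : ℕ → ℝ) : Prop :=
  ∀ i j, i < N → j < N → |b i - b j| ≤ M i j ∧ M i j ≤ b i + b j
def matExt (M : ℕ → ℕ → ℝ) (N : ℕ) (b : ℕ → ℝ) : ℕ → ℕ → ℝ :=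
  fun i j => if i < N ∧ j < N then M i j else if i < N then b i else if j < N then b j else 0
lemma matExt_lt {M : ℕ → ℕ → ℝ} {N : ℕ} {b : ℕ → ℝ} {i j : ℕ} (hi : i < N) (hj : j < N) :
    matExt M N b i j = M i j := by simp [matExt, hi, hj]

lemma matExt_row {M : ℕ → ℕ → ℝ} {N : ℕ} {b : ℕ → ℝ} {i : ℕ} (hi : i < N) :
    matExt M N b i N = b i := by simp [matExt, hi, lt_irrefl]

lemma matExt_col {M : ℕ → ℕ → ℝ} {N : ℕ} {b : ℕ → ℝ} {j : ℕ} (hj : j < N) :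
    matExt M N b N j = b j := by simp [matExt, hj, lt_irrefl]

lemma matExt_diag {M : ℕ → ℕ → ℝ} {N : ℕ} {b : ℕ → ℝ} :
    matExt M N b N N = 0 := by simp [matExt, lt_irrefl]

lemma admOn_nonneg {N : ℕ} {M : ℕ → ℕ → ℝ} {b : ℕ → ℝ} (hM : GoodOn N M)
    (hb : AdmOn N M b) {i : ℕ} (hi : i < N) : 0 ≤ b i := by
  have h := (hb i i hi hi).2
  have h0 := hM.1 i hi
  linarith

lemma goodOn_matExt {N : ℕ} {M : ℕ → ℕ → ℝ} {b : ℕ → ℝ} (hM : GoodOn N M)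
    (hb : AdmOn N M b) : GoodOn (N + 1) (matExt M N b) := by
  obtain ⟨hd, hnn, hsym, htri⟩ := hM
  have hlt : ∀ m, m < N + 1 → m < N ∨ m = N := by
    intro m hm; rcases Nat.lt_succ_iff_lt_or_eq.mp hm with h | h
    · exact Or.inl h
    · exact Or.inr h
  refine ⟨?_, ?_, ?_, ?_⟩
  · intro i hi; rcases hlt i hi with h | h
    · rw [matExt_lt h h]; exact hd i h
    · subst h; exact matExt_diag
  · intro i j hi hj
    rcases hlt i hi with h1 | h1 <;> rcases hlt j hj with h2 | h2
    · rw [matExt_lt h1 h2]; exact hnn i j h1 h2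
    · subst h2; rw [matExt_row h1]; exact admOn_nonneg ⟨hd, hnn, hsym, htri⟩ hb h1
    · subst h1; rw [matExt_col h2]; exact admOn_nonneg ⟨hd, hnn, hsym, htri⟩ hb h2
    · subst h1; subst h2; rw [matExt_diag]
  · intro i j hi hj
    rcases hlt i hi with h1 | h1 <;> rcases hlt j hj with h2 | h2
    · rw [matExt_lt h1 h2, matExt_lt h2 h1]; exact hsym i j h1 h2
    · subst h2; rw [matExt_row h1, matExt_col h1]
    · subst h1; rw [matExt_col h2, matExt_row h2]
    · subst h1; subst h2; rfl
  · intro i j k hi hj hk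
    have hb' : ∀ p q, p < N → q < N → |b p - b q| ≤ M p q ∧ M p q ≤ b p + b q := hb
    rcases hlt i hi with h1 | h1 <;> rcases hlt j hj with h2 | h2 <;>
      rcases hlt k hk with h3 | h3
    · rw [matExt_lt h1 h3, matExt_lt h1 h2, matExt_lt h2 h3]; exact htri i j k h1 h2 h3
    · subst h3; rw [matExt_row h1, matExt_lt h1 h2, matExt_row h2]
      have := abs_le.mp (hb' i j h1 h2).1
      linarith [this.1]
    · subst h2; rw [matExt_lt h1 h3, matExt_row h1, matExt_col h3]
      exact (hb' i k h1 h3).2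
    · subst h2; subst h3; rw [matExt_row h1, matExt_diag]; linarith
    · subst h1; rw [matExt_col h3, matExt_col h2, matExt_lt h2 h3]
      have := abs_le.mp (hb' k j h3 h2).1
      have hs := hsym j k h2 h3
      linarith [this.1]
    · subst h1; subst h3; rw [matExt_diag, matExt_col h2, matExt_row h2]
      have := admOn_nonneg ⟨hd, hnn, hsym, htri⟩ hb h2
      linarith
    · subst h1; subst h2; rw [matExt_col h3, matExt_diag]; linarith
    · subst h1; subst h2; subst h3; rw [matExt_diag]; linarith


-- new part
/-- The condition triggering a nontrivial extension step. -/
def taskCond (M : ℕ → ℕ → ℝ) (N : ℕ) (x : UTask) : Prop :=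
  ∃ b : ℕ → ℝ, AdmOn N M b ∧ ∀ i : Fin x.1, (i : ℕ) < N → |b i - (x.2.1 i : ℝ)| < (x.2.2 : ℝ)

/-- The row chosen at a step. -/
def chRow (M : ℕ → ℕ → ℝ) (N : ℕ) (x : UTask) : ℕ → ℝ :=
  if h : taskCond M N x then Classical.choose h else fun i => M 0 i

lemma admOn_chRow {N : ℕ} {M : ℕ → ℕ → ℝ} (hM : GoodOn N M) (x : UTask) :
    AdmOn N M (chRow M N x) := by
  rw [chRow]
  split
  · next h => exact (Classical.choose_spec h).1
  · intro i j hi hj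
    have h0 : 0 < N := lt_of_le_of_lt (Nat.zero_le i) hi
    obtain ⟨hd, hnn, hsym, htri⟩ := hM
    constructor
    · rw [abs_sub_le_iff]
      constructor
      · have := htri 0 j i h0 hj hi
        have hs := hsym j i hj hi
        linarith
      · have := htri 0 i j h0 hi hj
        have hs := hsym i j hi hj
        linarith
    · have := htri i 0 j hi h0 hj
      have hs := hsym i 0 hi h0
      linarith

lemma chRow_spec {N : ℕ} {M : ℕ → ℕ → ℝ} {x : UTask} (h : taskCond M N x) :
    ∀ i : Fin x.1, (i : ℕ) < N → |chRow M N x i - (x.2.1 i : ℝ)| < (x.2.2 : ℝ) := by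
  rw [chRow, dif_pos h]
  exact (Classical.choose_spec h).2

/-- The sequence of matrices. -/
def seqM (e : ℕ → UTask) (r : ℕ → ℕ → ℝ) (n : ℕ) : ℕ → (ℕ → ℕ → ℝ)
  | 0 => r
  | t + 1 => matExt (seqM e r n t) (n + t) (chRow (seqM e r n t) (n + t) (e t))

lemma goodOn_seqM {e : ℕ → UTask} {r : ℕ → ℕ → ℝ} (hr : IsInfDistMatrix r) (n : ℕ) :
    ∀ t, GoodOn (n + t) (seqM e r n t) := by
  intro t
  induction t with
  | zero => exact ⟨fun i _ => hr.1 i, fun i j _ _ => hr.2.1 i j, fun i j _ _ => hr.2.2.1 i j,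
      fun i j k _ _ _ => hr.2.2.2 i j k⟩
  | succ t ih =>
    exact goodOn_matExt ih (admOn_chRow ih (e t))

lemma seqM_agree {e : ℕ → UTask} {r : ℕ → ℕ → ℝ} {n : ℕ} :
    ∀ t t', t ≤ t' → ∀ i j, i < n + t → j < n + t →
      seqM e r n t' i j = seqM e r n t i j := by
  intro t t' h
  induction t' , h using Nat.le_induction with
  | base => intro i j _ _; rfl
  | succ t' ht' ih =>
    intro i j hi hj
    have hi' : i < n + t' := lt_of_lt_of_le hi (by omega)
    have hj' : j < n + t' := lt_of_lt_of_le hj (by omega)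
    rw [seqM, matExt_lt hi' hj', ih i j hi hj]


def limM (e : ℕ → UTask) (r : ℕ → ℕ → ℝ) (n : ℕ) : ℕ → ℕ → ℝ :=
  fun i j => seqM e r n (i + j + 1) i j

lemma limM_eq {e : ℕ → UTask} {r : ℕ → ℕ → ℝ} {n : ℕ} {t i j : ℕ}
    (hi : i < n + t) (hj : j < n + t) : limM e r n i j = seqM e r n t i j := by
  have h1 : i < n + (i + j + 1) := by omega
  have h2 : j < n + (i + j + 1) := by omega
  have e1 := seqM_agree (e := e) (r := r) (n := n) (i + j + 1) (max t (i + j + 1))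
    (le_max_right _ _) i j h1 h2
  have e2 := seqM_agree (e := e) (r := r) (n := n) t (max t (i + j + 1))
    (le_max_left _ _) i j hi hj
  rw [limM]
  rw [← e1, e2]

lemma limM_base {e : ℕ → UTask} {r : ℕ → ℕ → ℝ} {n : ℕ} {i j : ℕ}
    (hi : i < n) (hj : j < n) : limM e r n i j = r i j :=
  limM_eq (t := 0) hi hj

lemma isInfDistMatrix_limM {e : ℕ → UTask} {r : ℕ → ℕ → ℝ} (hr : IsInfDistMatrix r)
    (n : ℕ) : IsInfDistMatrix (limM e r n) := by
  refine ⟨?_, ?_, ?_, ?_⟩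
  · intro i
    have h : i < n + (i + 1) := by omega
    rw [limM_eq h h]
    exact (goodOn_seqM hr n _).1 i h
  · intro i j
    have hi : i < n + (i + j + 1) := by omega
    have hj : j < n + (i + j + 1) := by omega
    rw [limM_eq hi hj]
    exact (goodOn_seqM hr n _).2.1 i j hi hj
  · intro i j
    have hi : i < n + (i + j + 1) := by omega
    have hj : j < n + (i + j + 1) := by omega
    rw [limM_eq hi hj, limM_eq hj hi]
    exact (goodOn_seqM hr n _).2.2.1 i j hi hj
  · intro i j k
    have hi : i < n + (i + j + k + 1) := by omega
    have hj : j < n + (i + j + k + 1) := by omega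
    have hk : k < n + (i + j + k + 1) := by omega
    rw [limM_eq hi hk, limM_eq hi hj, limM_eq hj hk]
    exact (goodOn_seqM hr n _).2.2.2 i j k hi hj hk

lemma exists_adm_ext {N k : ℕ} {M : ℕ → ℕ → ℝ} (hM : GoodOn N M) (hk : 0 < k)
    (hkN : k ≤ N) {a : Fin k → ℝ}
    (ha : ∀ i j : Fin k, |a i - a j| ≤ M i j ∧ M i j ≤ a i + a j) :
    ∃ b : ℕ → ℝ, AdmOn N M b ∧ ∀ i : Fin k, b (i : ℕ) = a i := by
  obtain ⟨hd, hnn, hsym, htri⟩ := hM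
  have : Nonempty (Fin k) := ⟨⟨0, hk⟩⟩
  have H : (Finset.univ : Finset (Fin k)).Nonempty := Finset.univ_nonempty
  set b : ℕ → ℝ := fun j => Finset.univ.inf' H (fun p : Fin k => a p + M (p : ℕ) j) with hbdef
  have hfk : ∀ p : Fin k, (p : ℕ) < N := fun p => lt_of_lt_of_le p.2 hkN
  have hble : ∀ (j : ℕ) (p : Fin k), b j ≤ a p + M (p : ℕ) j := by
    intro j p; exact Finset.inf'_le _ (Finset.mem_univ p)
  have hbex : ∀ j : ℕ, ∃ p : Fin k, b j = a p + M (p : ℕ) j := by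
    intro j
    obtain ⟨p, _, hp⟩ := Finset.exists_mem_eq_inf' H (fun p : Fin k => a p + M (p : ℕ) j)
    exact ⟨p, hp⟩
  refine ⟨b, ?_, ?_⟩
  · intro i j hi hj
    obtain ⟨p, hp⟩ := hbex i
    obtain ⟨q, hq⟩ := hbex j
    constructor
    · rw [abs_sub_le_iff]
      constructor
      · have h1 : b i ≤ a q + M (q : ℕ) i := hble i q
        have h2 : M (q : ℕ) i ≤ M (q : ℕ) j + M j i := htri _ j i (hfk q) hj hi
        have h3 : M j i = M i j := hsym j i hj hi
        linarith
      · have h1 : b j ≤ a p + M (p : ℕ) j := hble j p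
        have h2 : M (p : ℕ) j ≤ M (p : ℕ) i + M i j := htri _ i j (hfk p) hi hj
        linarith
    · have h1 : M i j ≤ M i (p : ℕ) + M (p : ℕ) j := htri i _ j hi (hfk p) hj
      have h2 : M (p : ℕ) j ≤ M (p : ℕ) (q : ℕ) + M (q : ℕ) j := htri _ _ j (hfk p) (hfk q) hj
      have h3 : M (p : ℕ) (q : ℕ) ≤ a p + a q := (ha p q).2
      have h4 : M i (p : ℕ) = M (p : ℕ) i := hsym i _ hi (hfk p)
      linarith
  · intro i
    apply le_antisymm
    · have := hble (i : ℕ) i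
      have h0 : M (i : ℕ) (i : ℕ) = 0 := hd _ (hfk i)
      linarith
    · apply Finset.le_inf'
      intro p _
      have h1 : a i - a p ≤ |a i - a p| := le_abs_self _
      have h2 : |a i - a p| ≤ M (i : ℕ) (p : ℕ) := (ha i p).1
      have h3 : M (i : ℕ) (p : ℕ) = M (p : ℕ) (i : ℕ) := hsym _ _ (hfk i) (hfk p)
      linarith

lemma isUniversal_limM {e : ℕ → UTask} (he : ∀ x : UTask, ∀ T : ℕ, ∃ t, T ≤ t ∧ e t = x)
    {r : ℕ → ℕ → ℝ} (hr : IsInfDistMatrix r) (n : ℕ) :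
    IsUniversal (limM e r n) := by
  intro k a ha ε hε
  rcases Nat.eq_zero_or_pos k with hk0 | hk
  · subst hk0; exact ⟨0, le_rfl, fun i => i.elim0⟩
  obtain ⟨ε', hε'0, hε'⟩ := exists_rat_btwn (show (0 : ℝ) < ε / 2 by linarith)
  choose a' ha' using fun i : Fin k =>
    exists_rat_near (a i) (show (0 : ℝ) < (ε' : ℝ) / 2 by linarith)
  obtain ⟨t, hkt, het⟩ := he ⟨k, a', ε'⟩ k
  set N := n + t with hN
  set M := seqM e r n t with hM
  have hG := goodOn_seqM (e := e) hr n t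
  have hkN : k ≤ N := le_trans hkt (by omega)
  have haM : ∀ i j : Fin k, |a i - a j| ≤ M (i : ℕ) (j : ℕ) ∧ M (i : ℕ) (j : ℕ) ≤ a i + a j := by
    intro i j
    have := ha i j
    rwa [limM_eq (lt_of_lt_of_le i.2 hkN) (lt_of_lt_of_le j.2 hkN)] at this
  obtain ⟨b, hbAdm, hbfix⟩ := exists_adm_ext hG hk hkN haM
  have hcond : taskCond M N ⟨k, a', ε'⟩ := by
    refine ⟨b, hbAdm, ?_⟩
    intro i _
    show |b (i : ℕ) - (a' i : ℝ)| < (ε' : ℝ)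
    rw [hbfix i]
    have := ha' i
    linarith [abs_nonneg (a i - (a' i : ℝ))]
  refine ⟨N, hkN, ?_⟩
  intro i
  have hiN : (i : ℕ) < N := lt_of_lt_of_le i.2 hkN
  have hlim : limM e r n (i : ℕ) N = chRow M N (e t) (i : ℕ) := by
    have h1 : (i : ℕ) < n + (t + 1) := by omega
    have h2 : N < n + (t + 1) := by omega
    rw [limM_eq h1 h2]
    exact matExt_row hiN
  have hrow : |chRow M N (e t) (i : ℕ) - (a' i : ℝ)| < (ε' : ℝ) := by
    rw [het]
    exact chRow_spec hcond i hiN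
  have htr : |limM e r n (i : ℕ) N - a i| ≤
      |limM e r n (i : ℕ) N - (a' i : ℝ)| + |(a' i : ℝ) - a i| := abs_sub_le _ _ _
  rw [hlim] at htr ⊢
  have h5 : |(a' i : ℝ) - a i| = |a i - (a' i : ℝ)| := abs_sub_comm _ _
  have := ha' i
  calc |chRow M N (e t) (i : ℕ) - a i| ≤ _ + _ := htr
    _ < (ε' : ℝ) + (ε' : ℝ) / 2 := by rw [h5]; linarith [hrow]
    _ < ε := by linarith

/-- The open sets whose intersection is the set of universal matrices. -/
def Uset (u : UTask) : Set ConeR :=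
  if 0 < u.2.2 then
    {y : ConeR |
      (∀ i j : Fin u.1, |(u.2.1 i : ℝ) - (u.2.1 j : ℝ)| ≤ y.1 i j + (u.2.2 : ℝ) / 4 ∧
          y.1 i j ≤ (u.2.1 i : ℝ) + (u.2.1 j : ℝ) + (u.2.2 : ℝ) / 4) →
        ∃ m, u.1 ≤ m ∧ ∀ i : Fin u.1, |y.1 i m - (u.2.1 i : ℝ)| < (u.2.2 : ℝ)}
  else univ

lemma continuous_entry (i j : ℕ) : Continuous fun y : ConeR => y.1 i j := by
  have h1 : Continuous fun y : ConeR => (y.1 : ℕ → ℕ → ℝ) := continuous_subtype_val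
  have h2 : Continuous fun f : ℕ → ℕ → ℝ => f i j := (continuous_apply j).comp (continuous_apply i)
  exact h2.comp h1

lemma isOpen_Uset (u : UTask) : IsOpen (Uset u) := by
  obtain ⟨k, a, ε⟩ := u
  rw [Uset]
  split
  · have hH : IsClosed {y : ConeR | ∀ i j : Fin k,
        |(a i : ℝ) - (a j : ℝ)| ≤ y.1 i j + (ε : ℝ) / 4 ∧
          y.1 i j ≤ (a i : ℝ) + (a j : ℝ) + (ε : ℝ) / 4} := by
      have heq : {y : ConeR | ∀ i j : Fin k,
          |(a i : ℝ) - (a j : ℝ)| ≤ y.1 i j + (ε : ℝ) / 4 ∧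
            y.1 i j ≤ (a i : ℝ) + (a j : ℝ) + (ε : ℝ) / 4} =
          ⋂ i : Fin k, ⋂ j : Fin k,
            ({y : ConeR | |(a i : ℝ) - (a j : ℝ)| ≤ y.1 i j + (ε : ℝ) / 4} ∩
              {y : ConeR | y.1 i j ≤ (a i : ℝ) + (a j : ℝ) + (ε : ℝ) / 4}) := by
        ext y; simp [Set.mem_iInter, forall_and]
      rw [heq]
      refine isClosed_iInter fun i => isClosed_iInter fun j => IsClosed.inter ?_ ?_
      · exact isClosed_le continuous_const ((continuous_entry i j).add continuous_const)
      · exact isClosed_le (continuous_entry i j) continuous_const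
    have hC : IsOpen {y : ConeR | ∃ m, k ≤ m ∧
        ∀ i : Fin k, |y.1 i m - (a i : ℝ)| < (ε : ℝ)} := by
      have heq : {y : ConeR | ∃ m, k ≤ m ∧ ∀ i : Fin k, |y.1 i m - (a i : ℝ)| < (ε : ℝ)} =
          ⋃ m, ⋃ (_ : k ≤ m), ⋂ i : Fin k,
            {y : ConeR | |y.1 i m - (a i : ℝ)| < (ε : ℝ)} := by
        ext y; simp [Set.mem_iUnion, Set.mem_iInter]
      rw [heq]
      refine isOpen_iUnion fun m => isOpen_iUnion fun _ => isOpen_iInter_of_finite fun i => ?_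
      exact isOpen_lt ((continuous_entry i m).sub continuous_const).abs continuous_const
    have heq2 : {y : ConeR |
        (∀ i j : Fin k, |(a i : ℝ) - (a j : ℝ)| ≤ y.1 i j + (ε : ℝ) / 4 ∧
            y.1 i j ≤ (a i : ℝ) + (a j : ℝ) + (ε : ℝ) / 4) →
          ∃ m, k ≤ m ∧ ∀ i : Fin k, |y.1 i m - (a i : ℝ)| < (ε : ℝ)} =
        {y : ConeR | ∀ i j : Fin k,
          |(a i : ℝ) - (a j : ℝ)| ≤ y.1 i j + (ε : ℝ) / 4 ∧
            y.1 i j ≤ (a i : ℝ) + (a j : ℝ) + (ε : ℝ) / 4}ᶜ ∪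
        {y : ConeR | ∃ m, k ≤ m ∧ ∀ i : Fin k, |y.1 i m - (a i : ℝ)| < (ε : ℝ)} := by
      ext y
      simp only [Set.mem_setOf_eq, Set.mem_union, Set.mem_compl_iff]
      tauto
    rw [heq2]
    exact hH.isOpen_compl.union hC
  · exact isOpen_univ

lemma universal_mem_Uset {y : ConeR} (hy : IsUniversal y.1) (u : UTask) : y ∈ Uset u := by
  obtain ⟨k, a, ε⟩ := u
  rw [Uset]
  split
  · next hε =>
    simp only [Set.mem_setOf_eq]
    intro hyp
    have hεR : (0 : ℝ) < (ε : ℝ) := by exact_mod_cast hε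
    rcases Nat.eq_zero_or_pos k with hk0 | hk
    · subst hk0; exact ⟨0, le_rfl, fun i => i.elim0⟩
    obtain ⟨h0, hnn, hsym, htri⟩ := y.2
    set d : ℕ → ℕ → ℝ := y.1 with hd
    set δ : ℝ := (ε : ℝ) / 4 with hδ
    have hδ0 : 0 < δ := by positivity
    have : Nonempty (Fin k) := ⟨⟨0, hk⟩⟩
    have H : (Finset.univ : Finset (Fin k)).Nonempty := Finset.univ_nonempty
    set bb : Fin k → ℝ :=
      fun i => Finset.univ.inf' H (fun q : Fin k => (a q : ℝ) + d q i) with hbb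
    set c : Fin k → ℝ := fun i => bb i + δ with hcdef
    have hble : ∀ i q : Fin k, bb i ≤ (a q : ℝ) + d q i :=
      fun i q => Finset.inf'_le _ (Finset.mem_univ q)
    have hbex : ∀ i : Fin k, ∃ q : Fin k, bb i = (a q : ℝ) + d q i := by
      intro i
      obtain ⟨q, _, hq⟩ := Finset.exists_mem_eq_inf' H (fun q : Fin k => (a q : ℝ) + d q i)
      exact ⟨q, hq⟩
    have hadm : ∀ i j : Fin k, |c i - c j| ≤ d i j ∧ d i j ≤ c i + c j := by
      intro i j
      obtain ⟨p, hp⟩ := hbex i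
      obtain ⟨q, hq⟩ := hbex j
      constructor
      · have h1 : bb i ≤ bb j + d i j := by
          have hA := hble i q
          have hB : d (q : ℕ) (i : ℕ) ≤ d (q : ℕ) (j : ℕ) + d (j : ℕ) (i : ℕ) := htri _ _ _
          have hC : d (j : ℕ) (i : ℕ) = d (i : ℕ) (j : ℕ) := hsym _ _
          linarith
        have h2 : bb j ≤ bb i + d i j := by
          have hA := hble j p
          have hB : d (p : ℕ) (j : ℕ) ≤ d (p : ℕ) (i : ℕ) + d (i : ℕ) (j : ℕ) := htri _ _ _
          linarith
        have : |bb i - bb j| ≤ d i j := abs_sub_le_iff.mpr ⟨by linarith, by linarith⟩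
        simpa [hcdef] using this
      · have h1 : d (i : ℕ) (j : ℕ) ≤ d (i : ℕ) (p : ℕ) + d (p : ℕ) (j : ℕ) := htri _ _ _
        have h2 : d (p : ℕ) (j : ℕ) ≤ d (p : ℕ) (q : ℕ) + d (q : ℕ) (j : ℕ) := htri _ _ _
        have h3 : (d (p : ℕ) (q : ℕ) : ℝ) ≤ (a p : ℝ) + (a q : ℝ) + δ := (hyp p q).2
        have h4 : d (i : ℕ) (p : ℕ) = d (p : ℕ) (i : ℕ) := hsym _ _
        have : d (i : ℕ) (j : ℕ) ≤ bb i + bb j + δ := by rw [hp, hq]; linarith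
        simp only [hcdef]
        linarith
    have hclose : ∀ i : Fin k, |c i - a i| ≤ δ := by
      intro i
      have hub : bb i ≤ (a i : ℝ) := by
        have := hble i i
        have h0' : d (i : ℕ) (i : ℕ) = 0 := h0 _
        linarith
      have hlb : (a i : ℝ) - δ ≤ bb i := by
        obtain ⟨q, hq⟩ := hbex i
        have h1 : |(a i : ℝ) - a q| ≤ d (i : ℕ) (q : ℕ) + δ := (hyp i q).1
        have h2 : (a i : ℝ) - a q ≤ |(a i : ℝ) - a q| := le_abs_self _
        have h3 : d (i : ℕ) (q : ℕ) = d (q : ℕ) (i : ℕ) := hsym _ _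
        rw [hq]; linarith
      rw [abs_le]
      constructor <;> simp only [hcdef] <;> linarith
    obtain ⟨m, hkm, hm⟩ := hy k c hadm δ hδ0
    refine ⟨m, hkm, ?_⟩
    intro i
    have h1 := hm i
    have h2 := hclose i
    have h3 : |d (i : ℕ) m - (a i : ℝ)| ≤ |d (i : ℕ) m - c i| + |c i - (a i : ℝ)| :=
      abs_sub_le _ _ _
    calc |d (i : ℕ) m - (a i : ℝ)| ≤ _ + _ := h3
      _ < δ + δ := by linarith
      _ < (ε : ℝ) := by rw [hδ]; linarith
  · exact Set.mem_univ y

lemma universal_of_mem_Uset {y : ConeR} (hy : ∀ u : UTask, y ∈ Uset u) : IsUniversal y.1 := by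
  intro k a ha ε hε
  obtain ⟨ε', hε'0, hε'⟩ := exists_rat_btwn (show (0 : ℝ) < ε / 2 by linarith)
  choose a' ha' using fun i : Fin k =>
    exists_rat_near (a i) (show (0 : ℝ) < (ε' : ℝ) / 8 by linarith)
  have hε'Q : 0 < ε' := by exact_mod_cast hε'0
  have hu := hy ⟨k, a', ε'⟩
  rw [Uset, if_pos hε'Q] at hu
  simp only [Set.mem_setOf_eq] at hu
  have hyp : ∀ i j : Fin k, |(a' i : ℝ) - (a' j : ℝ)| ≤ y.1 i j + (ε' : ℝ) / 4 ∧
      y.1 i j ≤ (a' i : ℝ) + (a' j : ℝ) + (ε' : ℝ) / 4 := by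
    intro i j
    have hi := abs_lt.mp (ha' i)
    have hj := abs_lt.mp (ha' j)
    have h1 := abs_le.mp (ha i j).1
    have h2 := (ha i j).2
    constructor
    · rw [abs_le]
      constructor <;> linarith
    · linarith
  obtain ⟨m, hkm, hm⟩ := hu hyp
  refine ⟨m, hkm, ?_⟩
  intro i
  have h1 := hm i
  have h2 := abs_lt.mp (ha' i)
  have h3 : |y.1 (i : ℕ) m - a i| ≤ |y.1 (i : ℕ) m - (a' i : ℝ)| + |(a' i : ℝ) - a i| :=
    abs_sub_le _ _ _
  have h4 : |(a' i : ℝ) - a i| = |a i - (a' i : ℝ)| := abs_sub_comm _ _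
  have h5 : |a i - (a' i : ℝ)| < (ε' : ℝ) / 8 := ha' i
  calc |y.1 (i : ℕ) m - a i| ≤ _ + _ := h3
    _ < (ε' : ℝ) + (ε' : ℝ) / 8 := by rw [h4]; linarith
    _ < ε := by linarith

lemma exists_enum : ∃ e : ℕ → UTask, ∀ (x : UTask) (T : ℕ), ∃ t, T ≤ t ∧ e t = x := by
  obtain ⟨f, hf⟩ := exists_surjective_nat UTask
  refine ⟨fun t => f (Nat.unpair t).1, fun x T => ?_⟩
  obtain ⟨s, hs⟩ := hf x
  refine ⟨Nat.pair s T, Nat.right_le_pair s T, ?_⟩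
  simp [Nat.unpair_pair, hs]

theorem universal_dense_Gdelta' :
    ({x : ConeR | IsUniversal x.1}).Nonempty ∧
    Dense {x : ConeR | IsUniversal x.1} ∧
    IsGδ {x : ConeR | IsUniversal x.1} := by
  obtain ⟨e, he⟩ := exists_enum
  have hset : {x : ConeR | IsUniversal x.1} = ⋂ u : UTask, Uset u := by
    ext y
    simp only [Set.mem_setOf_eq, Set.mem_iInter]
    exact ⟨fun h u => universal_mem_Uset h u, universal_of_mem_Uset⟩
  have hzero : IsInfDistMatrix (fun _ _ => (0 : ℝ)) :=
    ⟨fun _ => rfl, fun _ _ => le_refl _, fun _ _ => rfl, fun _ _ _ => by norm_num⟩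
  refine ⟨?_, ?_, ?_⟩
  · exact ⟨⟨limM e (fun _ _ => 0) 0, isInfDistMatrix_limM hzero 0⟩,
      isUniversal_limM he hzero 0⟩
  · intro x
    refine mem_closure_of_tendsto
      (f := fun n => (⟨limM e x.1 n, isInfDistMatrix_limM x.2 n⟩ : ConeR)) (b := atTop)
      ?_ (Filter.Eventually.of_forall fun n => isUniversal_limM he x.2 n)
    rw [tendsto_subtype_rng]
    rw [tendsto_pi_nhds]
    intro i
    rw [tendsto_pi_nhds]
    intro j
    apply Filter.Tendsto.congr' ?_ (tendsto_const_nhds (x := x.1 i j))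
    filter_upwards [Filter.eventually_ge_atTop (i + j + 1)] with n hn
    exact (limM_base (by omega) (by omega)).symm
  · rw [hset]
    exact IsGδ.iInter fun u => (isOpen_Uset u).isGδ

end UnivAux

/-- The set `M` of universal distance matrices is a nonempty, everywhere dense `G_δ`
subset of the cone `R` of infinite distance matrices with the product topology. -/
theorem universal_dense_Gdelta :
    ({x : ConeR | IsUniversal x.1}).Nonempty ∧
    Dense {x : ConeR | IsUniversal x.1} ∧
    IsGδ {x : ConeR | IsUniversal x.1} := by
  exact universal_dense_Gdelta'
end

section
/- Let r be a universal proper infinite distance matrix and let U_r be the metric completion of (ℕ, r). Then for every sequence u : ℕ → U_r with dense range, the infinite distance matrix (fun i j => dist (u i) (u j)) is universal. -/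
/-- A proper infinite distance matrix: no zeros off the diagonal. -/
def IsProper (r : ℕ → ℕ → ℝ) : Prop := ∀ i j, i ≠ j → 0 < r i j

/-- A copy of `ℕ`, to be endowed with the metric given by a proper distance matrix `r`. -/
def Carrier (r : ℕ → ℕ → ℝ) (_ : IsInfDistMatrix r) (_ : IsProper r) : Type := ℕ

/-- The metric on `ℕ` (i.e. on `Carrier r hr hp`) given by `d i j = r i j`. -/
noncomputable instance instCarrierMetric (r : ℕ → ℕ → ℝ) (hr : IsInfDistMatrix r)
    (hp : IsProper r) : MetricSpace (Carrier r hr hp) where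
  dist i j := r i j
  dist_self i := hr.1 i
  dist_comm i j := hr.2.2.1 i j
  dist_triangle i j k := hr.2.2.2 i j k
  eq_of_dist_eq_zero := by
    intro i j h
    by_contra hne
    exact absurd h (ne_of_gt (hp i j hne))

/-- The metric completion `U_r` of `(ℕ, r)`. -/
abbrev CompletionOf (r : ℕ → ℕ → ℝ) (hr : IsInfDistMatrix r) (hp : IsProper r) : Type :=
  UniformSpace.Completion (Carrier r hr hp)

noncomputable def iota (r : ℕ → ℕ → ℝ) (hr : IsInfDistMatrix r) (hp : IsProper r) (k : ℕ) :
    CompletionOf r hr hp := UniformSpace.Completion.coe' (α := Carrier r hr hp) k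

theorem dist_iota (r : ℕ → ℕ → ℝ) (hr : IsInfDistMatrix r) (hp : IsProper r) (j k : ℕ) :
    dist (iota r hr hp j) (iota r hr hp k) = r j k :=
  UniformSpace.Completion.dist_eq (α := Carrier r hr hp) j k

theorem iota_dense (r : ℕ → ℕ → ℝ) (hr : IsInfDistMatrix r) (hp : IsProper r) :
    DenseRange (iota r hr hp) := by
  have := UniformSpace.Completion.denseRange_coe (α := Carrier r hr hp)
  exact this

open Topology Filter Set
theorem exists_ne_dist_lt (r : ℕ → ℕ → ℝ) (hr : IsInfDistMatrix r) (hp : IsProper r)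
    (hu : IsUniversal r) (x : CompletionOf r hr hp) {ε : ℝ} (hε : 0 < ε) :
    ∃ y : CompletionOf r hr hp, y ≠ x ∧ dist y x < ε := by
  obtain ⟨p, hpd⟩ := (iota_dense r hr hp).exists_dist_lt x (by positivity : (0:ℝ) < ε/4)
  set a : Fin (p+1) → ℝ := fun i => r i p + ε/4 with ha
  have hadm : ∀ i j : Fin (p+1), |a i - a j| ≤ r i j ∧ r i j ≤ a i + a j := by
    intro i j
    constructor
    · rw [abs_sub_le_iff]
      constructor
      · have := hr.2.2.2 i p j
        have h2 := hr.2.2.1 p j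
        simp only [ha]
        linarith [hr.2.2.2 i j p]
      · simp only [ha]
        have := hr.2.2.2 j i p
        linarith [hr.2.2.1 i j]
    · have := hr.2.2.2 i p j
      have h2 := hr.2.2.1 p j
      simp only [ha]
      linarith
  obtain ⟨m, hm, hmd⟩ := hu (p+1) a hadm (ε/8) (by positivity)
  have hlast := hmd ⟨p, Nat.lt_succ_self p⟩
  simp only [ha] at hlast
  rw [hr.1 p] at hlast
  have h1 : ε/8 < r p m ∧ r p m < 3*ε/8 := by
    have := abs_lt.1 hlast
    constructor <;> linarith [this.1, this.2]
  by_cases hx : iota r hr hp m = x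
  · refine ⟨iota r hr hp p, ?_, ?_⟩
    · intro h
      rw [← hx] at h
      have : dist (iota r hr hp p) (iota r hr hp m) = 0 := by rw [h, dist_self]
      rw [dist_iota] at this
      linarith [h1.1]
    · rw [dist_comm]; linarith
  · refine ⟨iota r hr hp m, hx, ?_⟩
    calc dist (iota r hr hp m) x ≤ dist (iota r hr hp m) (iota r hr hp p) + dist (iota r hr hp p) x := dist_triangle _ _ _
    _ < 3*ε/8 + ε/4 := by
        rw [dist_iota, hr.2.2.1 m p]
        rw [dist_comm] at hpd
        linarith [h1.2]
    _ < ε := by linarith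

theorem nhdsNE_neBot (r : ℕ → ℕ → ℝ) (hr : IsInfDistMatrix r) (hp : IsProper r)
    (hu : IsUniversal r) (x : CompletionOf r hr hp) : (𝓝[≠] x).NeBot := by
  rw [← mem_closure_iff_nhdsWithin_neBot, Metric.mem_closure_iff]
  intro ε hε
  obtain ⟨y, hy, hyd⟩ := exists_ne_dist_lt r hr hp hu x hε
  exact ⟨y, hy, by rwa [dist_comm]⟩

theorem exists_tail_close (r : ℕ → ℕ → ℝ) (hr : IsInfDistMatrix r) (hp : IsProper r)
    (hu : IsUniversal r) (u : ℕ → CompletionOf r hr hp) (hdense : DenseRange u)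
    (x : CompletionOf r hr hp) (n : ℕ) {ε : ℝ} (hε : 0 < ε) :
    ∃ m, n ≤ m ∧ dist (u m) x < ε := by
  haveI : ∀ y : CompletionOf r hr hp, (𝓝[≠] y).NeBot := nhdsNE_neBot r hr hp hu
  have hd : Dense (Set.range u \ (u '' Set.Iio n)) :=
    hdense.diff_finite ((Set.finite_Iio n).image u)
  obtain ⟨y, hy, hyd⟩ := Metric.mem_closure_iff.1 (hd x) ε hε
  obtain ⟨⟨m, rfl⟩, hnot⟩ := hy
  refine ⟨m, ?_, by rwa [dist_comm]⟩
  by_contra h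
  exact hnot ⟨m, Set.mem_Iio.mpr (by omega), rfl⟩

/-- If `r` is a universal proper infinite distance matrix and `U_r` is the completion of
`(ℕ, r)`, then the distance matrix of every sequence with dense range in `U_r` is
universal. -/
theorem distMatrix_of_dense_seq_universal (r : ℕ → ℕ → ℝ) (hr : IsInfDistMatrix r)
    (hp : IsProper r) (hu : IsUniversal r) (u : ℕ → CompletionOf r hr hp)
    (hdense : DenseRange u) :
    IsUniversal (fun i j => dist (u i) (u j)) := by
  intro n a ha ε hε
  rcases Nat.eq_zero_or_pos n with hn | hn
  · subst hn; exact ⟨0, le_refl 0, fun i => i.elim0⟩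
  haveI : Nonempty (Fin n) := Fin.pos_iff_nonempty.1 hn
  set δ := ε/8 with hδdef
  have hδ : 0 < δ := by positivity
  have hpick : ∀ i : Fin n, ∃ k : ℕ, dist (u i) (iota r hr hp k) < δ := fun i =>
    (iota_dense r hr hp).exists_dist_lt (u i) hδ
  choose p hpp using hpick
  -- distance comparison between `r (p i) (p j)` and `dist (u i) (u j)`
  have hcomp : ∀ i j : Fin n, |r (p i) (p j) - dist (u i) (u j)| ≤ 2*δ := by
    intro i j
    have t1 : dist (iota r hr hp (p i)) (iota r hr hp (p j)) ≤
        dist (iota r hr hp (p i)) (u i) + dist (u i) (u j) + dist (u j) (iota r hr hp (p j)) :=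
      dist_triangle4 _ _ _ _
    have t2 : dist (u i) (u j) ≤
        dist (u i) (iota r hr hp (p i)) + dist (iota r hr hp (p i)) (iota r hr hp (p j)) +
          dist (iota r hr hp (p j)) (u j) := dist_triangle4 _ _ _ _
    rw [dist_iota] at t1 t2
    rw [dist_comm (iota r hr hp (p i)) (u i)] at t1
    rw [dist_comm (iota r hr hp (p j)) (u j)] at t2
    rw [abs_le]
    constructor <;> [linarith [hpp i, hpp j, t2]; linarith [hpp i, hpp j, t1]]
  -- the Katětov-style extension
  set b : ℕ → ℝ := fun j => Finset.univ.inf' Finset.univ_nonempty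
    (fun i : Fin n => a i + 2*δ + r (p i) j) with hb
  have hble : ∀ (j : ℕ) (i : Fin n), b j ≤ a i + 2*δ + r (p i) j := fun j i =>
    Finset.inf'_le _ (Finset.mem_univ i)
  have hbex : ∀ j : ℕ, ∃ i : Fin n, b j = a i + 2*δ + r (p i) j := fun j => by
    obtain ⟨i, _, hi⟩ := Finset.exists_mem_eq_inf' Finset.univ_nonempty
      (fun i : Fin n => a i + 2*δ + r (p i) j)
    exact ⟨i, hi⟩
  -- Lipschitz property
  have hlip : ∀ j k : ℕ, b j ≤ b k + r j k := by
    intro j k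
    obtain ⟨i, hi⟩ := hbex k
    have := hble j i
    have htri := hr.2.2.2 (p i) k j
    have hsym := hr.2.2.1 k j
    linarith
  -- lower bound property
  have hlow : ∀ j k : ℕ, r j k ≤ b j + b k := by
    intro j k
    obtain ⟨i, hi⟩ := hbex j
    obtain ⟨i', hi'⟩ := hbex k
    have hsum : r (p i) (p i') ≤ a i + a i' + 4*δ := by
      have h1 := abs_le.1 (hcomp i i')
      have h2 := (ha i i').2
      simp only at h2
      linarith [h1.1]
    have ht1 := hr.2.2.2 j (p i) k
    have ht2 := hr.2.2.2 (p i) (p i') k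
    have hs1 := hr.2.2.1 j (p i)
    linarith
  -- value at the base points
  have hval : ∀ i : Fin n, a i ≤ b (p i) ∧ b (p i) ≤ a i + 2*δ := by
    intro i
    constructor
    · refine Finset.le_inf' _ _ (fun i' _ => ?_)
      have h1 := abs_le.1 (hcomp i' i)
      have h2 := abs_le.1 (ha i i').1
      simp only at h2
      linarith [h1.1, h2.1, dist_comm (u i) (u i')]
    · have := hble (p i) i
      rw [hr.1 (p i)] at this
      linarith
  -- apply universality of `r`
  set N : ℕ := max n ((Finset.univ.sup fun i : Fin n => p i) + 1) with hN
  have hpN : ∀ i : Fin n, p i < N := by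
    intro i
    have : p i ≤ Finset.univ.sup fun i : Fin n => p i :=
      Finset.le_sup (Finset.mem_univ i)
    omega
  set B : Fin N → ℝ := fun j => b j with hB
  have hadm : ∀ j k : Fin N, |B j - B k| ≤ r j k ∧ r j k ≤ B j + B k := by
    intro j k
    refine ⟨abs_sub_le_iff.2 ⟨?_, ?_⟩, hlow j k⟩
    · have := hlip j k; simp only [hB]; linarith
    · have := hlip k j; have := hr.2.2.1 k j; simp only [hB]; linarith
  obtain ⟨m, hmN, hmB⟩ := hu N B hadm δ hδ
  -- find a tail element of `u` near `iota m`
  obtain ⟨m', hm'n, hm'd⟩ := exists_tail_close r hr hp hu u hdense (iota r hr hp m) n hδ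
  refine ⟨m', hm'n, fun i => ?_⟩
  have hq : |r (p i) m - b (p i)| < δ := hmB ⟨p i, hpN i⟩
  have h4 : |dist (u i) (iota r hr hp m) - r (p i) m| ≤ δ := by
    have := abs_dist_sub_le (u i) (iota r hr hp (p i)) (iota r hr hp m)
    rw [dist_iota] at this
    exact this.trans (le_of_lt (hpp i))
  have h5 : |dist (u i) (u m') - dist (u i) (iota r hr hp m)| ≤ δ := by
    have := abs_dist_sub_le (u m') (iota r hr hp m) (u i)
    rw [dist_comm (u m') (u i), dist_comm (iota r hr hp m) (u i)] at this
    exact this.trans (le_of_lt hm'd)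
  have h3 := hval i
  have hq' := abs_lt.1 hq
  have h4' := abs_le.1 h4
  have h5' := abs_le.1 h5
  simp only []
  rw [abs_lt]
  constructor <;> [linarith [hq'.1, h4'.1, h5'.1, h3.2]; linarith [hq'.2, h4'.2, h5'.2, h3.1]]
end

section
/- (Urysohn.) There exists a nonempty complete separable metric space U with the following properties: (1) (universality) every complete separable metric space admits an isometric embedding into U; (2) (homogeneity) for any two finite subsets A, B ⊆ U and any distance-preserving bijection φ : A → B, there exists a surjective isometry J : U → U with J x = φ x for all x ∈ A. Moreover, (3) (uniqueness) any two nonempty complete separable metric spaces satisfying (1) and (2) are isometric. -/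
open TopologicalSpace

/-- A space `U` satisfies the Urysohn properties: it is a nonempty Polish (complete
separable) metric space that is universal (every Polish metric space embeds isometrically)
and homogeneous (every distance-preserving bijection between finite subsets extends to a
surjective self-isometry). -/
def IsUrysohnSpace (U : Type) [MetricSpace U] : Prop :=
  Nonempty U ∧ CompleteSpace U ∧ SeparableSpace U ∧
  (∀ (X : Type) [MetricSpace X], CompleteSpace X → SeparableSpace X →
    ∃ f : X → U, Isometry f) ∧
  (∀ A B : Set U, A.Finite → B.Finite → ∀ φ : A → B, Function.Bijective φ →
    (∀ x y : A, dist (φ x : U) (φ y : U) = dist (x : U) (y : U)) →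
    ∃ J : U ≃ᵢ U, ∀ x : A, J (x : U) = (φ x : U))


/-- Katětov tuple conditions. -/
def KatTuple {U : Type*} [MetricSpace U] {n : ℕ} (u : Fin n → U) (r : Fin n → ℝ) : Prop :=
  (∀ i j, |r i - r j| ≤ dist (u i) (u j)) ∧ (∀ i j, dist (u i) (u j) ≤ r i + r j)

/-- One-point extension property. -/
def ExtProp (U : Type*) [MetricSpace U] : Prop :=
  ∀ (n : ℕ) (u : Fin n → U) (r : Fin n → ℝ), KatTuple u r → ∃ z : U, ∀ i, dist z (u i) = r i

theorem KatTuple.nonneg {U : Type*} [MetricSpace U] {n : ℕ} {u : Fin n → U} {r : Fin n → ℝ}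
    (h : KatTuple u r) (i : Fin n) : 0 ≤ r i := by
  have := h.2 i i; rw [dist_self] at this; linarith

section Fmin

variable {X : Type*} [MetricSpace X] {n : ℕ} (a : Fin (n+1) → X) (r : Fin (n+1) → ℝ)

/-- canonical extension formula -/
noncomputable def Fmin (x : X) : ℝ :=
  Finset.univ.inf' Finset.univ_nonempty (fun i => r i + dist (a i) x)

theorem Fmin_le (x : X) (i : Fin (n+1)) : Fmin a r x ≤ r i + dist (a i) x :=
  Finset.inf'_le _ (Finset.mem_univ i)

theorem Fmin_exists (x : X) : ∃ i, Fmin a r x = r i + dist (a i) x := by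
  obtain ⟨i, _, hi⟩ := Finset.exists_mem_eq_inf' (Finset.univ_nonempty)
    (fun i => r i + dist (a i) x)
  exact ⟨i, hi⟩

theorem Fmin_lip (x y : X) : |Fmin a r x - Fmin a r y| ≤ dist x y := by
  rw [abs_sub_le_iff]
  constructor
  · obtain ⟨j, hj⟩ := Fmin_exists a r y
    have := Fmin_le a r x j
    have := dist_triangle (a j) y x
    rw [dist_comm y x] at this
    have h3 : dist (a j) x ≤ dist (a j) y + dist x y := by
      have := dist_triangle (a j) x y; have := dist_triangle (a j) y x
      rw [dist_comm y x] at *; linarith [dist_triangle (a j) y x]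
    linarith [Fmin_le a r x j]
  · obtain ⟨j, hj⟩ := Fmin_exists a r x
    have h3 : dist (a j) y ≤ dist (a j) x + dist x y := dist_triangle (a j) x y
    linarith [Fmin_le a r y j]

theorem Fmin_low (hlow : ∀ i j, dist (a i) (a j) ≤ r i + r j) (x y : X) :
    dist x y ≤ Fmin a r x + Fmin a r y := by
  obtain ⟨i, hi⟩ := Fmin_exists a r x
  obtain ⟨j, hj⟩ := Fmin_exists a r y
  have h1 := hlow i j
  have h2 : dist x y ≤ dist (a i) x + dist (a i) (a j) + dist (a j) y := by
    have := dist_triangle x (a i) (a j)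
    have := dist_triangle x (a j) y
    rw [dist_comm x (a i)] at *
    rw [dist_comm x (a j)] at *
    linarith [dist_triangle x (a i) (a j), dist_triangle x (a j) y]
  linarith

theorem Fmin_nonneg (hlow : ∀ i j, dist (a i) (a j) ≤ r i + r j) (x : X) :
    0 ≤ Fmin a r x := by
  have := Fmin_low a r hlow x x
  rw [dist_self] at this; linarith

theorem Fmin_at (hkat : KatTuple a r) (j : Fin (n+1)) : Fmin a r (a j) = r j := by
  refine le_antisymm ?_ ?_
  · have := Fmin_le a r (a j) j; rw [dist_self] at this; linarith
  · obtain ⟨i, hi⟩ := Fmin_exists a r (a j)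
    have := hkat.1 j i
    rw [abs_sub_le_iff] at this
    rw [dist_comm (a j) (a i)] at this
    linarith [this.1]

end Fmin

section Efin

/-- Finitely supported Katětov functions (with relaxed representation). -/
def Efin (X : Type) [MetricSpace X] : Type :=
  {f : X → ℝ // ∃ (n : ℕ) (a : Fin (n+1) → X) (r : Fin (n+1) → ℝ),
      (∀ i j, dist (a i) (a j) ≤ r i + r j) ∧ ∀ x, f x = Fmin a r x}

variable {X : Type} [MetricSpace X]

theorem Efin.lip (f : Efin X) (x y : X) : |f.1 x - f.1 y| ≤ dist x y := by
  obtain ⟨n, a, r, _, hf⟩ := f.2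
  rw [hf, hf]; exact Fmin_lip a r x y

theorem Efin.low (f : Efin X) (x y : X) : dist x y ≤ f.1 x + f.1 y := by
  obtain ⟨n, a, r, hl, hf⟩ := f.2
  rw [hf, hf]; exact Fmin_low a r hl x y

theorem Efin.nonneg (f : Efin X) (x : X) : 0 ≤ f.1 x := by
  have := f.low x x; rw [dist_self] at this; linarith

theorem Efin.bdd (f g : Efin X) (p : X) (x : X) : |f.1 x - g.1 x| ≤ f.1 p + g.1 p := by
  have h1 := f.lip x p
  have h2 := g.low p x
  have h3 := g.lip x p
  have h4 := f.low p x
  rw [abs_sub_le_iff] at *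
  have hd : dist x p = dist p x := dist_comm x p
  exact ⟨by linarith [h1.1, h3.2, h2], by linarith [h3.1, h1.2, h4]⟩

noncomputable instance Efin.instDist [Nonempty X] : Dist (Efin X) :=
  ⟨fun f g => sSup (Set.range fun x => |f.1 x - g.1 x|)⟩

theorem Efin.dist_def [Nonempty X] (f g : Efin X) :
    dist f g = sSup (Set.range fun x => |f.1 x - g.1 x|) := rfl

theorem Efin.bddAbove [Nonempty X] (f g : Efin X) :
    BddAbove (Set.range fun x => |f.1 x - g.1 x|) := by
  inhabit X
  exact ⟨f.1 default + g.1 default, by rintro y ⟨x, rfl⟩; exact Efin.bdd f g default x⟩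

theorem Efin.le_dist [Nonempty X] (f g : Efin X) (x : X) : |f.1 x - g.1 x| ≤ dist f g :=
  le_csSup (Efin.bddAbove f g) ⟨x, rfl⟩

theorem Efin.dist_le [Nonempty X] (f g : Efin X) {C : ℝ} (hC : 0 ≤ C)
    (h : ∀ x, |f.1 x - g.1 x| ≤ C) : dist f g ≤ C :=
  Real.sSup_le (by rintro y ⟨x, rfl⟩; exact h x) hC

noncomputable instance Efin.instMetricSpace [Nonempty X] : MetricSpace (Efin X) where
  dist := fun f g => dist f g
  dist_self f := by
    refine le_antisymm (Efin.dist_le f f le_rfl (fun x => by simp)) ?_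
    inhabit X
    have := Efin.le_dist f f default
    simpa using this.trans_eq rfl |>.trans le_rfl
  dist_comm f g := by
    simp only [Efin.dist_def]
    congr 1; ext y
    constructor <;> rintro ⟨x, rfl⟩
    · exact ⟨x, by simp [abs_sub_comm]⟩
    · exact ⟨x, by simp [abs_sub_comm]⟩
  dist_triangle f g h := by
    have h0g : (0:ℝ) ≤ dist f g := by
      inhabit X
      exact le_trans (abs_nonneg _) (Efin.le_dist f g default)
    have h0h : (0:ℝ) ≤ dist g h := by
      inhabit X
      exact le_trans (abs_nonneg _) (Efin.le_dist g h default)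
    refine Efin.dist_le f h (by linarith) (fun x => ?_)
    calc |f.1 x - h.1 x| ≤ |f.1 x - g.1 x| + |g.1 x - h.1 x| := abs_sub_le _ _ _
    _ ≤ dist f g + dist g h := add_le_add (Efin.le_dist f g x) (Efin.le_dist g h x)
  eq_of_dist_eq_zero := by
    intro f g hfg
    apply Subtype.ext; funext x
    have := Efin.le_dist f g x
    rw [hfg] at this
    have := abs_nonpos_iff.1 this
    exact sub_eq_zero.1 this

end Efin

section EfinMore

variable {X : Type} [MetricSpace X] [Nonempty X]

/-- Kuratowski-type embedding into `Efin`. -/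
noncomputable def Efin.emb (x : X) : Efin X :=
  ⟨fun y => dist x y, 0, fun _ => x, fun _ => 0, by simp,
    fun y => by
      simp only [Fmin]
      rw [Finset.inf'_const]
      simp⟩

omit [Nonempty X] in
@[simp] theorem Efin.emb_apply (x y : X) : (Efin.emb x).1 y = dist x y := rfl

instance : Nonempty (Efin X) := ⟨Efin.emb (Classical.arbitrary X)⟩

theorem Efin.emb_isometry : Isometry (Efin.emb : X → Efin X) := by
  refine Isometry.of_dist_eq fun x y => ?_
  refine le_antisymm ?_ ?_
  · refine Efin.dist_le _ _ dist_nonneg fun z => ?_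
    rw [abs_sub_le_iff]
    constructor
    · simp only [Efin.emb_apply]
      linarith [dist_triangle x y z]
    · simp only [Efin.emb_apply]
      rw [dist_comm x y]
      linarith [dist_triangle y x z]
  · have := Efin.le_dist (Efin.emb x) (Efin.emb y) y
    simp only [Efin.emb_apply, dist_self] at this
    rw [sub_zero, abs_of_nonneg dist_nonneg] at this
    exact this

/-- The canonical realization of a Katětov tuple in `Efin X`. -/
noncomputable def Efin.real {n : ℕ} (a : Fin (n+1) → X) (r : Fin (n+1) → ℝ)
    (h : ∀ i j, dist (a i) (a j) ≤ r i + r j) : Efin X :=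
  ⟨Fmin a r, n, a, r, h, fun _ => rfl⟩

theorem Efin.dist_real_emb {n : ℕ} (a : Fin (n+1) → X) (r : Fin (n+1) → ℝ)
    (hkat : KatTuple a r) (j : Fin (n+1)) :
    dist (Efin.real a r hkat.2) (Efin.emb (a j)) = r j := by
  have hval : (Efin.real a r hkat.2).1 (a j) = r j := Fmin_at a r hkat j
  refine le_antisymm ?_ ?_
  · refine Efin.dist_le _ _ (hkat.nonneg j) fun x => ?_
    have h1 : (Efin.real a r hkat.2).1 x - dist (a j) x ≤ r j := by
      have := Fmin_lip a r x (a j)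
      rw [abs_sub_le_iff] at this
      have := this.1
      rw [dist_comm x (a j)] at this
      simp only [Efin.real] at *
      linarith [hval]
    have h2 : dist (a j) x - (Efin.real a r hkat.2).1 x ≤ r j := by
      have := Fmin_low a r hkat.2 (a j) x
      simp only [Efin.real] at *
      linarith [hval]
    rw [abs_sub_le_iff]
    exact ⟨by simpa using h1, by simpa using h2⟩
  · have := Efin.le_dist (Efin.real a r hkat.2) (Efin.emb (a j)) (a j)
    simp only [Efin.emb_apply, dist_self] at this
    rw [hval, sub_zero] at this
    exact le_trans (le_abs_self _) this

end EfinMore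

section EfinSep

variable {X : Type} [MetricSpace X] [Nonempty X]

instance Efin.separable [SeparableSpace X] : SeparableSpace (Efin X) := by
  obtain ⟨D, Dcnt, Ddense⟩ := TopologicalSpace.exists_countable_dense X
  haveI : Countable D := Dcnt.to_subtype
  set μ : (Σ n : ℕ, (Fin (n+1) → D) × (Fin (n+1) → ℚ)) → (X → ℝ) :=
    fun p => Fmin (fun i => ((p.2.1 i : X))) (fun i => ((p.2.2 i : ℝ))) with hμ
  set T : Set (Efin X) := Subtype.val ⁻¹' (Set.range μ) with hT
  refine ⟨⟨T, (Set.countable_range μ).preimage Subtype.val_injective, ?_⟩⟩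
  rw [Metric.dense_iff]
  intro f ε hε
  obtain ⟨n, a, r, hlow, hf⟩ := f.2
  set δ := ε/4 with hδ
  have hδ0 : 0 < δ := by positivity
  have hd : ∀ i, ∃ b ∈ D, dist (a i) b < δ := fun i =>
    Metric.mem_closure_iff.1 (Ddense.closure_eq ▸ Set.mem_univ (a i) : a i ∈ closure D) δ hδ0
  choose d hdD hdlt using hd
  have hq : ∀ i : Fin (n+1), ∃ q : ℚ, r i + δ < q ∧ (q:ℝ) < r i + 2*δ := fun i =>
    exists_rat_btwn (by linarith)
  choose q hq1 hq2 using hq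
  have hlow' : ∀ i j, dist (d i) (d j) ≤ (q i : ℝ) + (q j : ℝ) := by
    intro i j
    have t1 : dist (d i) (d j) ≤ dist (d i) (a i) + dist (a i) (a j) + dist (a j) (d j) :=
      dist_triangle4 _ _ _ _
    have := hlow i j
    have := hdlt i
    have := hdlt j
    rw [dist_comm (d i) (a i)] at t1
    linarith [hq1 i, hq1 j]
  set g : Efin X := ⟨Fmin d (fun i => (q i : ℝ)), n, d, _, hlow', fun _ => rfl⟩ with hg
  have hdistfg : dist f g ≤ 3*δ := by
    refine Efin.dist_le f g (by linarith) fun x => ?_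
    rw [abs_sub_le_iff]
    constructor
    · -- f x ≤ g x + 3δ (in fact ≤ g x)
      obtain ⟨i, hi⟩ := Fmin_exists d (fun i => (q i : ℝ)) x
      have h1 : f.1 x ≤ r i + dist (a i) x := hf x ▸ Fmin_le a r x i
      have h2 : dist (a i) x ≤ dist (a i) (d i) + dist (d i) x := dist_triangle _ _ _
      have : g.1 x = (q i : ℝ) + dist (d i) x := hi
      linarith [hq1 i, hdlt i]
    · -- g x ≤ f x + 3δ
      obtain ⟨i, hi⟩ := Fmin_exists a r x
      have h1 : g.1 x ≤ (q i : ℝ) + dist (d i) x := Fmin_le d _ x i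
      have h2 : dist (d i) x ≤ dist (d i) (a i) + dist (a i) x := dist_triangle _ _ _
      rw [dist_comm (d i) (a i)] at h2
      have : f.1 x = r i + dist (a i) x := hf x ▸ hi
      linarith [hq2 i, hdlt i]
  refine ⟨g, ?_, ?_⟩
  · rw [Metric.mem_ball, dist_comm]
    calc dist f g ≤ 3*δ := hdistfg
    _ < ε := by rw [hδ]; linarith
  · show g.1 ∈ Set.range μ
    exact ⟨⟨n, fun i => ⟨d i, hdD i⟩, q⟩, rfl⟩

end EfinSep

section Tower

/-- Bundled nonempty separable metric space. -/
structure PolishPt where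
  α : Type
  [m : MetricSpace α]
  [ne : Nonempty α]
  [sep : SeparableSpace α]

attribute [instance] PolishPt.m PolishPt.ne PolishPt.sep

noncomputable def PolishPt.step (P : PolishPt) : PolishPt := ⟨Efin P.α⟩

noncomputable def tower : ℕ → PolishPt := fun n => Nat.rec ⟨ℝ⟩ (fun _ P => P.step) n

abbrev TX (n : ℕ) : Type := (tower n).α

noncomputable def towf (n : ℕ) : TX n → TX (n+1) := (Efin.emb : TX n → Efin (TX n))

theorem towf_isometry (n : ℕ) : Isometry (towf n) := Efin.emb_isometry

/-- The countable inductive limit. -/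
noncomputable def UL : Type := Metric.InductiveLimit towf_isometry

noncomputable instance : MetricSpace UL :=
  inferInstanceAs (MetricSpace (Metric.InductiveLimit towf_isometry))

noncomputable def toL (n : ℕ) : TX n → UL := Metric.toInductiveLimit towf_isometry n

theorem toL_isometry (n : ℕ) : Isometry (toL n) := Metric.toInductiveLimit_isometry _ n

theorem toL_commute (n : ℕ) (x : TX n) : toL (n+1) (towf n x) = toL n x :=
  congrFun (Metric.toInductiveLimit_commute towf_isometry n) x

theorem toL_surj (z : UL) : ∃ (n : ℕ) (x : TX n), toL n x = z := by
  obtain ⟨⟨n, x⟩, hx⟩ := Quotient.exists_rep z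
  exact ⟨n, x, hx⟩

instance : Nonempty UL := ⟨toL 0 (Classical.arbitrary _)⟩

/-- push a point up the tower -/
noncomputable def liftT {m M : ℕ} (h : m ≤ M) : TX m → TX M := fun x =>
  Nat.leRecOn h (fun {k} => towf k) x

theorem toL_liftT {m M : ℕ} (h : m ≤ M) (x : TX m) : toL M (liftT h x) = toL m x := by
  induction M, h using Nat.le_induction with
  | base => rw [liftT, Nat.leRecOn_self]
  | succ M hm ih =>
    have : liftT (Nat.le_succ_of_le hm) x = towf M (liftT hm x) := Nat.leRecOn_succ hm x
    rw [liftT] at this ⊢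
    rw [this, toL_commute]
    exact ih

end Tower

section ULprops

open Set in
instance : SeparableSpace UL := by
  rw [← TopologicalSpace.isSeparable_univ_iff]
  have : (Set.univ : Set UL) = ⋃ n, Set.range (toL n) := by
    ext z
    simp only [Set.mem_univ, Set.mem_iUnion, Set.mem_range, true_iff]
    obtain ⟨n, x, hx⟩ := toL_surj z
    exact ⟨n, x, hx⟩
  rw [this]
  exact TopologicalSpace.isSeparable_iUnion.2
    (fun n => TopologicalSpace.isSeparable_range (toL_isometry n).continuous)

/-- exact realization of Katětov tuples in the inductive limit -/
theorem UL_ext : ExtProp UL := by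
  rintro n u r hkat
  cases n with
  | zero => exact ⟨Classical.arbitrary UL, fun i => i.elim0⟩
  | succ n =>
    have h1 : ∀ i, ∃ (m : ℕ) (x : TX m), toL m x = u i := fun i => toL_surj (u i)
    choose m v hv using h1
    set M := Finset.univ.sup m with hM
    have hmM : ∀ i, m i ≤ M := fun i => Finset.le_sup (Finset.mem_univ i)
    set w : Fin (n+1) → TX M := fun i => liftT (hmM i) (v i) with hw
    have hwU : ∀ i, toL M (w i) = u i := fun i => by rw [hw]; rw [toL_liftT, hv]
    have hdw : ∀ i j, dist (w i) (w j) = dist (u i) (u j) := fun i j => by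
      rw [← hwU i, ← hwU j, (toL_isometry M).dist_eq]
    have hlow : ∀ i j, dist (w i) (w j) ≤ r i + r j := fun i j =>
      (hdw i j).symm ▸ (hdw i j ▸ (hdw i j ▸ hkat.2 i j))
    refine ⟨toL (M+1) (Efin.real w r hlow), fun i => ?_⟩
    have : (toL (M+1)) (towf M (w i)) = u i := by rw [toL_commute]; exact hwU i
    rw [← this]; refine ((toL_isometry (M+1)).dist_eq _ _).trans ?_
    have : KatTuple w r := ⟨fun i j => by rw [hdw]; exact hkat.1 i j, hlow⟩
    exact Efin.dist_real_emb w r this i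

end ULprops

section ApproxExact

variable {U : Type} [MetricSpace U]

theorem approx_of_dense_exact {s : Set U} (hd : Dense s)
    (hex : ∀ (n : ℕ) (v : Fin n → U) (r : Fin n → ℝ), (∀ i, v i ∈ s) → KatTuple v r →
      ∃ z, ∀ i, dist z (v i) = r i) :
    ∀ (n : ℕ) (u : Fin n → U) (r : Fin n → ℝ), KatTuple u r → ∀ ε > 0,
      ∃ z, ∀ i, |dist z (u i) - r i| ≤ ε := by
  intro n u r hkat ε hε
  cases n with
  | zero =>
    obtain ⟨z, _⟩ := hex 0 (fun i => i.elim0) (fun i => i.elim0) (fun i => i.elim0)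
      ⟨fun i => i.elim0, fun i => i.elim0⟩
    exact ⟨z, fun i => i.elim0⟩
  | succ n =>
    set δ := ε/3 with hδ
    have hδ0 : 0 < δ := by positivity
    have hv : ∀ i, ∃ b ∈ s, dist (u i) b < δ := fun i =>
      Metric.mem_closure_iff.1 (hd.closure_eq ▸ Set.mem_univ (u i) : u i ∈ closure s) δ hδ0
    choose v hvs hvlt using hv
    set t : Fin (n+1) → ℝ := fun j => Fmin u r (v j) + δ with ht
    have hkat' : KatTuple v t := by
      constructor
      · intro i j
        have := Fmin_lip u r (v i) (v j)
        simpa [ht, add_sub_add_right_eq_sub] using this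
      · intro i j
        have := Fmin_low u r hkat.2 (v i) (v j)
        simp only [ht]
        linarith
    obtain ⟨z, hz⟩ := hex (n+1) v t hvs hkat'
    refine ⟨z, fun j => ?_⟩
    have h1 : |Fmin u r (v j) - r j| ≤ dist (u j) (v j) := by
      have := Fmin_lip u r (v j) (u j)
      rw [Fmin_at u r hkat j] at this
      rw [dist_comm (u j) (v j)]
      exact this
    have h2 : dist z (u j) ≤ dist z (v j) + dist (v j) (u j) := dist_triangle _ _ _
    have h3 : dist z (v j) ≤ dist z (u j) + dist (u j) (v j) := dist_triangle _ _ _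
    have h4 := hz j
    rw [abs_sub_le_iff] at h1 ⊢
    have hc : dist (v j) (u j) = dist (u j) (v j) := dist_comm _ _
    constructor
    · rw [h4, ht] at h2; simp only at h2; linarith [hvlt j, h1.1, h1.2]
    · rw [h4, ht] at h3; simp only at h3; linarith [hvlt j, h1.1, h1.2]

theorem ext_of_approx [CompleteSpace U] [Nonempty U]
    (ha : ∀ (n : ℕ) (u : Fin n → U) (r : Fin n → ℝ), KatTuple u r → ∀ ε > 0,
      ∃ z, ∀ i, |dist z (u i) - r i| ≤ ε) : ExtProp U := by
  intro n u r hkat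
  cases n with
  | zero => exact ⟨Classical.arbitrary U, fun i => i.elim0⟩
  | succ n =>
  set ε : ℕ → ℝ := fun k => (1/2)^k with hε
  have hε0 : ∀ k, 0 < ε k := fun k => by positivity
  set inv : ℕ → U → Prop := fun k z => ∀ i, |dist z (u i) - r i| ≤ ε k with hinvdef
  have hstep : ∀ (k : ℕ) (z : U), ∃ z' : U,
      inv k z → (inv (k+1) z' ∧ dist z' z ≤ ε k + ε (k+1)) := by
    intro k z
    by_cases hz : inv k z
    · set e : ℝ := Finset.univ.sup' ⟨0, Finset.mem_univ 0⟩ (fun i => |dist z (u i) - r i|)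
        with he
      have he_le : e ≤ ε k := Finset.sup'_le _ _ (fun i _ => hz i)
      have he_ge : ∀ i, |dist z (u i) - r i| ≤ e := fun i => by
        rw [he]; exact Finset.le_sup' (fun i => |dist z (u i) - r i|) (Finset.mem_univ i)
      have he0 : 0 ≤ e := le_trans (abs_nonneg _) (he_ge 0)
      -- extended tuple
      set u' : Fin (n+2) → U := Fin.snoc u z with hu'
      set r' : Fin (n+2) → ℝ := Fin.snoc r e with hr'
      have hmix : ∀ i : Fin (n+1), |r i - e| ≤ dist (u i) z ∧ dist (u i) z ≤ r i + e := by
        intro i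
        have hi := he_ge i
        rw [abs_sub_le_iff] at hi
        have hdc : dist (u i) z = dist z (u i) := dist_comm _ _
        refine ⟨?_, by rw [hdc]; linarith [hi.2]⟩
        rw [abs_sub_le_iff]
        refine ⟨by rw [hdc]; linarith [hi.2], ?_⟩
        -- e - r i ≤ dist (u i) z
        obtain ⟨j, _, hj⟩ := Finset.exists_mem_eq_sup' (⟨0, Finset.mem_univ 0⟩ :
          Finset.univ.Nonempty) (fun i => |dist z (u i) - r i|)
        rw [← he] at hj
        rcases abs_cases (dist z (u j) - r j) with ⟨habs, _⟩ | ⟨habs, _⟩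
        · have : dist z (u j) ≤ dist z (u i) + dist (u i) (u j) := dist_triangle _ _ _
          have h2 := hkat.2 i j
          rw [hdc]
          rw [hj, habs]
          linarith
        · have h1 := hkat.1 j i
          rw [abs_sub_le_iff] at h1
          have : dist (u i) (u j) ≤ dist (u i) z + dist z (u j) := dist_triangle _ _ _
          have hji : dist (u j) (u i) = dist (u i) (u j) := dist_comm _ _
          rw [hdc, hj, habs]
          linarith [h1.1, dist_nonneg (x := z) (y := u j)]
      have hkat' : KatTuple u' r' := by
        constructor
        · intro i j
          refine Fin.lastCases ?_ (fun i' => ?_) i <;>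
            [refine Fin.lastCases ?_ (fun j' => ?_) j; refine Fin.lastCases ?_ (fun j' => ?_) j]
          all_goals simp only [hu', hr', Fin.snoc_last, Fin.snoc_castSucc]
          · simp
          · rw [abs_sub_comm, dist_comm]; exact (hmix j').1
          · exact (hmix i').1
          · exact hkat.1 i' j'
        · intro i j
          refine Fin.lastCases ?_ (fun i' => ?_) i <;>
            [refine Fin.lastCases ?_ (fun j' => ?_) j; refine Fin.lastCases ?_ (fun j' => ?_) j]
          all_goals simp only [hu', hr', Fin.snoc_last, Fin.snoc_castSucc]
          · simp [he0]
          · rw [dist_comm]; linarith [(hmix j').2]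
          · exact (hmix i').2
          · exact hkat.2 i' j'
      obtain ⟨z', hz'⟩ := ha (n+2) u' r' hkat' (ε (k+1)) (hε0 (k+1))
      refine ⟨z', fun _ => ⟨fun i => ?_, ?_⟩⟩
      · have := hz' i.castSucc
        simpa [hu', hr', Fin.snoc_castSucc] using this
      · have := hz' (Fin.last (n+1))
        simp only [hu', hr', Fin.snoc_last] at this
        rw [abs_sub_le_iff] at this
        linarith [this.1, he_le]
    · exact ⟨z, fun h => absurd h hz⟩
  choose F hF using hstep
  obtain ⟨z0, hz0⟩ := ha (n+1) u r hkat (ε 0) (hε0 0)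
  set Z : ℕ → U := fun k => Nat.rec z0 F k with hZ
  have hZinv : ∀ k, inv k (Z k) := by
    intro k
    induction k with
    | zero => exact hz0
    | succ k ih => exact (hF k (Z k) ih).1
  have hZd : ∀ k, dist (Z k) (Z (k+1)) ≤ 2 * (1/2)^k := by
    intro k
    have := (hF k (Z k) (hZinv k)).2
    rw [dist_comm]
    have : ε k + ε (k+1) ≤ 2 * (1/2)^k := by
      simp only [hε]
      rw [pow_succ]
      nlinarith [pow_pos (by norm_num : (0:ℝ) < 1/2) k]
    linarith [(hF k (Z k) (hZinv k)).2]
  have hcauchy : CauchySeq Z :=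
    cauchySeq_of_le_geometric (1/2) 2 (by norm_num) hZd
  obtain ⟨z, hz⟩ := cauchySeq_tendsto_of_complete hcauchy
  refine ⟨z, fun i => ?_⟩
  have h1 : Filter.Tendsto (fun k => dist (Z k) (u i)) Filter.atTop (nhds (dist z (u i))) :=
    hz.dist tendsto_const_nhds
  have h2 : Filter.Tendsto (fun k => dist (Z k) (u i)) Filter.atTop (nhds (r i)) := by
    rw [tendsto_iff_dist_tendsto_zero]
    have hb : ∀ k, dist (dist (Z k) (u i)) (r i) ≤ (1/2)^k := by
      intro k
      rw [Real.dist_eq]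
      exact hZinv k i
    refine squeeze_zero (fun k => dist_nonneg) hb ?_
    exact tendsto_pow_atTop_nhds_zero_of_lt_one (by norm_num) (by norm_num)
  exact tendsto_nhds_unique h1 h2

end ApproxExact

section U0sec

/-- The Urysohn space: completion of the inductive limit. -/
noncomputable def U0 : Type := UniformSpace.Completion UL

noncomputable instance : MetricSpace U0 :=
  inferInstanceAs (MetricSpace (UniformSpace.Completion UL))

instance : CompleteSpace U0 :=
  inferInstanceAs (CompleteSpace (UniformSpace.Completion UL))

instance : SeparableSpace U0 :=
  inferInstanceAs (SeparableSpace (UniformSpace.Completion UL))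

noncomputable def toU0 : UL → U0 := (UniformSpace.Completion.coe' : UL → UniformSpace.Completion UL)

instance : Nonempty U0 := ⟨toU0 (Classical.arbitrary UL)⟩

theorem toU0_isometry : Isometry toU0 := UniformSpace.Completion.coe_isometry (α := UL)

theorem toU0_dense : Dense (Set.range toU0) := UniformSpace.Completion.denseRange_coe (α := UL)

theorem U0_ext : ExtProp U0 := by
  refine ext_of_approx (approx_of_dense_exact toU0_dense ?_)
  intro n v r hvs hkat
  choose w hw using hvs
  have hkw : KatTuple w r := by
    constructor
    · intro i j
      have := hkat.1 i j
      rwa [← hw i, ← hw j, toU0_isometry.dist_eq] at this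
    · intro i j
      have := hkat.2 i j
      rwa [← hw i, ← hw j, toU0_isometry.dist_eq] at this
  obtain ⟨z, hz⟩ := UL_ext n w r hkw
  refine ⟨toU0 z, fun i => ?_⟩
  rw [← hw i, toU0_isometry.dist_eq]
  exact hz i

end U0sec

section Extend

variable {X U : Type} [MetricSpace X] [MetricSpace U]

theorem extend_isometry [CompleteSpace U] (x : ℕ → X) (hx : DenseRange x) (u : ℕ → U)
    (hmatch : ∀ m n, dist (u m) (u n) = dist (x m) (x n)) :
    ∃ f : X → U, Isometry f ∧ ∀ n, f (x n) = u n := by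
  have hsel : ∀ (p : X) (k : ℕ), ∃ n, dist p (x n) < (1/2)^k := fun p k =>
    Metric.denseRange_iff.1 hx p ((1/2)^k) (by positivity)
  choose sel hsel using hsel
  set seq : X → ℕ → U := fun p k => u (sel p k) with hseq
  have hhalf : Filter.Tendsto (fun k : ℕ => ((1:ℝ)/2)^k) Filter.atTop (nhds 0) :=
    tendsto_pow_atTop_nhds_zero_of_lt_one (by norm_num) (by norm_num)
  have hxp : ∀ p : X, Filter.Tendsto (fun k => x (sel p k)) Filter.atTop (nhds p) := by
    intro p
    rw [tendsto_iff_dist_tendsto_zero]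
    refine squeeze_zero (fun k => dist_nonneg) (fun k => ?_) hhalf
    rw [dist_comm]
    exact le_of_lt (hsel p k)
  have hcauchy : ∀ p : X, CauchySeq (seq p) := by
    intro p
    rw [Metric.cauchySeq_iff]
    intro ε hε
    obtain ⟨K, hK⟩ := exists_pow_lt_of_lt_one (half_pos hε) (by norm_num : (1:ℝ)/2 < 1)
    refine ⟨K, fun m hm k hk => ?_⟩
    have h1 : dist (seq p m) (seq p k) = dist (x (sel p m)) (x (sel p k)) := hmatch _ _
    have h2 : dist (x (sel p m)) (x (sel p k)) ≤ dist p (x (sel p m)) + dist p (x (sel p k)) :=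
      dist_triangle_left _ _ _
    have h3 : ((1:ℝ)/2)^m ≤ (1/2)^K := pow_le_pow_of_le_one (by norm_num) (by norm_num) hm
    have h4 : ((1:ℝ)/2)^k ≤ (1/2)^K := pow_le_pow_of_le_one (by norm_num) (by norm_num) hk
    have := hsel p m
    have := hsel p k
    rw [h1]
    linarith
  have hlim : ∀ p : X, ∃ y : U, Filter.Tendsto (seq p) Filter.atTop (nhds y) := fun p =>
    cauchySeq_tendsto_of_complete (hcauchy p)
  choose f hf using hlim
  have hfx : ∀ n, f (x n) = u n := by
    intro n
    refine tendsto_nhds_unique (hf (x n)) ?_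
    rw [tendsto_iff_dist_tendsto_zero]
    refine squeeze_zero (fun k => dist_nonneg) (fun k => ?_) hhalf
    have : dist (seq (x n) k) (u n) = dist (x (sel (x n) k)) (x n) := hmatch _ _
    rw [this, dist_comm]
    exact le_of_lt (hsel (x n) k)
  refine ⟨f, Isometry.of_dist_eq fun p q => ?_, hfx⟩
  have h1 : Filter.Tendsto (fun k => dist (seq p k) (seq q k)) Filter.atTop
      (nhds (dist (f p) (f q))) := (hf p).dist (hf q)
  have h2 : Filter.Tendsto (fun k => dist (seq p k) (seq q k)) Filter.atTop
      (nhds (dist p q)) := by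
    have : (fun k => dist (seq p k) (seq q k)) =
        fun k => dist (x (sel p k)) (x (sel q k)) := by
      funext k; exact hmatch _ _
    rw [this]
    exact (hxp p).dist (hxp q)
  exact tendsto_nhds_unique h1 h2

end Extend

section Embed

theorem embed_of_extProp {U : Type} [MetricSpace U] [CompleteSpace U] [Nonempty U]
    (hext : ExtProp U) (X : Type) [MetricSpace X] [SeparableSpace X] :
    ∃ f : X → U, Isometry f := by
  rcases isEmpty_or_nonempty X with hX | hX
  · exact ⟨fun p => (hX.false p).elim, fun p => (hX.false p).elim⟩
  obtain ⟨x, hx⟩ := TopologicalSpace.exists_dense_seq X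
  set S : ℕ → Type := fun k => {v : Fin k → U // ∀ i j : Fin k,
    dist (v i) (v j) = dist (x i.1) (x j.1)} with hS
  have hkat : ∀ (k : ℕ) (p : S k), KatTuple p.1 (fun i => dist (x k) (x i.1)) := by
    intro k p
    constructor
    · intro i j
      dsimp only
      rw [p.2 i j, dist_comm (x k) (x i.1), dist_comm (x k) (x j.1)]
      exact abs_dist_sub_le _ _ _
    · intro i j
      dsimp only
      rw [p.2 i j, dist_comm (x k) (x i.1)]
      exact dist_triangle _ _ _
  have hpick : ∀ (k : ℕ) (p : S k), ∃ z : U, ∀ i : Fin k,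
      dist z (p.1 i) = dist (x k) (x i.1) := fun k p =>
    hext k p.1 (fun i => dist (x k) (x i.1)) (hkat k p)
  choose pick hpickspec using hpick
  let F : ∀ k, S k → S (k+1) := fun k p =>
    ⟨Fin.snoc p.1 (pick k p), by
      intro i j
      refine Fin.lastCases ?_ (fun i' => ?_) i <;>
        [refine Fin.lastCases ?_ (fun j' => ?_) j; refine Fin.lastCases ?_ (fun j' => ?_) j]
      · simp [Fin.snoc_last]
      · simp only [Fin.snoc_last, Fin.snoc_castSucc]
        rw [hpickspec k p j']
        simp [Fin.coe_castSucc]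
      · simp only [Fin.snoc_last, Fin.snoc_castSucc]
        rw [dist_comm, hpickspec k p i', dist_comm]
        simp [Fin.coe_castSucc]
      · simp only [Fin.snoc_castSucc]
        rw [p.2 i' j']
        simp [Fin.coe_castSucc]⟩
  let Z : ∀ k, S k := fun k => Nat.rec ⟨fun i => i.elim0, fun i _ => i.elim0⟩ F k
  let u : ℕ → U := fun k => (Z (k+1)).1 (Fin.last k)
  have hZsucc : ∀ m, (Z (m+1)).1 = Fin.snoc (Z m).1 (pick m (Z m)) := fun m => rfl
  have hco : ∀ (m k : ℕ) (h : k < m), (Z m).1 ⟨k, h⟩ = u k := by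
    intro m
    induction m with
    | zero => intro k h; omega
    | succ m ih =>
      intro k h
      rcases Nat.lt_succ_iff_lt_or_eq.1 h with h' | rfl
      · have e1 : (⟨k, h⟩ : Fin (m+1)) = Fin.castSucc ⟨k, h'⟩ := rfl
        have e2 : (Z (m+1)).1 ⟨k, h⟩ = (Z m).1 ⟨k, h'⟩ := by
          rw [hZsucc m, e1]
          exact Fin.snoc_castSucc _ _ _
        rw [e2, ih k h']
      · rfl
  have hmatchu : ∀ m k : ℕ, dist (u m) (u k) = dist (x m) (x k) := by
    intro m k
    set M := max m k + 1 with hM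
    have hm : m < M := by omega
    have hk : k < M := by omega
    rw [← hco M m hm, ← hco M k hk]
    exact (Z M).2 ⟨m, hm⟩ ⟨k, hk⟩
  obtain ⟨f, hfiso, _⟩ := extend_isometry x hx u hmatchu
  exact ⟨f, hfiso⟩

end Embed

section BackForth

variable {U₁ U₂ : Type} [MetricSpace U₁] [MetricSpace U₂]

theorem add_point (h₂ : ExtProp U₂) {k : ℕ} (v : Fin k → U₁) (w : Fin k → U₂)
    (hm : ∀ i j, dist (v i) (v j) = dist (w i) (w j)) (ξ : U₁) :
    ∃ ζ : U₂, ∀ i, dist ζ (w i) = dist ξ (v i) := by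
  refine h₂ k w (fun i => dist ξ (v i)) ⟨fun i j => ?_, fun i j => ?_⟩
  · dsimp only
    rw [← hm i j, dist_comm ξ (v i), dist_comm ξ (v j)]
    exact abs_dist_sub_le _ _ _
  · dsimp only
    rw [← hm i j, dist_comm ξ (v i)]
    exact dist_triangle _ _ _

theorem back_forth [CompleteSpace U₁] [CompleteSpace U₂] [Nonempty U₁] [Nonempty U₂]
    [SeparableSpace U₁] [SeparableSpace U₂]
    (h₁ : ExtProp U₁) (h₂ : ExtProp U₂) {N : ℕ} (a : Fin N → U₁) (b : Fin N → U₂)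
    (hab : ∀ i j, dist (a i) (a j) = dist (b i) (b j)) :
    ∃ e : U₁ ≃ᵢ U₂, ∀ i, e (a i) = b i := by
  obtain ⟨pp, hpp⟩ := TopologicalSpace.exists_dense_seq U₁
  obtain ⟨qq, hqq⟩ := TopologicalSpace.exists_dense_seq U₂
  have haddL : ∀ (k : ℕ) (v : Fin k → U₁) (w : Fin k → U₂) (ξ : U₁), ∃ ζ : U₂,
      (∀ i j, dist (v i) (v j) = dist (w i) (w j)) →
      ∀ i j : Fin (k+1), dist ((Fin.snoc v ξ : Fin (k+1) → U₁) i) ((Fin.snoc v ξ : Fin (k+1) → U₁) j)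
        = dist ((Fin.snoc w ζ : Fin (k+1) → U₂) i) ((Fin.snoc w ζ : Fin (k+1) → U₂) j) := by
    intro k v w ξ
    by_cases hm : ∀ i j, dist (v i) (v j) = dist (w i) (w j)
    · obtain ⟨ζ, hζ⟩ := add_point h₂ v w hm ξ
      refine ⟨ζ, fun _ i j => ?_⟩
      refine Fin.lastCases ?_ (fun i' => ?_) i <;>
        [refine Fin.lastCases ?_ (fun j' => ?_) j; refine Fin.lastCases ?_ (fun j' => ?_) j]
      · simp
      · simp only [Fin.snoc_last, Fin.snoc_castSucc]
        exact (hζ j').symm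
      · simp only [Fin.snoc_last, Fin.snoc_castSucc]
        rw [dist_comm (v i') ξ, dist_comm (w i') ζ]
        exact (hζ i').symm
      · simp only [Fin.snoc_castSucc]
        exact hm i' j'
    · exact ⟨Classical.arbitrary U₂, fun h => absurd h hm⟩
  have haddR : ∀ (k : ℕ) (v : Fin k → U₁) (w : Fin k → U₂) (η : U₂), ∃ ζ : U₁,
      (∀ i j, dist (v i) (v j) = dist (w i) (w j)) →
      ∀ i j : Fin (k+1), dist ((Fin.snoc v ζ : Fin (k+1) → U₁) i) ((Fin.snoc v ζ : Fin (k+1) → U₁) j)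
        = dist ((Fin.snoc w η : Fin (k+1) → U₂) i) ((Fin.snoc w η : Fin (k+1) → U₂) j) := by
    intro k v w η
    by_cases hm : ∀ i j, dist (v i) (v j) = dist (w i) (w j)
    · obtain ⟨ζ, hζ⟩ := add_point h₁ w v (fun i j => (hm i j).symm) η
      refine ⟨ζ, fun _ i j => ?_⟩
      refine Fin.lastCases ?_ (fun i' => ?_) i <;>
        [refine Fin.lastCases ?_ (fun j' => ?_) j; refine Fin.lastCases ?_ (fun j' => ?_) j]
      · simp
      · simp only [Fin.snoc_last, Fin.snoc_castSucc]
        exact hζ j'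
      · simp only [Fin.snoc_last, Fin.snoc_castSucc]
        rw [dist_comm (v i') ζ, dist_comm (w i') η]
        exact hζ i'
      · simp only [Fin.snoc_castSucc]
        exact hm i' j'
    · exact ⟨Classical.arbitrary U₁, fun h => absurd h hm⟩
  choose zL hzL using haddL
  choose zR hzR using haddR
  let S : ℕ → Type := fun n => {vw : (Fin (N + 2*n) → U₁) × (Fin (N + 2*n) → U₂) //
    ∀ i j, dist (vw.1 i) (vw.1 j) = dist (vw.2 i) (vw.2 j)}
  let F : ∀ n, S n → S (n+1) := fun n p =>
    ⟨(Fin.snoc (Fin.snoc p.1.1 (pp n))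
        (zR _ (Fin.snoc p.1.1 (pp n)) (Fin.snoc p.1.2 (zL _ p.1.1 p.1.2 (pp n))) (qq n)),
      Fin.snoc (Fin.snoc p.1.2 (zL _ p.1.1 p.1.2 (pp n))) (qq n)),
      hzR _ _ _ (qq n) (hzL _ p.1.1 p.1.2 (pp n) p.2)⟩
  let Z : ∀ n, S n := fun n => Nat.rec ⟨(a, b), hab⟩ F n
  have hZ1 : ∀ n, ∃ (z2 : U₁) (z1 : U₂),
      (Z (n+1)).1.1 = Fin.snoc (Fin.snoc (Z n).1.1 (pp n)) z2
      ∧ (Z (n+1)).1.2 = Fin.snoc (Fin.snoc (Z n).1.2 z1) (qq n) :=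
    fun n => ⟨_, _, rfl, rfl⟩
  let xs : ℕ → U₁ := fun k => (Z (k+1)).1.1 ⟨k, by omega⟩
  let ys : ℕ → U₂ := fun k => (Z (k+1)).1.2 ⟨k, by omega⟩
  have hco : ∀ (n m : ℕ), n ≤ m → ∀ (i : ℕ) (hi : i < N + 2*n) (hi' : i < N + 2*m),
      (Z m).1.1 ⟨i, hi'⟩ = (Z n).1.1 ⟨i, hi⟩ ∧ (Z m).1.2 ⟨i, hi'⟩ = (Z n).1.2 ⟨i, hi⟩ := by
    intro n m hnm
    induction m, hnm using Nat.le_induction with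
    | base => intro i hi hi'; exact ⟨rfl, rfl⟩
    | succ m hm ih =>
      intro i hi hi'
      obtain ⟨z2, z1, e1, e2⟩ := hZ1 m
      have hi2 : i < N + 2*m := by omega
      have hc1 : (⟨i, hi'⟩ : Fin (N + 2*(m+1))) = Fin.castSucc (Fin.castSucc ⟨i, hi2⟩) := rfl
      constructor
      · rw [e1, hc1, Fin.snoc_castSucc, Fin.snoc_castSucc]; exact (ih i hi hi2).1
      · rw [e2, hc1, Fin.snoc_castSucc, Fin.snoc_castSucc]; exact (ih i hi hi2).2
  have hseed : ∀ i : Fin N, xs i.1 = a i ∧ ys i.1 = b i := by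
    intro i
    have hi0 : i.1 < N + 2*0 := by omega
    have h := hco 0 (i.1+1) (by omega) i.1 hi0 (by omega)
    have hia : ((⟨i.1, hi0⟩ : Fin (N + 2*0))) = i := Fin.ext rfl
    constructor
    · exact h.1.trans (by rw [hia]; rfl)
    · exact h.2.trans (by rw [hia]; rfl)
  have hxs_pos : ∀ n, xs (N + 2*n) = pp n := by
    intro n
    obtain ⟨z2, z1, e1, _⟩ := hZ1 n
    have h := (hco (n+1) (N + 2*n + 1) (by omega) (N + 2*n) (by omega) (by omega)).1
    have hx0 : xs (N + 2*n) = (Z (N + 2*n + 1)).1.1 ⟨N + 2*n, by omega⟩ := rfl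
    rw [hx0, h, e1]
    have hc : (⟨N + 2*n, (by omega : N + 2*n < N + 2*(n+1))⟩ : Fin (N + 2*(n+1)))
        = Fin.castSucc (Fin.last (N + 2*n)) := rfl
    rw [hc, Fin.snoc_castSucc]
    exact Fin.snoc_last _ _
  have hys_pos : ∀ n, ys (N + 2*n + 1) = qq n := by
    intro n
    obtain ⟨z2, z1, _, e2⟩ := hZ1 n
    have h := (hco (n+1) (N + 2*n + 2) (by omega) (N + 2*n + 1) (by omega) (by omega)).2
    have hy0 : ys (N + 2*n + 1) = (Z (N + 2*n + 2)).1.2 ⟨N + 2*n + 1, by omega⟩ := rfl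
    rw [hy0, h, e2]
    have hc : (⟨N + 2*n + 1, (by omega : N + 2*n + 1 < N + 2*(n+1))⟩ : Fin (N + 2*(n+1)))
        = Fin.last (N + 2*n + 1) := rfl
    rw [hc]
    exact Fin.snoc_last _ _
  have hmm : ∀ k l : ℕ, dist (xs k) (xs l) = dist (ys k) (ys l) := by
    intro k l
    set M := max k l + 1 with hM
    have hk : k < N + 2*M := by omega
    have hl : l < N + 2*M := by omega
    have h1 := hco (k+1) M (by omega) k (by omega) hk
    have h2 := hco (l+1) M (by omega) l (by omega) hl
    have ex1 : xs k = (Z M).1.1 ⟨k, hk⟩ := h1.1.symm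
    have ex2 : xs l = (Z M).1.1 ⟨l, hl⟩ := h2.1.symm
    have ey1 : ys k = (Z M).1.2 ⟨k, hk⟩ := h1.2.symm
    have ey2 : ys l = (Z M).1.2 ⟨l, hl⟩ := h2.2.symm
    rw [ex1, ex2, ey1, ey2]
    exact (Z M).2 ⟨k, hk⟩ ⟨l, hl⟩
  have hdx : DenseRange xs := by
    have hsub : Set.range pp ⊆ Set.range xs := by
      rintro _ ⟨n, rfl⟩; exact ⟨N + 2*n, hxs_pos n⟩
    exact Dense.mono hsub hpp
  have hdy : DenseRange ys := by
    have hsub : Set.range qq ⊆ Set.range ys := by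
      rintro _ ⟨n, rfl⟩; exact ⟨N + 2*n + 1, hys_pos n⟩
    exact Dense.mono hsub hqq
  obtain ⟨f, hfiso, hfx⟩ := extend_isometry xs hdx ys (fun m n => (hmm m n).symm)
  obtain ⟨g, hgiso, hgy⟩ := extend_isometry ys hdy xs hmm
  have hgf : g ∘ f = id := by
    refine Continuous.ext_on hdx (hgiso.continuous.comp hfiso.continuous) continuous_id ?_
    rintro _ ⟨n, rfl⟩
    simp [Function.comp, hfx, hgy]
  have hfg : f ∘ g = id := by
    refine Continuous.ext_on hdy (hfiso.continuous.comp hgiso.continuous) continuous_id ?_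
    rintro _ ⟨n, rfl⟩
    simp [Function.comp, hfx, hgy]
  refine ⟨⟨⟨f, g, fun z => congrFun hgf z, fun z => congrFun hfg z⟩, hfiso⟩, fun i => ?_⟩
  show f (a i) = b i
  rw [← (hseed i).1, hfx i.1, (hseed i).2]

end BackForth

section Urysohn

/-- auxiliary finite type -/
def AuxPt (n : ℕ) : Type := Option (Fin n)

theorem urysohn_extProp {U : Type} [MetricSpace U] (h : IsUrysohnSpace U) : ExtProp U := by
  obtain ⟨hne, hcomp, hsep, huniv, hhomog⟩ := h
  intro n u r hkat
  -- pseudometric on AuxPt n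
  let d : AuxPt n → AuxPt n → ℝ := fun x y =>
    match x, y with
    | some i, some j => dist (u i) (u j)
    | some i, none => r i
    | none, some j => r j
    | none, none => 0
  letI : PseudoMetricSpace (AuxPt n) :=
    { dist := d
      dist_self := fun x => by cases x <;> simp [d]
      dist_comm := fun x y => by
        cases x <;> cases y <;> simp [d, dist_comm]
      dist_triangle := fun x y z => by
        have habs : ∀ i j, |r i - r j| ≤ dist (u i) (u j) := hkat.1
        have hlow : ∀ i j, dist (u i) (u j) ≤ r i + r j := hkat.2
        have hnn : ∀ i, 0 ≤ r i := hkat.nonneg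
        obtain _|i := x <;> obtain _|j := y <;> obtain _|k := z
        · show (0:ℝ) ≤ 0 + 0; norm_num
        · show r k ≤ 0 + r k; simp
        · show (0:ℝ) ≤ r j + r j; linarith [hnn j]
        · show r k ≤ r j + dist (u j) (u k)
          have := habs j k; rw [abs_sub_le_iff] at this; linarith [this.2]
        · show r i ≤ r i + 0; simp
        · show dist (u i) (u k) ≤ r i + r k; exact hlow i k
        · show r i ≤ dist (u i) (u j) + r j
          have := habs i j; rw [abs_sub_le_iff] at this; linarith [this.1]
        · show dist (u i) (u k) ≤ dist (u i) (u j) + dist (u j) (u k)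
          exact dist_triangle _ _ _ }
  let Zt : Type := SeparationQuotient (AuxPt n)
  letI : Finite (AuxPt n) := inferInstanceAs (Finite (Option (Fin n)))
  haveI : Finite Zt := Finite.of_surjective _ SeparationQuotient.surjective_mk
  haveI : Countable Zt := Finite.to_countable
  haveI : CompactSpace Zt := Finite.compactSpace
  have hZcomp : CompleteSpace Zt := complete_of_compact
  have hZsep : SeparableSpace Zt := ⟨⟨Set.univ, Set.countable_univ, dense_univ⟩⟩
  obtain ⟨ψ, hψ⟩ := huniv Zt hZcomp hZsep
  have hdist : ∀ x y : AuxPt n,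
      dist (ψ (SeparationQuotient.mk x)) (ψ (SeparationQuotient.mk y)) = d x y := by
    intro x y
    rw [hψ.dist_eq, SeparationQuotient.dist_mk]
    rfl
  set A : Set U := Set.range (fun i : Fin n => ψ (SeparationQuotient.mk (some i))) with hA
  set B : Set U := Set.range u with hB
  have hAfin : A.Finite := Set.finite_range _
  have hBfin : B.Finite := Set.finite_range _
  have hAex : ∀ x : A, ∃ i, ψ (SeparationQuotient.mk (some i)) = (x : U) := fun x => x.2
  choose idx hidx using hAex
  have hkey : ∀ (x : A) (i : Fin n),
      ψ (SeparationQuotient.mk (some i)) = (x : U) → u (idx x) = u i := by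
    intro x i hx
    refine eq_of_dist_eq_zero ?_
    have h1 : dist (u (idx x)) (u i)
        = dist (ψ (SeparationQuotient.mk (some (idx x)))) (ψ (SeparationQuotient.mk (some i))) :=
      (hdist (some (idx x)) (some i)).symm
    rw [h1, hidx x, hx, dist_self]
  let φ : A → B := fun x => ⟨u (idx x), Set.mem_range_self _⟩
  have hφd : ∀ x y : A, dist ((φ x : U)) ((φ y : U)) = dist (x : U) (y : U) := by
    intro x y
    show dist (u (idx x)) (u (idx y)) = _
    have h1 : dist (u (idx x)) (u (idx y))
        = dist (ψ (SeparationQuotient.mk (some (idx x)))) (ψ (SeparationQuotient.mk (some (idx y)))) :=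
      (hdist (some (idx x)) (some (idx y))).symm
    rw [h1, hidx x, hidx y]
  have hφbij : Function.Bijective φ := by
    constructor
    · intro x y hxy
      have hv : u (idx x) = u (idx y) := congrArg Subtype.val hxy
      apply Subtype.ext
      refine eq_of_dist_eq_zero ?_
      rw [← hφd x y]
      show dist (u (idx x)) (u (idx y)) = 0
      rw [hv, dist_self]
    · rintro ⟨_, ⟨i, rfl⟩⟩
      refine ⟨⟨ψ (SeparationQuotient.mk (some i)), Set.mem_range_self i⟩, ?_⟩
      apply Subtype.ext
      show u (idx _) = u i
      exact hkey _ i rfl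
  obtain ⟨J, hJ⟩ := hhomog A B hAfin hBfin φ hφbij hφd
  refine ⟨J (ψ (SeparationQuotient.mk none)), fun i => ?_⟩
  have h2 : J (ψ (SeparationQuotient.mk (some i))) = u i := by
    have h3 := hJ ⟨ψ (SeparationQuotient.mk (some i)), Set.mem_range_self i⟩
    rw [h3]
    show u (idx _) = u i
    exact hkey _ i rfl
  rw [← h2, J.dist_eq]; refine (hdist none (some i)).trans ?_
  rfl

end Urysohn

theorem isUrysohn_U0 : IsUrysohnSpace U0 := by
  refine ⟨inferInstance, inferInstance, inferInstance, ?_, ?_⟩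
  · intro X _ hc hs
    haveI := hs
    exact embed_of_extProp U0_ext X
  · intro A B hA hB φ hbij hd
    haveI : Fintype A := hA.fintype
    let e : Fin (Fintype.card A) ≃ A := (Fintype.equivFin A).symm
    obtain ⟨J, hJ⟩ := back_forth U0_ext U0_ext (fun i => (e i : U0)) (fun i => (φ (e i) : U0))
      (fun i j => (hd (e i) (e j)).symm)
    refine ⟨J, fun x => ?_⟩
    have := hJ (e.symm x)
    rwa [Equiv.apply_symm_apply] at this

/-- (Urysohn.) There exists a nonempty complete separable metric space that is universal
and homogeneous, and it is unique up to isometry. -/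
theorem urysohn_exists_unique :
    (∃ (U : Type) (m : MetricSpace U), @IsUrysohnSpace U m) ∧
    (∀ (U₁ : Type) [MetricSpace U₁] (U₂ : Type) [MetricSpace U₂],
      IsUrysohnSpace U₁ → IsUrysohnSpace U₂ → Nonempty (U₁ ≃ᵢ U₂)) := by
  constructor
  · exact ⟨U0, inferInstance, isUrysohn_U0⟩
  · intro U₁ _ U₂ _ h1 h2
    haveI := h1.1
    haveI := h1.2.1
    haveI := h1.2.2.1
    haveI := h2.1
    haveI := h2.2.1
    haveI := h2.2.2.1
    obtain ⟨e, -⟩ := back_forth (urysohn_extProp h1) (urysohn_extProp h2)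
      (fun i : Fin 0 => i.elim0) (fun i : Fin 0 => i.elim0) (fun i _ => i.elim0)
    exact ⟨e⟩
end

section
/- Let r be a universal proper infinite distance matrix and let U_r be the metric completion of (ℕ, r). Then U_r is a complete separable metric space satisfying: (1) every complete separable metric space admits an isometric embedding into U_r; and (2) for any two finite subsets A, B ⊆ U_r and any distance-preserving bijection φ : A → B, there exists a surjective isometry J : U_r → U_r with J x = φ x for all x ∈ A. That is, U_r is the Urysohn universal space. -/
open TopologicalSpace

section Aux

variable (r : ℕ → ℕ → ℝ) (hr : IsInfDistMatrix r) (hp : IsProper r)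

noncomputable def uryι (m : ℕ) : CompletionOf r hr hp :=
  UniformSpace.Completion.coe' (α := Carrier r hr hp) m

lemma uryι_dist (i j : ℕ) : dist (uryι r hr hp i) (uryι r hr hp j) = r i j :=
  UniformSpace.Completion.dist_eq _ _

lemma uryι_dense : DenseRange (uryι r hr hp) :=
  UniformSpace.Completion.denseRange_coe (α := Carrier r hr hp)

def UryKat {n : ℕ} (p : Fin n → CompletionOf r hr hp) (a : Fin n → ℝ) : Prop :=
  ∀ i j, |a i - a j| ≤ dist (p i) (p j) ∧ dist (p i) (p j) ≤ a i + a j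

lemma exists_approx (hu : IsUniversal r) {n : ℕ} (p : Fin n → CompletionOf r hr hp)
    (a : Fin n → ℝ) (ha : UryKat r hr hp p a) {ε : ℝ} (hε : 0 < ε) :
    ∃ q : CompletionOf r hr hp, ∀ i, |dist q (p i) - a i| ≤ ε := by
  rcases Nat.eq_zero_or_pos n with hn | hn
  · subst hn; exact ⟨uryι r hr hp 0, fun i => i.elim0⟩
  haveI : Nonempty (Fin n) := ⟨⟨0, hn⟩⟩
  set δ := ε / 3 with hδ
  have hδ0 : 0 < δ := by positivity
  choose k hk using fun i => (uryι_dense r hr hp).exists_dist_lt (p i) hδ0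
  set F : CompletionOf r hr hp → ℝ :=
    fun x => Finset.univ.inf' Finset.univ_nonempty (fun i => a i + dist x (p i)) with hF
  have hF1 : ∀ i, F (p i) = a i := by
    intro i
    apply le_antisymm
    · have h := Finset.inf'_le (f := fun j => a j + dist (p i) (p j)) (Finset.mem_univ i)
      simp only [dist_self, add_zero] at h
      exact h
    · apply Finset.le_inf'
      intro j _
      have := (ha i j).1
      have h1 := abs_le.1 this
      linarith [h1.1]
  have hFle : ∀ x y, F x ≤ F y + dist x y := by
    intro x y
    obtain ⟨j, _, hj⟩ := Finset.exists_mem_eq_inf' (s := Finset.univ)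
      Finset.univ_nonempty (fun i => a i + dist y (p i))
    have h1 : F x ≤ a j + dist x (p j) :=
      Finset.inf'_le (f := fun i => a i + dist x (p i)) (Finset.mem_univ j)
    have h2 : dist x (p j) ≤ dist x y + dist y (p j) := dist_triangle _ _ _
    have : F y = a j + dist y (p j) := hj
    linarith
  have hFlip : ∀ x y, |F x - F y| ≤ dist x y := by
    intro x y
    rw [abs_sub_le_iff]
    constructor
    · linarith [hFle x y]
    · have := hFle y x
      rw [dist_comm y x] at this
      linarith
  have hFK : ∀ x y, dist x y ≤ F x + F y := by
    intro x y
    obtain ⟨i, _, hi⟩ := Finset.exists_mem_eq_inf' (s := Finset.univ)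
      Finset.univ_nonempty (fun i => a i + dist x (p i))
    obtain ⟨j, _, hj⟩ := Finset.exists_mem_eq_inf' (s := Finset.univ)
      Finset.univ_nonempty (fun i => a i + dist y (p i))
    have h1 : dist x y ≤ dist x (p i) + dist (p i) (p j) + dist (p j) y := by
      have := dist_triangle4 x (p i) (p j) y
      linarith
    have h2 := (ha i j).2
    have hFx : F x = a i + dist x (p i) := hi
    have hFy : F y = a j + dist y (p j) := hj
    rw [dist_comm (p j) y] at h1
    linarith
  set N := (Finset.univ.sup fun i => k i) + 1 with hN
  have hkN : ∀ i, k i < N :=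
    fun i => Nat.lt_succ_of_le (Finset.le_sup (Finset.mem_univ i))
  obtain ⟨m, _, hm⟩ := hu N (fun j => F (uryι r hr hp j)) (by
    intro i j
    constructor
    · rw [← uryι_dist r hr hp i j]; exact hFlip _ _
    · rw [← uryι_dist r hr hp i j]; exact hFK _ _) δ hδ0
  refine ⟨uryι r hr hp m, fun i => ?_⟩
  have h1 : |r (k i) m - F (uryι r hr hp (k i))| < δ := hm ⟨k i, hkN i⟩
  have e1 : dist (uryι r hr hp m) (uryι r hr hp (k i)) = r (k i) m := by
    rw [uryι_dist]; exact hr.2.2.1 _ _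
  have h2 : |dist (uryι r hr hp m) (p i) - dist (uryι r hr hp m) (uryι r hr hp (k i))|
      ≤ dist (p i) (uryι r hr hp (k i)) := by
    rw [dist_comm (uryι r hr hp m) (p i), dist_comm (uryι r hr hp m) (uryι r hr hp (k i))]
    exact abs_dist_sub_le _ _ _
  have h3 : |F (uryι r hr hp (k i)) - a i| ≤ dist (p i) (uryι r hr hp (k i)) := by
    have := hFlip (uryι r hr hp (k i)) (p i)
    rw [hF1 i, dist_comm] at this
    exact this
  have hki := hk i
  have t1 := abs_le.1 h2
  have t2 := abs_le.1 h3
  have t3 := abs_le.1 h1.le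
  rw [e1] at t1
  rw [abs_le]
  constructor <;> linarith
lemma exists_exact (hu : IsUniversal r) {n : ℕ} (p : Fin n → CompletionOf r hr hp)
    (a : Fin n → ℝ) (ha : UryKat r hr hp p a) :
    ∃ q : CompletionOf r hr hp, ∀ i, dist q (p i) = a i := by
  rcases Nat.eq_zero_or_pos n with hn | hn
  · subst hn; exact ⟨uryι r hr hp 0, fun i => i.elim0⟩
  haveI : Nonempty (Fin n) := ⟨⟨0, hn⟩⟩
  have ha' : ∀ i, 0 ≤ a i := by
    intro i
    have := (ha i i).2
    rw [dist_self] at this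
    linarith
  have key : ∀ (k : ℕ) (q : CompletionOf r hr hp),
      (∀ i, |dist q (p i) - a i| ≤ (2⁻¹ : ℝ) ^ k) →
      ∃ q' : CompletionOf r hr hp, (∀ i, |dist q' (p i) - a i| ≤ (2⁻¹ : ℝ) ^ (k + 1)) ∧
        dist q' q ≤ (2⁻¹ : ℝ) ^ k + (2⁻¹ : ℝ) ^ (k + 1) := by
    intro k q hq
    set b := Finset.univ.sup' Finset.univ_nonempty (fun i => |dist q (p i) - a i|) with hbdef
    obtain ⟨j0, _, hj0⟩ := Finset.exists_mem_eq_sup' (s := Finset.univ)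
      Finset.univ_nonempty (fun i => |dist q (p i) - a i|)
    have hbe : b = |dist q (p j0) - a j0| := hbdef.trans hj0
    have hb0 : 0 ≤ b := by rw [hbe]; exact abs_nonneg _
    have hbk : b ≤ (2⁻¹ : ℝ) ^ k := by
      apply Finset.sup'_le
      intro i _
      exact hq i
    have hble : ∀ i, |dist q (p i) - a i| ≤ b :=
      fun i => Finset.le_sup' (f := fun i => |dist q (p i) - a i|) (Finset.mem_univ i)
    have main : ∀ i : Fin n, |a i - b| ≤ dist (p i) q ∧ dist (p i) q ≤ a i + b := by
      intro i
      have hbi := abs_le.1 (hble i)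
      rw [dist_comm (p i) q]
      refine ⟨abs_le.2 ⟨?_, ?_⟩, ?_⟩
      · -- -(dist q (p i)) ≤ a i - b  i.e.  b - a i ≤ dist q (p i)
        have h1 := abs_le.1 (ha i j0).1
        have h2 := (ha i j0).2
        have h3 := dist_triangle q (p i) (p j0)
        have h6 := dist_triangle (p i) q (p j0)
        have h7 : dist (p i) q = dist q (p i) := dist_comm _ _
        rcases abs_cases (dist q (p j0) - a j0) with ⟨he, _⟩ | ⟨he, _⟩ <;>
          rw [hbe, he] <;> linarith
      · linarith
      · linarith
    set p' : Fin (n + 1) → CompletionOf r hr hp := Fin.snoc p q with hp'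
    set a' : Fin (n + 1) → ℝ := Fin.snoc a b with ha''
    have hKat' : UryKat r hr hp p' a' := by
      intro i j
      rcases Fin.eq_castSucc_or_eq_last i with ⟨i', rfl⟩ | rfl <;>
        rcases Fin.eq_castSucc_or_eq_last j with ⟨j', rfl⟩ | rfl <;>
          simp only [hp', ha'', Fin.snoc_castSucc, Fin.snoc_last]
      · exact ha i' j'
      · exact (main i').imp id id
      · have := main j'
        rw [dist_comm (p j') q] at this
        refine ⟨?_, ?_⟩
        · rw [abs_sub_comm]; exact this.1
        · linarith [this.2]
      · simp [dist_self]; linarith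
    have hε : (0 : ℝ) < (2⁻¹ : ℝ) ^ (k + 1) := by positivity
    obtain ⟨q', hq'⟩ := exists_approx r hr hp hu p' a' hKat' hε
    refine ⟨q', fun i => ?_, ?_⟩
    · have := hq' (Fin.castSucc i)
      simpa only [hp', ha'', Fin.snoc_castSucc] using this
    · have := hq' (Fin.last n)
      simp only [hp', ha'', Fin.snoc_last] at this
      have := abs_le.1 this
      linarith [this.2]
  obtain ⟨q0, hq0⟩ := exists_approx r hr hp hu p a ha one_pos
  have hq0' : ∀ i, |dist q0 (p i) - a i| ≤ (2⁻¹ : ℝ) ^ 0 := by simpa using hq0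
  let step : ∀ k, {q : CompletionOf r hr hp // ∀ i, |dist q (p i) - a i| ≤ (2⁻¹ : ℝ) ^ k} →
      {q : CompletionOf r hr hp // ∀ i, |dist q (p i) - a i| ≤ (2⁻¹ : ℝ) ^ (k + 1)} :=
    fun k x => ⟨(key k x.1 x.2).choose, (key k x.1 x.2).choose_spec.1⟩
  let Q : ∀ k, {q : CompletionOf r hr hp // ∀ i, |dist q (p i) - a i| ≤ (2⁻¹ : ℝ) ^ k} :=
    fun k => Nat.rec ⟨q0, hq0'⟩ step k
  have hQsucc : ∀ k, dist (Q (k + 1)).1 (Q k).1 ≤ (2⁻¹ : ℝ) ^ k + (2⁻¹ : ℝ) ^ (k + 1) :=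
    fun k => (key k (Q k).1 (Q k).2).choose_spec.2
  have cauchy : CauchySeq (fun k => (Q k).1) := by
    apply cauchySeq_of_le_geometric 2⁻¹ 2 (by norm_num)
    intro k
    have h1 := hQsucc k
    rw [dist_comm] at h1
    have h2 : (2⁻¹ : ℝ) ^ (k + 1) = 2⁻¹ ^ k * 2⁻¹ := pow_succ _ _
    calc dist (Q k).1 (Q (k + 1)).1 ≤ (2⁻¹ : ℝ) ^ k + (2⁻¹ : ℝ) ^ (k + 1) := h1
      _ ≤ 2 * 2⁻¹ ^ k := by rw [h2]; linarith [pow_nonneg (by norm_num : (0:ℝ) ≤ 2⁻¹) k]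
  obtain ⟨q, hqlim⟩ := cauchySeq_tendsto_of_complete cauchy
  refine ⟨q, fun i => ?_⟩
  have h1 : Filter.Tendsto (fun k => dist (Q k).1 (p i)) Filter.atTop (nhds (dist q (p i))) :=
    hqlim.dist tendsto_const_nhds
  have h2 : Filter.Tendsto (fun k => dist (Q k).1 (p i)) Filter.atTop (nhds (a i)) := by
    have h3 : Filter.Tendsto (fun k => dist (Q k).1 (p i) - a i) Filter.atTop (nhds 0) := by
      apply squeeze_zero_norm (fun k => ?_)
        (tendsto_pow_atTop_nhds_zero_of_lt_one (by norm_num) (by norm_num : (2⁻¹ : ℝ) < 1))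
      simpa [Real.norm_eq_abs] using (Q k).2 i
    have := h3.add_const (a i)
    simpa using this
  exact tendsto_nhds_unique h1 h2
lemma ury_extend {X : Type*} [MetricSpace X] (s : ℕ → X) (hs : DenseRange s)
    (t : ℕ → CompletionOf r hr hp)
    (hst : ∀ i j, dist (t i) (t j) = dist (s i) (s j)) :
    ∃ F : X → CompletionOf r hr hp, Isometry F ∧ ∀ i, F (s i) = t i := by
  have hsel : ∀ (x : X) (n : ℕ), ∃ m, dist x (s m) < (2⁻¹ : ℝ) ^ n :=
    fun x n => hs.exists_dist_lt x (by positivity)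
  choose c hc using hsel
  have hpow : Filter.Tendsto (fun n : ℕ => (2⁻¹ : ℝ) ^ n) Filter.atTop (nhds 0) :=
    tendsto_pow_atTop_nhds_zero_of_lt_one (by norm_num) (by norm_num)
  have cauchy : ∀ x : X, CauchySeq (fun n => t (c x n)) := by
    intro x
    rw [Metric.cauchySeq_iff]
    intro ε hε
    obtain ⟨N, hN⟩ : ∃ N : ℕ, (2⁻¹ : ℝ) ^ N < ε / 2 :=
      exists_pow_lt_of_lt_one (by positivity) (by norm_num)
    refine ⟨N, fun m hm n hn => ?_⟩
    have e1 : dist (t (c x m)) (t (c x n)) = dist (s (c x m)) (s (c x n)) := hst _ _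
    have h1 := hc x m
    have h2 := hc x n
    have h3 : dist (s (c x m)) (s (c x n)) ≤ dist x (s (c x m)) + dist x (s (c x n)) := by
      have := dist_triangle (s (c x m)) x (s (c x n))
      rw [dist_comm (s (c x m)) x] at this
      exact this
    have h4 : (2⁻¹ : ℝ) ^ m ≤ (2⁻¹ : ℝ) ^ N :=
      pow_le_pow_of_le_one (by norm_num) (by norm_num) hm
    have h5 : (2⁻¹ : ℝ) ^ n ≤ (2⁻¹ : ℝ) ^ N :=
      pow_le_pow_of_le_one (by norm_num) (by norm_num) hn
    rw [e1]
    linarith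
  choose F hF using fun x => cauchySeq_tendsto_of_complete (cauchy x)
  have hlim : ∀ x : X, Filter.Tendsto (fun n => s (c x n)) Filter.atTop (nhds x) := by
    intro x
    rw [tendsto_iff_dist_tendsto_zero]
    apply squeeze_zero (fun n => dist_nonneg) (fun n => ?_) hpow
    rw [dist_comm]
    exact (hc x n).le
  have hiso : Isometry F := by
    apply Isometry.of_dist_eq
    intro x y
    refine tendsto_nhds_unique ((hF x).dist (hF y)) ?_
    have : (fun n => dist (t (c x n)) (t (c y n))) = fun n => dist (s (c x n)) (s (c y n)) := by
      funext n
      exact hst _ _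
    rw [this]
    exact (hlim x).dist (hlim y)
  refine ⟨F, hiso, fun i => ?_⟩
  refine tendsto_nhds_unique (hF (s i)) ?_
  rw [tendsto_iff_dist_tendsto_zero]
  apply squeeze_zero (fun n => dist_nonneg) (fun n => ?_) hpow
  rw [hst]
  have := hc (s i) n
  rw [dist_comm] at this
  exact this.le
lemma ury_isoKat {X : Type*} [MetricSpace X] (x : ℕ → X) (n : ℕ)
    (v : Fin n → CompletionOf r hr hp)
    (hv : ∀ i j : Fin n, dist (v i) (v j) = dist (x i) (x j)) :
    UryKat r hr hp v (fun i => dist (x n) (x i)) := by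
  intro i j
  constructor
  · rw [hv i j]
    have := abs_dist_sub_le (x (i : ℕ)) (x (j : ℕ)) (x n)
    rw [dist_comm (x (i : ℕ)) (x n), dist_comm (x (j : ℕ)) (x n)] at this
    exact this
  · rw [hv i j]
    have := dist_triangle (x (i : ℕ)) (x n) (x (j : ℕ))
    rw [dist_comm (x (i : ℕ)) (x n)] at this
    exact this

noncomputable def isoStep (hu : IsUniversal r) {X : Type*} [MetricSpace X] (x : ℕ → X) (n : ℕ)
    (v : {v : Fin n → CompletionOf r hr hp //
      ∀ i j : Fin n, dist (v i) (v j) = dist (x i) (x j)}) :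
    {v : Fin (n + 1) → CompletionOf r hr hp //
      ∀ i j : Fin (n + 1), dist (v i) (v j) = dist (x i) (x j)} :=
  ⟨Fin.snoc v.1 (exists_exact r hr hp hu v.1 (fun i => dist (x n) (x i))
      (ury_isoKat r hr hp x n v.1 v.2)).choose, by
    have hq := (exists_exact r hr hp hu v.1 (fun i => dist (x n) (x i))
      (ury_isoKat r hr hp x n v.1 v.2)).choose_spec
    intro i j
    rcases Fin.eq_castSucc_or_eq_last i with ⟨i', rfl⟩ | rfl <;>
      rcases Fin.eq_castSucc_or_eq_last j with ⟨j', rfl⟩ | rfl <;>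
        simp only [Fin.snoc_castSucc, Fin.snoc_last, Fin.coe_castSucc, Fin.val_last]
    · exact v.2 i' j'
    · rw [dist_comm, dist_comm (x (i' : ℕ)) (x n)]
      exact hq i'
    · exact hq j'
    · simp [dist_self]⟩

noncomputable def isoSeqAux (hu : IsUniversal r) {X : Type*} [MetricSpace X] (x : ℕ → X)
    (n : ℕ) : {v : Fin n → CompletionOf r hr hp //
      ∀ i j : Fin n, dist (v i) (v j) = dist (x i) (x j)} :=
  Nat.rec ⟨fun i => i.elim0, fun i => i.elim0⟩ (isoStep r hr hp hu x) n

lemma isoSeqAux_succ (hu : IsUniversal r) {X : Type*} [MetricSpace X] (x : ℕ → X) (n : ℕ) :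
    isoSeqAux r hr hp hu x (n + 1) = isoStep r hr hp hu x n (isoSeqAux r hr hp hu x n) := rfl

lemma isoStep_val (hu : IsUniversal r) {X : Type*} [MetricSpace X] (x : ℕ → X) (n : ℕ)
    (v : {v : Fin n → CompletionOf r hr hp //
      ∀ i j : Fin n, dist (v i) (v j) = dist (x i) (x j)}) :
    (isoStep r hr hp hu x n v).1 = Fin.snoc v.1 (exists_exact r hr hp hu v.1
      (fun i => dist (x n) (x i)) (ury_isoKat r hr hp x n v.1 v.2)).choose := rfl

lemma exists_iso_seq (hu : IsUniversal r) {X : Type*} [MetricSpace X] (x : ℕ → X) :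
    ∃ g : ℕ → CompletionOf r hr hp, ∀ i j, dist (g i) (g j) = dist (x i) (x j) := by
  have coh : ∀ (n : ℕ) (i : Fin n), (isoSeqAux r hr hp hu x n).1 i =
      (isoSeqAux r hr hp hu x ((i : ℕ) + 1)).1 ⟨i, Nat.lt_succ_self _⟩ := by
    intro n
    induction n with
    | zero => exact fun i => i.elim0
    | succ n ih =>
      intro i
      rcases Fin.eq_castSucc_or_eq_last i with ⟨i', rfl⟩ | rfl
      · rw [isoSeqAux_succ, isoStep_val, Fin.snoc_castSucc, ih i']
        rfl
      · rfl
  refine ⟨fun n => (isoSeqAux r hr hp hu x (n + 1)).1 ⟨n, Nat.lt_succ_self n⟩,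
    fun i j => ?_⟩
  have hi : i < max i j + 1 := Nat.lt_succ_of_le (le_max_left _ _)
  have hj : j < max i j + 1 := Nat.lt_succ_of_le (le_max_right _ _)
  have h := (isoSeqAux r hr hp hu x (max i j + 1)).2 ⟨i, hi⟩ ⟨j, hj⟩
  rw [coh _ ⟨i, hi⟩, coh _ ⟨j, hj⟩] at h
  exact h
lemma bfKat1 (w : CompletionOf r hr hp) {m : ℕ}
    (v : Fin m → CompletionOf r hr hp × CompletionOf r hr hp)
    (hv : ∀ i j, dist (v i).1 (v j).1 = dist (v i).2 (v j).2) :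
    UryKat r hr hp (fun i => (v i).2) (fun i => dist w (v i).1) := by
  intro i j
  constructor
  · have h1 := abs_dist_sub_le (v i).1 (v j).1 w
    rw [dist_comm (v i).1 w, dist_comm (v j).1 w] at h1
    calc |dist w (v i).1 - dist w (v j).1| ≤ dist (v i).1 (v j).1 := h1
      _ = dist (v i).2 (v j).2 := hv i j
  · have h1 := dist_triangle (v i).1 w (v j).1
    rw [dist_comm (v i).1 w] at h1
    calc dist (v i).2 (v j).2 = dist (v i).1 (v j).1 := (hv i j).symm
      _ ≤ dist w (v i).1 + dist w (v j).1 := h1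

lemma bfKat2 (w : CompletionOf r hr hp) {m : ℕ}
    (v : Fin m → CompletionOf r hr hp × CompletionOf r hr hp)
    (hv : ∀ i j, dist (v i).1 (v j).1 = dist (v i).2 (v j).2) :
    UryKat r hr hp (fun i => (v i).1) (fun i => dist w (v i).2) :=
  bfKat1 r hr hp w (fun i => ((v i).2, (v i).1)) (fun i j => (hv i j).symm)

def BFInv (k : ℕ) (s₀ t₀ : Fin k → CompletionOf r hr hp) (u : ℕ → CompletionOf r hr hp)
    (m : ℕ) (v : Fin m → CompletionOf r hr hp × CompletionOf r hr hp) : Prop :=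
  (∀ i j, dist (v i).1 (v j).1 = dist (v i).2 (v j).2) ∧
  (∀ (i : ℕ) (h : i < k) (h' : i < m), v ⟨i, h'⟩ = (s₀ ⟨i, h⟩, t₀ ⟨i, h⟩)) ∧
  (∀ (c : ℕ) (h : k + 2 * c < m), (v ⟨k + 2 * c, h⟩).1 = u c) ∧
  (∀ (c : ℕ) (h : k + 2 * c + 1 < m), (v ⟨k + 2 * c + 1, h⟩).2 = u c)

noncomputable def bfNew (hu : IsUniversal r) (k : ℕ)
    (s₀ t₀ : Fin k → CompletionOf r hr hp) (u : ℕ → CompletionOf r hr hp) (m : ℕ)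
    (v : {v : Fin m → CompletionOf r hr hp × CompletionOf r hr hp //
      BFInv r hr hp k s₀ t₀ u m v}) :
    CompletionOf r hr hp × CompletionOf r hr hp :=
  if h : m < k then (s₀ ⟨m, h⟩, t₀ ⟨m, h⟩)
  else if _ : (m - k) % 2 = 0 then
    (u ((m - k) / 2),
      (exists_exact r hr hp hu (fun i => (v.1 i).2)
        (fun i => dist (u ((m - k) / 2)) (v.1 i).1)
        (bfKat1 r hr hp (u ((m - k) / 2)) v.1 v.2.1)).choose)
  else
    ((exists_exact r hr hp hu (fun i => (v.1 i).1)
        (fun i => dist (u ((m - k) / 2)) (v.1 i).2)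
        (bfKat2 r hr hp (u ((m - k) / 2)) v.1 v.2.1)).choose,
      u ((m - k) / 2))

lemma bfNew_dist (hu : IsUniversal r) (k : ℕ)
    (s₀ t₀ : Fin k → CompletionOf r hr hp)
    (hst₀ : ∀ i j, dist (s₀ i) (s₀ j) = dist (t₀ i) (t₀ j))
    (u : ℕ → CompletionOf r hr hp) (m : ℕ)
    (v : {v : Fin m → CompletionOf r hr hp × CompletionOf r hr hp //
      BFInv r hr hp k s₀ t₀ u m v}) (i : Fin m) :
    dist (v.1 i).1 (bfNew r hr hp hu k s₀ t₀ u m v).1 =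
      dist (v.1 i).2 (bfNew r hr hp hu k s₀ t₀ u m v).2 := by
  unfold bfNew
  split_ifs with h h2
  · have hb : v.1 i = (s₀ ⟨i, Nat.lt_trans i.isLt h⟩, t₀ ⟨i, Nat.lt_trans i.isLt h⟩) :=
      v.2.2.1 i.val (Nat.lt_trans i.isLt h) i.isLt
    rw [hb]
    exact hst₀ _ _
  · have hspec := (exists_exact r hr hp hu (fun i => (v.1 i).2)
        (fun i => dist (u ((m - k) / 2)) (v.1 i).1)
        (bfKat1 r hr hp (u ((m - k) / 2)) v.1 v.2.1)).choose_spec i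
    simp only at hspec ⊢
    rw [dist_comm (v.1 i).1, dist_comm (v.1 i).2]
    exact hspec.symm
  · have hspec := (exists_exact r hr hp hu (fun i => (v.1 i).1)
        (fun i => dist (u ((m - k) / 2)) (v.1 i).2)
        (bfKat2 r hr hp (u ((m - k) / 2)) v.1 v.2.1)).choose_spec i
    simp only at hspec ⊢
    rw [dist_comm (v.1 i).1, dist_comm (v.1 i).2]
    exact hspec
noncomputable def bfStep (hu : IsUniversal r) (k : ℕ)
    (s₀ t₀ : Fin k → CompletionOf r hr hp)
    (hst₀ : ∀ i j, dist (s₀ i) (s₀ j) = dist (t₀ i) (t₀ j))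
    (u : ℕ → CompletionOf r hr hp) (m : ℕ)
    (v : {v : Fin m → CompletionOf r hr hp × CompletionOf r hr hp //
      BFInv r hr hp k s₀ t₀ u m v}) :
    {v : Fin (m + 1) → CompletionOf r hr hp × CompletionOf r hr hp //
      BFInv r hr hp k s₀ t₀ u (m + 1) v} :=
  ⟨Fin.snoc v.1 (bfNew r hr hp hu k s₀ t₀ u m v), by
    have hnew := bfNew_dist r hr hp hu k s₀ t₀ hst₀ u m v
    refine ⟨?_, ?_, ?_, ?_⟩
    · intro i j
      rcases Fin.eq_castSucc_or_eq_last i with ⟨i', rfl⟩ | rfl <;>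
        rcases Fin.eq_castSucc_or_eq_last j with ⟨j', rfl⟩ | rfl <;>
          simp only [Fin.snoc_castSucc, Fin.snoc_last]
      · exact v.2.1 i' j'
      · exact hnew i'
      · rw [dist_comm _ (v.1 j').1, dist_comm _ (v.1 j').2]
        exact hnew j'
      · simp [dist_self]
    · intro i hik h'
      rcases Nat.lt_or_ge i m with hm | hm
      · have e : (⟨i, h'⟩ : Fin (m + 1)) = Fin.castSucc ⟨i, hm⟩ := rfl
        rw [e, Fin.snoc_castSucc]
        exact v.2.2.1 i hik hm
      · have him : i = m := by omega
        subst him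
        have e : (⟨i, h'⟩ : Fin (i + 1)) = Fin.last i := rfl
        rw [e, Fin.snoc_last]
        show bfNew r hr hp hu k s₀ t₀ u i v = _
        unfold bfNew
        rw [dif_pos hik]
    · intro c h
      rcases Nat.lt_or_ge (k + 2 * c) m with hm | hm
      · have e : (⟨k + 2 * c, h⟩ : Fin (m + 1)) = Fin.castSucc ⟨k + 2 * c, hm⟩ := rfl
        rw [e, Fin.snoc_castSucc]
        exact v.2.2.2.1 c hm
      · have him : m = k + 2 * c := by omega
        have e : (⟨k + 2 * c, h⟩ : Fin (m + 1)) = Fin.last m := by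
          simp [Fin.ext_iff]; omega
        rw [e, Fin.snoc_last]
        show (bfNew r hr hp hu k s₀ t₀ u m v).1 = u c
        unfold bfNew
        rw [dif_neg (by omega : ¬ m < k), dif_pos (by omega : (m - k) % 2 = 0)]
        simp only
        rw [show (m - k) / 2 = c by omega]
    · intro c h
      rcases Nat.lt_or_ge (k + 2 * c + 1) m with hm | hm
      · have e : (⟨k + 2 * c + 1, h⟩ : Fin (m + 1)) = Fin.castSucc ⟨k + 2 * c + 1, hm⟩ := rfl
        rw [e, Fin.snoc_castSucc]
        exact v.2.2.2.2 c hm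
      · have him : m = k + 2 * c + 1 := by omega
        have e : (⟨k + 2 * c + 1, h⟩ : Fin (m + 1)) = Fin.last m := by
          simp [Fin.ext_iff]; omega
        rw [e, Fin.snoc_last]
        show (bfNew r hr hp hu k s₀ t₀ u m v).2 = u c
        unfold bfNew
        rw [dif_neg (by omega : ¬ m < k), dif_neg (by omega : ¬ (m - k) % 2 = 0)]
        simp only
        rw [show (m - k) / 2 = c by omega]⟩

noncomputable def bfAux (hu : IsUniversal r) (k : ℕ)
    (s₀ t₀ : Fin k → CompletionOf r hr hp)
    (hst₀ : ∀ i j, dist (s₀ i) (s₀ j) = dist (t₀ i) (t₀ j))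
    (u : ℕ → CompletionOf r hr hp) (m : ℕ) :
    {v : Fin m → CompletionOf r hr hp × CompletionOf r hr hp //
      BFInv r hr hp k s₀ t₀ u m v} :=
  Nat.rec ⟨fun i => i.elim0,
    ⟨fun i => i.elim0, fun i _ h' => absurd h' (Nat.not_lt_zero i),
      fun _ h => absurd h (Nat.not_lt_zero _), fun _ h => absurd h (Nat.not_lt_zero _)⟩⟩
    (bfStep r hr hp hu k s₀ t₀ hst₀ u) m

lemma bfAux_succ (hu : IsUniversal r) (k : ℕ)
    (s₀ t₀ : Fin k → CompletionOf r hr hp)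
    (hst₀ : ∀ i j, dist (s₀ i) (s₀ j) = dist (t₀ i) (t₀ j))
    (u : ℕ → CompletionOf r hr hp) (m : ℕ) :
    bfAux r hr hp hu k s₀ t₀ hst₀ u (m + 1) =
      bfStep r hr hp hu k s₀ t₀ hst₀ u m (bfAux r hr hp hu k s₀ t₀ hst₀ u m) := rfl

lemma bfStep_val (hu : IsUniversal r) (k : ℕ)
    (s₀ t₀ : Fin k → CompletionOf r hr hp)
    (hst₀ : ∀ i j, dist (s₀ i) (s₀ j) = dist (t₀ i) (t₀ j))
    (u : ℕ → CompletionOf r hr hp) (m : ℕ)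
    (v : {v : Fin m → CompletionOf r hr hp × CompletionOf r hr hp //
      BFInv r hr hp k s₀ t₀ u m v}) :
    (bfStep r hr hp hu k s₀ t₀ hst₀ u m v).1 =
      Fin.snoc v.1 (bfNew r hr hp hu k s₀ t₀ u m v) := rfl
lemma bf_main (hu : IsUniversal r) (k : ℕ)
    (s₀ t₀ : Fin k → CompletionOf r hr hp)
    (hst₀ : ∀ i j, dist (s₀ i) (s₀ j) = dist (t₀ i) (t₀ j))
    (u : ℕ → CompletionOf r hr hp) :
    ∃ s t : ℕ → CompletionOf r hr hp,
      (∀ i j, dist (s i) (s j) = dist (t i) (t j)) ∧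
      (∀ i : Fin k, s i = s₀ i ∧ t i = t₀ i) ∧
      (∀ c, ∃ i, s i = u c) ∧ (∀ c, ∃ i, t i = u c) := by
  have coh : ∀ (m : ℕ) (i : Fin m), (bfAux r hr hp hu k s₀ t₀ hst₀ u m).1 i =
      (bfAux r hr hp hu k s₀ t₀ hst₀ u ((i : ℕ) + 1)).1 ⟨i, Nat.lt_succ_self _⟩ := by
    intro m
    induction m with
    | zero => exact fun i => i.elim0
    | succ m ih =>
      intro i
      rcases Fin.eq_castSucc_or_eq_last i with ⟨i', rfl⟩ | rfl
      · rw [bfAux_succ, bfStep_val, Fin.snoc_castSucc, ih i']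
        rfl
      · rfl
  refine ⟨fun n => ((bfAux r hr hp hu k s₀ t₀ hst₀ u (n + 1)).1 ⟨n, Nat.lt_succ_self n⟩).1,
    fun n => ((bfAux r hr hp hu k s₀ t₀ hst₀ u (n + 1)).1 ⟨n, Nat.lt_succ_self n⟩).2,
    ?_, ?_, ?_, ?_⟩
  · intro i j
    have hi : i < max i j + 1 := Nat.lt_succ_of_le (le_max_left _ _)
    have hj : j < max i j + 1 := Nat.lt_succ_of_le (le_max_right _ _)
    have h := (bfAux r hr hp hu k s₀ t₀ hst₀ u (max i j + 1)).2.1 ⟨i, hi⟩ ⟨j, hj⟩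
    rw [coh _ ⟨i, hi⟩, coh _ ⟨j, hj⟩] at h
    exact h
  · intro i
    have h := (bfAux r hr hp hu k s₀ t₀ hst₀ u ((i : ℕ) + 1)).2.2.1 i i.isLt (Nat.lt_succ_self _)
    constructor
    · rw [show s₀ ⟨(i : ℕ), i.isLt⟩ = s₀ i from rfl] at h
      exact congrArg Prod.fst h
    · rw [show t₀ ⟨(i : ℕ), i.isLt⟩ = t₀ i from rfl] at h
      exact congrArg Prod.snd h
  · intro c
    exact ⟨k + 2 * c,
      (bfAux r hr hp hu k s₀ t₀ hst₀ u (k + 2 * c + 1)).2.2.2.1 c (Nat.lt_succ_self _)⟩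
  · intro c
    exact ⟨k + 2 * c + 1,
      (bfAux r hr hp hu k s₀ t₀ hst₀ u (k + 2 * c + 1 + 1)).2.2.2.2 c (Nat.lt_succ_self _)⟩

end Aux

/-- For a universal proper infinite distance matrix `r`, the completion `U_r` of `(ℕ, r)`
is a complete separable metric space which is universal (every complete separable metric
space embeds isometrically into it) and homogeneous (any distance-preserving bijection
between finite subsets extends to a surjective self-isometry): it is the Urysohn space. -/
theorem completion_of_universal_is_urysohn (r : ℕ → ℕ → ℝ) (hr : IsInfDistMatrix r)
    (hp : IsProper r) (hu : IsUniversal r) :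
    CompleteSpace (CompletionOf r hr hp) ∧
    SeparableSpace (CompletionOf r hr hp) ∧
    (∀ (X : Type) [MetricSpace X], CompleteSpace X → SeparableSpace X →
      ∃ f : X → CompletionOf r hr hp, Isometry f) ∧
    (∀ A B : Set (CompletionOf r hr hp), A.Finite → B.Finite →
      ∀ φ : A → B, Function.Bijective φ →
      (∀ x y : A, dist (φ x : CompletionOf r hr hp) (φ y : CompletionOf r hr hp) =
        dist (x : CompletionOf r hr hp) (y : CompletionOf r hr hp)) →
      ∃ J : CompletionOf r hr hp ≃ᵢ CompletionOf r hr hp,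
        ∀ x : A, J (x : CompletionOf r hr hp) = (φ x : CompletionOf r hr hp)) := by
  refine ⟨inferInstance, ⟨⟨Set.range (uryι r hr hp), Set.countable_range _,
    uryι_dense r hr hp⟩⟩, ?_, ?_⟩
  · intro X _ hcomp hsep
    haveI := hcomp
    haveI := hsep
    rcases isEmpty_or_nonempty X with hX | hX
    · exact ⟨fun x => isEmptyElim x, fun x => isEmptyElim x⟩
    · obtain ⟨x, hx⟩ := TopologicalSpace.exists_dense_seq X
      obtain ⟨g, hg⟩ := exists_iso_seq r hr hp hu x
      obtain ⟨F, hF, -⟩ := ury_extend r hr hp x hx g (fun i j => hg i j)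
      exact ⟨F, hF⟩
  · intro A B hA hB φ hφbij hφ
    haveI : Fintype A := hA.fintype
    set k := Fintype.card A with hk
    set e : Fin k ≃ A := (Fintype.equivFin A).symm with he
    set s₀ : Fin k → CompletionOf r hr hp := fun i => ((e i : A) : CompletionOf r hr hp)
      with hs₀
    set t₀ : Fin k → CompletionOf r hr hp :=
      fun i => ((φ (e i) : B) : CompletionOf r hr hp) with ht₀
    have hst₀ : ∀ i j, dist (s₀ i) (s₀ j) = dist (t₀ i) (t₀ j) :=
      fun i j => (hφ (e i) (e j)).symm
    obtain ⟨s, t, hst, hbase, hsu, htu⟩ :=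
      bf_main r hr hp hu k s₀ t₀ hst₀ (uryι r hr hp)
    have hsdense : DenseRange s := by
      have hsub : Set.range (uryι r hr hp) ⊆ Set.range s := by
        rintro _ ⟨c, rfl⟩
        obtain ⟨i, hi⟩ := hsu c
        exact ⟨i, hi⟩
      exact (uryι_dense r hr hp).mono hsub
    obtain ⟨F, hF, hFs⟩ := ury_extend r hr hp s hsdense t (fun i j => (hst i j).symm)
    have hsurj : Function.Surjective F := by
      have hclosed : IsClosed (Set.range F) := hF.isClosedEmbedding.isClosed_range
      have hsub : Set.range (uryι r hr hp) ⊆ Set.range F := by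
        rintro _ ⟨c, rfl⟩
        obtain ⟨i, hi⟩ := htu c
        exact ⟨s i, by rw [hFs i, hi]⟩
      have hdense : Dense (Set.range F) := (uryι_dense r hr hp).mono hsub
      rw [← Set.range_eq_univ, ← hclosed.closure_eq]
      exact hdense.closure_eq
    refine ⟨⟨Equiv.ofBijective F ⟨hF.injective, hsurj⟩, hF⟩, ?_⟩
    intro x
    set i : Fin k := Fintype.equivFin A x with hi
    have hei : e i = x := Equiv.symm_apply_apply _ x
    have hb := hbase i
    show F (x : CompletionOf r hr hp) = ((φ x : B) : CompletionOf r hr hp)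
    have h1 : (x : CompletionOf r hr hp) = s i := by
      rw [hb.1, hs₀]
      simp only
      rw [hei]
    rw [h1, hFs i, hb.2, ht₀]
    simp only
    rw [hei]
end

section
/- For any two universal proper infinite distance matrices r and r', the metric completions U_r and U_{r'} of (ℕ, r) and (ℕ, r') are isometric; i.e., there exists a distance-preserving bijection between U_r and U_{r'}. -/
section Aux
variable (r : ℕ → ℕ → ℝ) (hr : IsInfDistMatrix r) (hp : IsProper r)

def carrierToNat : Carrier r hr hp → ℕ := fun x => x
def natToCarrier : ℕ → Carrier r hr hp := fun x => x

lemma carrier_dist (x y : Carrier r hr hp) : dist x y = r x y := rfl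

/-- approximate extension over arbitrary finite subsets of the completion -/
theorem approx_ext (hu : IsUniversal r) (n : ℕ) (p : Fin n → CompletionOf r hr hp)
    (f : Fin n → ℝ)
    (hf : ∀ i j, |f i - f j| ≤ dist (p i) (p j) ∧ dist (p i) (p j) ≤ f i + f j)
    (ε : ℝ) (hε : 0 < ε) :
    ∃ z : Carrier r hr hp,
      ∀ i, |dist ((z : CompletionOf r hr hp)) (p i) - f i| < ε := by
  rcases n with _ | n
  · exact ⟨(0 : ℕ), fun i => i.elim0⟩
  set δ := ε / 8 with hδ
  have hδ0 : 0 < δ := by positivity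
  -- choose nearby points in the dense copy of ℕ
  have hq : ∀ i : Fin (n+1), ∃ q : Carrier r hr hp,
      dist (p i) ((q : CompletionOf r hr hp)) < δ := by
    intro i
    exact Metric.denseRange_iff.mp UniformSpace.Completion.denseRange_coe (p i) δ hδ0
  choose q hqd using hq
  have hfnn : ∀ i, 0 ≤ f i := by
    intro i
    have := (hf i i).2
    have h0 : dist (p i) (p i) = 0 := dist_self _
    linarith
  have hne : (Finset.univ : Finset (Fin (n+1))).Nonempty := Finset.univ_nonempty
  -- distance between chosen points vs original points
  have hqq : ∀ i j, dist (q i) (q j) ≤ dist (p i) (p j) + 2 * δ := by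
    intro i j
    have h1 : dist ((q i : CompletionOf r hr hp)) ((q j : CompletionOf r hr hp))
        = dist (q i) (q j) := UniformSpace.Completion.dist_eq _ _
    have h2 := dist_triangle ((q i : CompletionOf r hr hp)) (p i)
      ((q j : CompletionOf r hr hp))
    have h3 := dist_triangle (p i) (p j) ((q j : CompletionOf r hr hp))
    have h4 := hqd i
    have h5 := hqd j
    rw [dist_comm ((q i : CompletionOf r hr hp)) (p i)] at h2
    linarith
  have hpq : ∀ i j, dist (p i) (p j) ≤ dist (q i) (q j) + 2 * δ := by
    intro i j
    have h1 : dist ((q i : CompletionOf r hr hp)) ((q j : CompletionOf r hr hp))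
        = dist (q i) (q j) := UniformSpace.Completion.dist_eq _ _
    have h2 := dist_triangle (p i) ((q i : CompletionOf r hr hp)) (p j)
    have h3 := dist_triangle ((q i : CompletionOf r hr hp))
      ((q j : CompletionOf r hr hp)) (p j)
    have h4 := hqd i
    have h5 := hqd j
    rw [dist_comm ((q j : CompletionOf r hr hp)) (p j)] at h3
    linarith
  -- corrected Katětov function on the q's
  set g : Fin (n+1) → ℝ :=
    fun i => 2 * δ + Finset.univ.sup' hne (fun j => f j - dist (q j) (q i)) with hg
  have hg_ge : ∀ i, f i + 2 * δ ≤ g i := by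
    intro i
    have h1 : f i - dist (q i) (q i)
        ≤ Finset.univ.sup' hne (fun j => f j - dist (q j) (q i)) :=
      Finset.le_sup' (fun j => f j - dist (q j) (q i)) (Finset.mem_univ i)
    rw [dist_self] at h1
    simp only [hg]; linarith
  have hg_le : ∀ i, g i ≤ f i + 4 * δ := by
    intro i
    have : ∀ j ∈ Finset.univ, f j - dist (q j) (q i) ≤ f i + 2 * δ := by
      intro j _
      have h1 : f j - f i ≤ dist (p j) (p i) := (abs_le.mp (hf j i).1).2
      have h2 := hpq j i
      have h3 := dist_comm (q i) (q j)
      linarith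
    have := Finset.sup'_le hne _ this
    simp only [hg]; linarith
  have key : ∀ i k, Finset.univ.sup' hne (fun j => f j - dist (q j) (q i))
      ≤ dist (q i) (q k) + Finset.univ.sup' hne (fun j => f j - dist (q j) (q k)) := by
    intro i k
    apply Finset.sup'_le
    intro j _
    have h1 : f j - dist (q j) (q k)
        ≤ Finset.univ.sup' hne (fun j' => f j' - dist (q j') (q k)) :=
      Finset.le_sup' (fun j' => f j' - dist (q j') (q k)) (Finset.mem_univ j)
    have h2 := dist_triangle (q j) (q i) (q k)
    have h3 := dist_comm (q k) (q i)
    linarith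
  have hg_lip : ∀ i k, |g i - g k| ≤ dist (q i) (q k) := by
    intro i k
    rw [abs_sub_le_iff]
    constructor
    · have := key i k
      simp only [hg]; linarith
    · have := key k i
      have h3 := dist_comm (q k) (q i)
      simp only [hg]; linarith
  have hg_low : ∀ i k, dist (q i) (q k) ≤ g i + g k := by
    intro i k
    have h1 := hqq i k
    have h2 := (hf i k).2
    have h3 := hg_ge i
    have h4 := hg_ge k
    linarith
  have hg_nn : ∀ i, 0 ≤ g i := fun i => le_trans (by linarith [hfnn i]) (hg_ge i)
  -- extend to an admissible vector on an initial segment of ℕ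
  set N : ℕ := Finset.univ.sup (fun i => carrierToNat r hr hp (q i)) + 1 with hNdef
  have hN : ∀ i, carrierToNat r hr hp (q i) < N := by
    intro i
    have := Finset.le_sup (f := fun i => carrierToNat r hr hp (q i)) (s := Finset.univ)
      (Finset.mem_univ i)
    rw [hNdef]
    exact Nat.lt_succ_of_le this
  set h : Fin N → ℝ := fun k => Finset.univ.inf' hne (fun i => g i + r (q i) k) with hh
  have hkey2 : ∀ k l : Fin N, h k ≤ h l + r ↑k ↑l := by
    intro k l
    obtain ⟨i, -, hi⟩ := Finset.exists_mem_eq_inf' hne (fun i => g i + r (q i) (l : ℕ))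
    have h1 : h k ≤ g i + r (q i) k := Finset.inf'_le _ (Finset.mem_univ i)
    have h2 : r (q i) (k : ℕ) ≤ r (q i) (l : ℕ) + r (l : ℕ) (k : ℕ) := hr.2.2.2 _ _ _
    have h3 : r (l : ℕ) (k : ℕ) = r (k : ℕ) (l : ℕ) := hr.2.2.1 _ _
    simp only [hh] at hi ⊢
    rw [hi]
    linarith
  have hadm : ∀ k l : Fin N, |h k - h l| ≤ r k l ∧ r k l ≤ h k + h l := by
    intro k l
    constructor
    · rw [abs_sub_le_iff]
      refine ⟨by linarith [hkey2 k l], ?_⟩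
      have := hkey2 l k
      have h3 : r (l : ℕ) (k : ℕ) = r (k : ℕ) (l : ℕ) := hr.2.2.1 _ _
      linarith
    · obtain ⟨i, -, hi⟩ := Finset.exists_mem_eq_inf' hne (fun i => g i + r (q i) (k : ℕ))
      obtain ⟨i', -, hi'⟩ := Finset.exists_mem_eq_inf' hne (fun i => g i + r (q i) (l : ℕ))
      have h1 : r (q i) (q i') ≤ g i + g i' := by
        have := hg_low i i'
        rw [carrier_dist] at this
        linarith
      have h2 : r (k : ℕ) (l : ℕ) ≤ r (k : ℕ) (q i) + r (q i) (q i') + r (q i') (l : ℕ) := by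
        have t1 : r (k : ℕ) (l : ℕ) ≤ r (k : ℕ) (q i') + r (q i') (l : ℕ) := hr.2.2.2 _ _ _
        have t2 : r (k : ℕ) (q i') ≤ r (k : ℕ) (q i) + r (q i) (q i') := hr.2.2.2 _ _ _
        linarith
      have h3 : r (k : ℕ) (q i) = r (q i) (k : ℕ) := hr.2.2.1 _ _
      have e1 : h k = g i + r (q i) (k : ℕ) := hi
      have e2 : h l = g i' + r (q i') (l : ℕ) := hi'
      rw [e1, e2]
      linarith
  obtain ⟨m, hmN, hmd⟩ := hu N h hadm δ hδ0
  refine ⟨natToCarrier r hr hp m, fun i => ?_⟩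
  have h1 : |r (carrierToNat r hr hp (q i)) m - h ⟨carrierToNat r hr hp (q i), hN i⟩| < δ := hmd ⟨carrierToNat r hr hp (q i), hN i⟩
  have h2 : h ⟨carrierToNat r hr hp (q i), hN i⟩ = g i := by
    apply le_antisymm
    · have e : h ⟨carrierToNat r hr hp (q i), hN i⟩
          ≤ g i + r (q i) (carrierToNat r hr hp (q i)) :=
        Finset.inf'_le (fun j => g j + r (q j) (carrierToNat r hr hp (q i)))
          (Finset.mem_univ i)
      have h0 : r (q i) (carrierToNat r hr hp (q i)) = 0 := hr.1 _
      rw [h0] at e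
      linarith [e]
    · apply Finset.le_inf'
      intro j _
      have hl := hg_lip i j
      rw [carrier_dist, abs_sub_le_iff] at hl
      have h3 : r (q i) (q j) = r (q j) (q i) := hr.2.2.1 _ _
      have h3' : r (q j) (q i) = r (q j) (carrierToNat r hr hp (q i)) := rfl
      show g i ≤ g j + r (q j) (carrierToNat r hr hp (q i))
      linarith [hl.1, h3, h3']
  have h3 : dist (natToCarrier r hr hp m : CompletionOf r hr hp)
      ((q i) : CompletionOf r hr hp) = r (carrierToNat r hr hp (q i)) m := by
    rw [UniformSpace.Completion.dist_eq, carrier_dist]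
    exact hr.2.2.1 _ _
  have h4 : |dist (natToCarrier r hr hp m : CompletionOf r hr hp) (p i)
      - dist (natToCarrier r hr hp m : CompletionOf r hr hp)
        ((q i) : CompletionOf r hr hp)|
      ≤ dist (p i) ((q i) : CompletionOf r hr hp) := by
    rw [dist_comm (natToCarrier r hr hp m : CompletionOf r hr hp) (p i),
      dist_comm (natToCarrier r hr hp m : CompletionOf r hr hp)
        ((q i) : CompletionOf r hr hp)]
    exact abs_dist_sub_le _ _ _
  rw [h2] at h1
  rw [h3] at h4
  have h5 := hqd i
  have h6 := hg_ge i
  have h7 := hg_le i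
  rw [abs_sub_lt_iff] at h1 ⊢
  rw [abs_sub_le_iff] at h4
  constructor <;> [skip; skip] <;>
  · have hδε : 8 * δ = ε := by rw [hδ]; ring
    linarith [h1.1, h1.2, h4.1, h4.2]

/-- exact one-point extension in the completion -/
theorem exact_ext (hu : IsUniversal r) (n : ℕ) (p : Fin n → CompletionOf r hr hp)
    (f : Fin n → ℝ)
    (hf : ∀ i j, |f i - f j| ≤ dist (p i) (p j) ∧ dist (p i) (p j) ≤ f i + f j) :
    ∃ z : CompletionOf r hr hp, ∀ i, dist z (p i) = f i := by
  rcases n with _ | n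
  · exact ⟨((natToCarrier r hr hp 0) : CompletionOf r hr hp), fun i => i.elim0⟩
  have hne : (Finset.univ : Finset (Fin (n+1))).Nonempty := Finset.univ_nonempty
  -- the improvement step
  have step : ∀ ε : ℝ, 0 < ε → ∀ z : CompletionOf r hr hp,
      (∀ i, |dist z (p i) - f i| ≤ ε) →
      ∃ z' : CompletionOf r hr hp,
        (∀ i, |dist z' (p i) - f i| ≤ ε / 2) ∧ dist z' z ≤ 2 * ε := by
    intro ε hε z hz
    set c : ℝ := Finset.univ.sup' hne (fun j => |dist z (p j) - f j|) with hc
    have hcε : c ≤ ε := Finset.sup'_le hne _ (fun j _ => hz j)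
    have hc0 : 0 ≤ c := le_trans (abs_nonneg _)
      (Finset.le_sup' (fun j => |dist z (p j) - f j|) (Finset.mem_univ (0 : Fin (n+1))))
    -- extended configuration
    set p' : Fin (n+2) → CompletionOf r hr hp := Fin.snoc p z with hp'
    set f' : Fin (n+2) → ℝ := Fin.snoc f c with hf'
    have hp'c : ∀ i : Fin (n+1), p' i.castSucc = p i := fun i => by simp [hp']
    have hp'l : p' (Fin.last (n+1)) = z := by simp [hp']
    have hf'c : ∀ i : Fin (n+1), f' i.castSucc = f i := fun i => by simp [hf']
    have hf'l : f' (Fin.last (n+1)) = c := by simp [hf']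
    -- the mixed Katětov conditions
    have mixed : ∀ i : Fin (n+1),
        |f i - c| ≤ dist (p i) z ∧ dist (p i) z ≤ f i + c := by
      intro i
      have h1 : |dist z (p i) - f i| ≤ c :=
        Finset.le_sup' (fun j => |dist z (p j) - f j|) (Finset.mem_univ i)
      rw [abs_sub_le_iff] at h1
      constructor
      · rw [abs_sub_le_iff]
        constructor
        · rw [dist_comm]; linarith [h1.2]
        · -- c - f i ≤ dist (p i) z
          obtain ⟨j, -, hj⟩ := Finset.exists_mem_eq_sup' hne
            (fun j => |dist z (p j) - f j|)
          have hcj : c = |dist z (p j) - f j| := by rw [hc]; exact hj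
          have ht1 := dist_triangle z (p i) (p j)
          have ht2 := dist_triangle (p i) z (p j)
          have hij1 := (abs_le.mp (hf i j).1).1
          have hij2 := (hf i j).2
          have hd : dist z (p i) = dist (p i) z := dist_comm _ _
          rcases abs_cases (dist z (p j) - f j) with ⟨he, -⟩ | ⟨he, -⟩ <;>
            rw [he] at hcj <;> linarith
      · rw [dist_comm]; linarith [h1.1]
    have hkat : ∀ i j : Fin (n+2),
        |f' i - f' j| ≤ dist (p' i) (p' j) ∧ dist (p' i) (p' j) ≤ f' i + f' j := by
      intro i j
      refine Fin.lastCases ?_ ?_ i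
      · refine Fin.lastCases ?_ ?_ j
        · rw [hp'l, hf'l, dist_self, sub_self, abs_zero]
          exact ⟨le_refl _, by linarith⟩
        · intro j'
          rw [hp'l, hf'l, hp'c, hf'c]
          have := mixed j'
          rw [dist_comm] at this
          rw [abs_sub_comm]
          exact ⟨this.1, by linarith [this.2]⟩
      · intro i'
        refine Fin.lastCases ?_ ?_ j
        · rw [hp'l, hf'l, hp'c, hf'c]
          have := mixed i'
          exact ⟨this.1, by linarith [this.2]⟩
        · intro j'
          rw [hp'c, hp'c, hf'c, hf'c]
          exact hf i' j'
    obtain ⟨w, hw⟩ := approx_ext r hr hp hu (n+2) p' f' hkat (ε/2)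
      (by linarith)
    refine ⟨(w : CompletionOf r hr hp), ?_, ?_⟩
    · intro i
      have := hw i.castSucc
      rw [hp'c, hf'c] at this
      exact le_of_lt this
    · have := hw (Fin.last (n+1))
      rw [hp'l, hf'l] at this
      rw [abs_sub_lt_iff] at this
      linarith [this.1]
  -- iterate to build a Cauchy sequence
  obtain ⟨z₀c, hz₀⟩ := approx_ext r hr hp hu (n+1) p f hf 1 one_pos
  have ex : ∀ (k : ℕ) (z : CompletionOf r hr hp),
      (∀ i, |dist z (p i) - f i| ≤ (1/2 : ℝ) ^ k) →
      ∃ z' : CompletionOf r hr hp,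
        (∀ i, |dist z' (p i) - f i| ≤ (1/2 : ℝ) ^ (k+1)) ∧
          dist z' z ≤ 2 * (1/2 : ℝ) ^ k := by
    intro k z hz
    obtain ⟨z', h1, h2⟩ := step ((1/2 : ℝ) ^ k) (by positivity) z hz
    exact ⟨z', by rw [pow_succ]; intro i; linarith [h1 i], h2⟩
  -- the sequence
  let M : ℕ → Type := fun k => {z : CompletionOf r hr hp //
    ∀ i, |dist z (p i) - f i| ≤ (1/2 : ℝ) ^ k}
  have base : M 0 := ⟨(z₀c : CompletionOf r hr hp), fun i => by
    have := hz₀ i; rw [pow_zero]; linarith [this]⟩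
  let next : ∀ k, M k → M (k+1) := fun k z =>
    ⟨(ex k z.1 z.2).choose, (ex k z.1 z.2).choose_spec.1⟩
  let seq : ∀ k, M k := fun k => Nat.rec base next k
  have hstep : ∀ k, dist (seq (k+1)).1 (seq k).1 ≤ 2 * (1/2 : ℝ) ^ k := by
    intro k
    exact (ex k (seq k).1 (seq k).2).choose_spec.2
  have hcauchy : CauchySeq (fun k => (seq k).1) := by
    apply cauchySeq_of_le_geometric (1/2 : ℝ) 2 (by norm_num)
    intro k
    rw [dist_comm]
    exact hstep k
  obtain ⟨z, hz⟩ := cauchySeq_tendsto_of_complete hcauchy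
  refine ⟨z, fun i => ?_⟩
  have t1 : Filter.Tendsto (fun k => dist (seq k).1 (p i)) Filter.atTop
      (nhds (dist z (p i))) := (hz.dist (tendsto_const_nhds (x := p i)))
  have t2 : Filter.Tendsto (fun k => dist (seq k).1 (p i)) Filter.atTop
      (nhds (f i)) := by
    rw [tendsto_iff_dist_tendsto_zero]
    have hb : Filter.Tendsto (fun k : ℕ => (1/2 : ℝ) ^ k) Filter.atTop (nhds 0) :=
      tendsto_pow_atTop_nhds_zero_of_lt_one (by norm_num) (by norm_num)
    exact squeeze_zero (fun k => dist_nonneg)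
      (fun k => by rw [Real.dist_eq]; exact (seq k).2 i) hb
  exact tendsto_nhds_unique t1 t2


/-- extension step matched against an isometric configuration in another space -/
theorem side_step (hu : IsUniversal r) {X : Type} [MetricSpace X] (n : ℕ)
    (a : Fin n → X) (b : Fin n → CompletionOf r hr hp)
    (hab : ∀ i j, dist (a i) (a j) = dist (b i) (b j)) (x : X) :
    ∃ y : CompletionOf r hr hp, ∀ i, dist y (b i) = dist x (a i) := by
  apply exact_ext r hr hp hu n b (fun i => dist x (a i))
  intro i j
  constructor
  · rw [← hab]
    have := abs_dist_sub_le (a i) (a j) x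
    rw [dist_comm (a i) x, dist_comm (a j) x] at this
    exact this
  · rw [← hab]
    have := dist_triangle (a i) x (a j)
    rw [dist_comm (a i) x] at this
    exact this

end Aux

/-- For any two universal proper infinite distance matrices `r` and `r'`, the completions
`U_r` and `U_{r'}` of `(ℕ, r)` and `(ℕ, r')` are isometric. -/
theorem completions_of_universal_isometric (r r' : ℕ → ℕ → ℝ)
    (hr : IsInfDistMatrix r) (hp : IsProper r) (hu : IsUniversal r)
    (hr' : IsInfDistMatrix r') (hp' : IsProper r') (hu' : IsUniversal r') :
    Nonempty (CompletionOf r hr hp ≃ᵢ CompletionOf r' hr' hp') := by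
  let U := CompletionOf r hr hp
  let V := CompletionOf r' hr' hp'
  let cu : ℕ → U := fun k => ((natToCarrier r hr hp k : Carrier r hr hp) : U)
  let cv : ℕ → V := fun k => ((natToCarrier r' hr' hp' k : Carrier r' hr' hp') : V)
  -- the extension step in the back-and-forth
  have ex : ∀ (n : ℕ) (s : Fin n → U × V),
      (∀ i j, dist (s i).1 (s j).1 = dist (s i).2 (s j).2) →
      ∃ pt : U × V, (∀ i, dist pt.1 (s i).1 = dist pt.2 (s i).2) ∧
        (Even n → pt.1 = cu (n/2)) ∧ (¬ Even n → pt.2 = cv (n/2)) := by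
    intro n s hs
    by_cases hn : Even n
    · obtain ⟨y, hy⟩ := side_step r' hr' hp' hu' n
        (fun i => (s i).1) (fun i => (s i).2) hs (cu (n/2))
      exact ⟨(cu (n/2), y), fun i => (hy i).symm, fun _ => rfl, fun h => absurd hn h⟩
    · obtain ⟨x, hx⟩ := side_step r hr hp hu n
        (fun i => (s i).2) (fun i => (s i).1) (fun i j => (hs i j).symm) (cv (n/2))
      exact ⟨(x, cv (n/2)), fun i => hx i, fun h => absurd h hn, fun _ => rfl⟩
  -- adding a matched point preserves the invariant
  have snocP : ∀ (n : ℕ) (s : Fin n → U × V),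
      (∀ i j, dist (s i).1 (s j).1 = dist (s i).2 (s j).2) →
      ∀ pt : U × V, (∀ i, dist pt.1 (s i).1 = dist pt.2 (s i).2) →
      ∀ i j : Fin (n+1),
        dist ((Fin.snoc s pt : Fin (n+1) → U × V) i).1
            ((Fin.snoc s pt : Fin (n+1) → U × V) j).1
          = dist ((Fin.snoc s pt : Fin (n+1) → U × V) i).2
            ((Fin.snoc s pt : Fin (n+1) → U × V) j).2 := by
    intro n s hs pt hpt i j
    refine Fin.lastCases ?_ ?_ i
    · refine Fin.lastCases ?_ ?_ j
      · simp only [Fin.snoc_last]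
        exact (dist_self pt.1).trans (dist_self pt.2).symm
      · intro j'
        simp only [Fin.snoc_last, Fin.snoc_castSucc]
        exact hpt j'
    · intro i'
      refine Fin.lastCases ?_ ?_ j
      · simp only [Fin.snoc_last, Fin.snoc_castSucc]
        rw [dist_comm ((s i').1) pt.1, dist_comm ((s i').2) pt.2]
        exact hpt i'
      · intro j'
        simp only [Fin.snoc_castSucc]
        exact hs i' j'
  -- the back-and-forth sequence
  let T : ℕ → Type _ := fun n => {s : Fin n → U × V //
    ∀ i j, dist (s i).1 (s j).1 = dist (s i).2 (s j).2}
  have base : T 0 := ⟨Fin.elim0, fun i _ => i.elim0⟩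
  let nxt : ∀ n, T n → T (n+1) := fun n s =>
    ⟨Fin.snoc s.1 (ex n s.1 s.2).choose,
      snocP n s.1 s.2 _ ((ex n s.1 s.2).choose_spec.1)⟩
  let sq : ∀ n, T n := fun n => Nat.rec base nxt n
  let w : ℕ → U × V := fun k => (sq (k+1)).1 (Fin.last k)
  have hmono : ∀ (N k : ℕ) (hk : k < N), (sq N).1 ⟨k, hk⟩ = w k := by
    intro N
    induction N with
    | zero => intro k hk; omega
    | succ N ih =>
      intro k hk
      rcases Nat.lt_succ_iff_lt_or_eq.mp hk with h | h
      · have e1 : (sq (N+1)).1 ⟨k, hk⟩ = (sq N).1 ⟨k, h⟩ := by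
          have hcast : (⟨k, hk⟩ : Fin (N+1)) = Fin.castSucc ⟨k, h⟩ := rfl
          rw [show (sq (N+1)).1 = (Fin.snoc (sq N).1 (ex N (sq N).1 (sq N).2).choose
            : Fin (N+1) → U × V) from rfl, hcast, Fin.snoc_castSucc]
        rw [e1]
        exact ih k h
      · subst h
        rfl
  have key : ∀ a b : ℕ, dist (w a).1 (w b).1 = dist (w a).2 (w b).2 := by
    intro a b
    have ha : a < max a b + 1 := by omega
    have hb : b < max a b + 1 := by omega
    have := (sq (max a b + 1)).2 ⟨a, ha⟩ ⟨b, hb⟩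
    rw [hmono _ a ha, hmono _ b hb] at this
    exact this
  have hpar : ∀ n : ℕ, (Even n → (w n).1 = cu (n/2)) ∧ (¬Even n → (w n).2 = cv (n/2)) := by
    intro n
    have h1 : w n = (ex n (sq n).1 (sq n).2).choose := by
      rw [show w n = (Fin.snoc (sq n).1 (ex n (sq n).1 (sq n).2).choose
        : Fin (n+1) → U × V) (Fin.last n) from rfl, Fin.snoc_last]
    have h2 := (ex n (sq n).1 (sq n).2).choose_spec
    rw [h1]
    exact ⟨h2.2.1, h2.2.2⟩
  have ucoe : ∀ k : ℕ, (w (2*k)).1 = cu k := by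
    intro k
    have he : Even (2*k) := ⟨k, two_mul k⟩
    have := (hpar (2*k)).1 he
    have hdiv : 2*k/2 = k := by omega
    rw [hdiv] at this
    exact this
  have vcoe : ∀ k : ℕ, (w (2*k+1)).2 = cv k := by
    intro k
    have he : ¬ Even (2*k+1) := by
      rintro ⟨t, ht⟩
      omega
    have := (hpar (2*k+1)).2 he
    have hdiv : (2*k+1)/2 = k := by omega
    rw [hdiv] at this
    exact this
  -- the isometric embedding on the dense copy of ℕ
  let e : Carrier r hr hp → V := fun k => (w (2 * carrierToNat r hr hp k)).2
  have he_dist : ∀ a b : Carrier r hr hp, dist (e a) (e b) = dist a b := by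
    intro a b
    have h1 := key (2 * carrierToNat r hr hp a) (2 * carrierToNat r hr hp b)
    have h2 := ucoe (carrierToNat r hr hp a)
    have h3 := ucoe (carrierToNat r hr hp b)
    show dist (w (2 * carrierToNat r hr hp a)).2 (w (2 * carrierToNat r hr hp b)).2 = _
    rw [← h1, h2, h3]
    exact UniformSpace.Completion.dist_eq _ _
  have hiso_e : Isometry e := Isometry.of_dist_eq he_dist
  have huc : UniformContinuous e := hiso_e.uniformContinuous
  let E : U → V := UniformSpace.Completion.extension e
  have hEcoe : ∀ k : Carrier r hr hp, E ((k : U)) = e k := fun k =>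
    UniformSpace.Completion.extension_coe huc k
  have hE : Isometry E := by
    apply Isometry.of_dist_eq
    intro x y
    refine UniformSpace.Completion.induction_on₂ x y ?_ ?_
    · apply isClosed_eq
      · exact (UniformSpace.Completion.continuous_extension.comp continuous_fst).dist
          (UniformSpace.Completion.continuous_extension.comp continuous_snd)
      · exact continuous_fst.dist continuous_snd
    · intro a b
      rw [hEcoe, hEcoe, UniformSpace.Completion.dist_eq]
      exact he_dist a b
  have hclosed : IsClosed (Set.range E) := hE.isClosedEmbedding.isClosed_range
  have hsub : Set.range ((↑) : Carrier r' hr' hp' → V) ⊆ closure (Set.range E) := by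
    rintro _ ⟨l, rfl⟩
    rw [Metric.mem_closure_iff]
    intro ε hε
    obtain ⟨k, hk⟩ := Metric.denseRange_iff.mp UniformSpace.Completion.denseRange_coe
      ((w (2 * carrierToNat r' hr' hp' l + 1)).1) ε hε
    refine ⟨E ((k : U)), ⟨(k : U), rfl⟩, ?_⟩
    rw [hEcoe]
    have h1 : ((l : V)) = (w (2 * carrierToNat r' hr' hp' l + 1)).2 :=
      (vcoe (carrierToNat r' hr' hp' l)).symm
    have h2 : e k = (w (2 * carrierToNat r hr hp k)).2 := rfl
    rw [h1, h2, dist_comm (w (2 * carrierToNat r' hr' hp' l + 1)).2, ← key]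
    have h3 : (w (2 * carrierToNat r hr hp k)).1 = ((k : U)) :=
      ucoe (carrierToNat r hr hp k)
    rw [h3]
    rw [dist_comm]
    exact hk
  have hdense : Dense (Set.range E) := by
    have h1 : DenseRange ((↑) : Carrier r' hr' hp' → V) :=
      UniformSpace.Completion.denseRange_coe
    have h2 := closure_mono hsub
    rw [closure_closure] at h2
    exact fun x => h2 (h1 x)
  have hrange : Set.range E = Set.univ := by
    have := hdense.closure_eq
    rw [hclosed.closure_eq] at this
    exact this
  have hsurj : Function.Surjective E := fun y => by
    have : y ∈ Set.range E := hrange ▸ Set.mem_univ y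
    exact this
  exact ⟨{ toEquiv := Equiv.ofBijective E ⟨hE.injective, hsurj⟩, isometry_toFun := hE }⟩
end
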